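/- arXiv:2509.00895 — 11 statements merged into one kernel-verified Lean document; each statement's English description precedes it below -/
import Mathlib

section
/- Let n ≥ 1, B = [0,1]ⁿ ⊂ ℝⁿ, let f: ℝⁿ → ℝ be continuously differentiable, and let g: ℝ → ℝ be differentiable at every point x ∈ (0,1) with |g'(x)| ≥ c for a fixed constant c > 0. Set μ̄ := sup_{x ∈ B} ‖∇f(x)‖_∞ / c and let μ > μ̄. If x̃ ∈ B is a local minimizer of F(·;μ) relative to B, then x̃ ∈ {0,1}ⁿ. -/
open Set Filter
open scoped RealInnerProductSpace

theorem stmt4 (n : ℕ) (hn : 1 ≤ n)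
    (f : EuclideanSpace ℝ (Fin n) → ℝ) (hf : ContDiff ℝ 1 f)
    (g : ℝ → ℝ) (c : ℝ) (hc : 0 < c)
    (hg : ∀ t ∈ Ioo (0:ℝ) 1, ∃ d : ℝ, HasDerivAt g d t ∧ c ≤ |d|)
    (μ : ℝ)
    (hμ : sSup ((fun u => (⨆ i, |gradient f u i|) / c) ''
        {v : EuclideanSpace ℝ (Fin n) | ∀ i, v i ∈ Icc (0:ℝ) 1}) < μ)
    (xt : EuclideanSpace ℝ (Fin n)) (hxt : ∀ i, xt i ∈ Icc (0:ℝ) 1)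
    (hmin : IsLocalMinOn (fun v => f v + μ * ∑ i, g (v i))
        {v : EuclideanSpace ℝ (Fin n) | ∀ i, v i ∈ Icc (0:ℝ) 1} xt) :
    ∀ i, xt i = 0 ∨ xt i = 1 := by
  have : Nonempty (Fin n) := ⟨⟨0, hn⟩⟩
  set B : Set (EuclideanSpace ℝ (Fin n)) :=
    {v : EuclideanSpace ℝ (Fin n) | ∀ i, v i ∈ Icc (0:ℝ) 1} with hB
  -- compactness of B
  have hBcompact : IsCompact B := by
    have hK : IsCompact (Set.pi (univ : Set (Fin n)) (fun _ => Icc (0:ℝ) 1)) :=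
      isCompact_univ_pi (fun _ => isCompact_Icc)
    have he : B = (PiLp.continuousLinearEquiv 2 ℝ (fun _ : Fin n => ℝ)).toHomeomorph ⁻¹'
        (Set.pi (univ : Set (Fin n)) (fun _ => Icc (0:ℝ) 1)) := by
      ext v
      exact ⟨fun h j _ => h j, fun h j => h j (Set.mem_univ j)⟩
    rw [he]
    exact (PiLp.continuousLinearEquiv 2 ℝ (fun _ : Fin n => ℝ)).toHomeomorph.isCompact_preimage.mpr hK
  have hxtB : xt ∈ B := hxt
  -- continuity of the norm of the gradient
  have hgradcont : Continuous (fun u => ‖gradient f u‖) := by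
    have h1 : Continuous (fderiv ℝ f) := hf.continuous_fderiv one_ne_zero
    have h2 : Continuous (fun u => gradient f u) :=
      ((InnerProductSpace.toDual ℝ (EuclideanSpace ℝ (Fin n))).symm.continuous).comp h1
    exact h2.norm
  -- bound on gradient on B
  obtain ⟨x0, hx0B, hx0⟩ := hBcompact.exists_isMaxOn ⟨xt, hxtB⟩ hgradcont.continuousOn
  have hx0 : ∀ u ∈ B, ‖gradient f u‖ ≤ ‖gradient f x0‖ := hx0
  -- coordinate bound
  have habs : ∀ (u : EuclideanSpace ℝ (Fin n)) (j : Fin n), |u j| ≤ ‖u‖ := by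
    intro u j
    have := abs_real_inner_le_norm u (EuclideanSpace.single j (1:ℝ))
    rw [EuclideanSpace.inner_single_right] at this
    simpa using this
  have hbdd : BddAbove ((fun u => (⨆ i, |gradient f u i|) / c) '' B) := by
    refine ⟨‖gradient f x0‖ / c, ?_⟩
    rintro y ⟨u, huB, rfl⟩
    exact (div_le_div_iff_of_pos_right hc).mpr
      ((ciSup_le fun j => (habs (gradient f u) j)).trans (hx0 u huB))
  intro i
  by_contra hcon
  push_neg at hcon
  obtain ⟨h0, h1⟩ := hcon
  have hIoo : xt i ∈ Ioo (0:ℝ) 1 :=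
    ⟨lt_of_le_of_ne (hxt i).1 (Ne.symm h0), lt_of_le_of_ne (hxt i).2 h1⟩
  obtain ⟨d, hgd, hcd⟩ := hg (xt i) hIoo
  set t0 : ℝ := xt i with ht0
  set E : EuclideanSpace ℝ (Fin n) := EuclideanSpace.single i (1:ℝ) with hE
  set γ : ℝ → EuclideanSpace ℝ (Fin n) := fun t => xt + (t - t0) • E with hγ
  have hγ0 : γ t0 = xt := by simp [hγ]
  have hγi : ∀ t, γ t i = t := by
    intro t
    simp [hγ, hE, PiLp.add_apply, PiLp.smul_apply, EuclideanSpace.single_apply, ht0]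
  have hγj : ∀ (j : Fin n), j ≠ i → ∀ t, γ t j = xt j := by
    intro j hj t
    simp [hγ, hE, PiLp.add_apply, PiLp.smul_apply, EuclideanSpace.single_apply, hj]
  -- derivative of γ
  have hγd : HasDerivAt γ E t0 := by
    have h1 : HasDerivAt (fun t : ℝ => t - t0) 1 t0 := (hasDerivAt_id t0).sub_const t0
    have h2 := (h1.smul_const E).const_add xt
    simpa [hγ] using h2
  -- derivative of f ∘ γ
  have hdiff : DifferentiableAt ℝ f xt := (hf.differentiable one_ne_zero).differentiableAt
  have hgradAt : HasGradientAt f (gradient f xt) xt := hdiff.hasGradientAt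
  have hfd : HasDerivAt (fun t => f (γ t)) (gradient f xt i) t0 := by
    have hFD : HasFDerivAt f ((InnerProductSpace.toDual ℝ (EuclideanSpace ℝ (Fin n)))
        (gradient f xt)) (γ t0) := by rw [hγ0]; exact hgradAt.hasFDerivAt
    have := hFD.comp_hasDerivAt t0 hγd
    have heq : (InnerProductSpace.toDual ℝ (EuclideanSpace ℝ (Fin n))) (gradient f xt) E
        = gradient f xt i := by
      rw [InnerProductSpace.toDual_apply_apply, hE, EuclideanSpace.inner_single_right]
      simp
    rw [heq] at this
    exact this
  -- derivative of the g-sum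
  have hgsum : HasDerivAt (fun t => ∑ j, g (γ t j)) d t0 := by
    have hterm : ∀ j ∈ Finset.univ, HasDerivAt (fun t => g (γ t j))
        (if j = i then d else 0) t0 := by
      intro j _
      by_cases hj : j = i
      · subst hj
        have : (fun t => g (γ t j)) = g := funext fun t => by rw [hγi t]
        rw [this, if_pos rfl]
        exact hgd
      · have : (fun t => g (γ t j)) = fun _ => g (xt j) :=
          funext fun t => by rw [hγj j hj t]
        rw [this, if_neg hj]
        exact hasDerivAt_const _ _
    have := HasDerivAt.fun_sum hterm
    simpa using this
  have hD : HasDerivAt (fun t => f (γ t) + μ * ∑ j, g (γ t j))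
      (gradient f xt i + μ * d) t0 := hfd.add (hgsum.const_mul μ)
  -- local min of the 1-D function
  have hevB : ∀ᶠ t in nhds t0, γ t ∈ B := by
    have hIooOpen : ∀ᶠ t in nhds t0, t ∈ Ioo (0:ℝ) 1 :=
      isOpen_Ioo.eventually_mem hIoo
    filter_upwards [hIooOpen] with t ht j
    by_cases hj : j = i
    · subst hj; rw [hγi t]; exact ⟨ht.1.le, ht.2.le⟩
    · rw [hγj j hj t]; exact hxt j
  have hγcont : Continuous γ := by
    apply continuous_const.add
    exact (continuous_id.sub continuous_const).smul continuous_const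
  have htend : Tendsto γ (nhds t0) (nhdsWithin xt B) := by
    rw [tendsto_nhdsWithin_iff]
    exact ⟨hγ0 ▸ hγcont.tendsto t0, hevB⟩
  have hev : ∀ᶠ v in nhdsWithin xt B,
      (fun v => f v + μ * ∑ j, g (v j)) xt ≤ (fun v => f v + μ * ∑ j, g (v j)) v := hmin
  have hlocmin : IsLocalMin (fun t => f (γ t) + μ * ∑ j, g (γ t j)) t0 := by
    have := htend.eventually hev
    filter_upwards [this] with t ht
    simpa [hγ0] using ht
  have hzero : gradient f xt i + μ * d = 0 := hlocmin.hasDerivAt_eq_zero hD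
  -- μ > 0
  have hy0 : (⨆ j, |gradient f xt j|) / c ≤
      sSup ((fun u => (⨆ i, |gradient f u i|) / c) '' B) :=
    le_csSup hbdd ⟨xt, hxtB, rfl⟩
  have hy0nonneg : (0:ℝ) ≤ (⨆ j, |gradient f xt j|) / c :=
    div_nonneg (Real.iSup_nonneg fun j => abs_nonneg _) hc.le
  have hμpos : 0 < μ := lt_of_le_of_lt hy0nonneg (lt_of_le_of_lt hy0 hμ)
  -- derive the contradiction
  have hgi : |gradient f xt i| = μ * |d| := by
    have : gradient f xt i = -(μ * d) := by linarith
    rw [this, abs_neg, abs_mul, abs_of_pos hμpos]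
  have hge : μ * c ≤ |gradient f xt i| := by
    rw [hgi]
    exact mul_le_mul_of_nonneg_left hcd hμpos.le
  have hle : |gradient f xt i| ≤ ⨆ j, |gradient f xt j| :=
    le_ciSup (f := fun j => |gradient f xt j|) (Set.Finite.bddAbove (Set.finite_range _)) i
  have hlt : |gradient f xt i| < μ * c := by
    have h1 : |gradient f xt i| / c ≤ (⨆ j, |gradient f xt j|) / c :=
      (div_le_div_iff_of_pos_right hc).mpr hle
    have h2 : |gradient f xt i| / c < μ := lt_of_le_of_lt (h1.trans hy0) hμ
    calc |gradient f xt i| = |gradient f xt i| / c * c := by field_simp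
    _ < μ * c := by exact mul_lt_mul_of_pos_right h2 hc
  linarith
end

section
/- (Exact penalty theorem.) Let n ≥ 1, B = [0,1]ⁿ ⊂ ℝⁿ, let f: ℝⁿ → ℝ be continuously differentiable, and let g: ℝ → ℝ be lower semicontinuous on [0,1] with g(x) ≥ 0 for all x ∈ [0,1], g(x) = 0 if and only if x ∈ {0,1}, and g differentiable at every x ∈ (0,1) with |g'(x)| ≥ c for a fixed c > 0. Set μ̄ := sup_{x ∈ B} ‖∇f(x)‖_∞ / c and let μ > μ̄. Then a point x* ∈ ℝⁿ is a global minimizer of f over {0,1}ⁿ if and only if x* is a global minimizer of F(·;μ) over B. -/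
open Set Filter Topology
open scoped RealInnerProductSpace

noncomputable def upd {n : ℕ} (z : EuclideanSpace ℝ (Fin n)) (i : Fin n) (t : ℝ) :
    EuclideanSpace ℝ (Fin n) := WithLp.toLp 2 (Function.update z i t)

lemma upd_apply {n : ℕ} (z : EuclideanSpace ℝ (Fin n)) (i j : Fin n) (t : ℝ) :
    upd z i t j = if j = i then t else z j := Function.update_apply z i t j

lemma upd_self {n : ℕ} (z : EuclideanSpace ℝ (Fin n)) (i : Fin n) :
    upd z i (z i) = z := congrArg (WithLp.toLp 2) (Function.update_eq_self i z)

lemma aux_path_deriv (n : ℕ) (z : EuclideanSpace ℝ (Fin n)) (i : Fin n) (t0 : ℝ) :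
    HasDerivAt (fun t : ℝ => upd z i t) (EuclideanSpace.single i (1:ℝ)) t0 := by
  have hrw : (fun t : ℝ => upd z i t)
      = fun t : ℝ => upd z i 0 + t • EuclideanSpace.single i (1:ℝ) := by
    funext t
    ext j
    by_cases h : j = i
    · subst h
      simp [upd_apply, PiLp.add_apply, PiLp.smul_apply, EuclideanSpace.single_apply]
    · simp [upd_apply, h, PiLp.add_apply, PiLp.smul_apply, EuclideanSpace.single_apply]
  rw [hrw]
  have h1 : HasDerivAt (fun t : ℝ => t • EuclideanSpace.single i (1:ℝ))
      ((1:ℝ) • EuclideanSpace.single i (1:ℝ)) t0 :=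
    (hasDerivAt_id t0).smul_const _
  simpa using h1.const_add (upd z i 0)

lemma aux_sum_update (n : ℕ) (g : ℝ → ℝ) (z : EuclideanSpace ℝ (Fin n)) (i : Fin n) (t : ℝ) :
    ∑ j, g (upd z i t j) = g t + ∑ j ∈ Finset.univ \ {i}, g (z j) := by
  have : (fun j => g (upd z i t j))
      = Function.update (fun j => g (z j)) i (g t) := by
    funext j
    by_cases h : j = i
    · subst h; simp [upd_apply]
    · simp [upd_apply, h, Function.update_apply]
  rw [this]
  exact Finset.sum_update_of_mem (Finset.mem_univ i) _ _

lemma aux_f_deriv (n : ℕ) (f : EuclideanSpace ℝ (Fin n) → ℝ) (hf : ContDiff ℝ 1 f)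
    (z : EuclideanSpace ℝ (Fin n)) (i : Fin n) (t0 : ℝ) :
    HasDerivAt (fun t : ℝ => f (upd z i t)) (gradient f (upd z i t0) i) t0 := by
  have hdiff : DifferentiableAt ℝ f (upd z i t0) := hf.differentiable one_ne_zero _
  have hgrad := hdiff.hasGradientAt
  have hfd : HasFDerivAt f
      (InnerProductSpace.toDual ℝ _ (gradient f (upd z i t0))) (upd z i t0) :=
    hasGradientAt_iff_hasFDerivAt.mp hgrad
  have hcomp := hfd.comp_hasDerivAt t0 (aux_path_deriv n z i t0)
  have hval : (InnerProductSpace.toDual ℝ _ (gradient f (upd z i t0)))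
      (EuclideanSpace.single i (1:ℝ)) = gradient f (upd z i t0) i := by
    rw [InnerProductSpace.toDual_apply_apply]
    simpa using EuclideanSpace.inner_single_right (𝕜 := ℝ) i 1 (gradient f (upd z i t0))
  rwa [hval] at hcomp

lemma aux_upd_mem (n : ℕ) (z : EuclideanSpace ℝ (Fin n)) (hz : ∀ j, z j ∈ Icc (0:ℝ) 1)
    (i : Fin n) (t : ℝ) (ht : t ∈ Icc (0:ℝ) 1) : ∀ j, upd z i t j ∈ Icc (0:ℝ) 1 := by
  intro j
  rw [upd_apply]
  split
  · exact ht
  · exact hz j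

lemma aux_onedim (n : ℕ) (f : EuclideanSpace ℝ (Fin n) → ℝ) (hf : ContDiff ℝ 1 f)
    (g : ℝ → ℝ) (hg_nn : ∀ t ∈ Icc (0:ℝ) 1, 0 ≤ g t) (hg0 : g 0 = 0) (hg1 : g 1 = 0)
    (c : ℝ) (hc : 0 < c)
    (hg_deriv : ∀ t ∈ Ioo (0:ℝ) 1, ∃ d : ℝ, HasDerivAt g d t ∧ c ≤ |d|)
    (μ : ℝ) (hμ0 : 0 < μ)
    (hgb : ∀ x : EuclideanSpace ℝ (Fin n), (∀ j, x j ∈ Icc (0:ℝ) 1) →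
      ∀ i, |gradient f x i| < μ * c)
    (z : EuclideanSpace ℝ (Fin n)) (hz : ∀ j, z j ∈ Icc (0:ℝ) 1)
    (i : Fin n) (hzi : z i ∈ Ioo (0:ℝ) 1) :
    ∃ t : ℝ, (t = 0 ∨ t = 1) ∧
      f (upd z i t) + μ * ∑ j, g (upd z i t j) ≤ f z + μ * ∑ j, g (z j) := by
  classical
  set S : ℝ := ∑ j ∈ Finset.univ \ {i}, g (z j) with hS
  set h : ℝ → ℝ := fun t => f (upd z i t) + μ * (g t + S) with hh
  choose gd hgd1 hgd2 using hg_deriv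
  set D : ℝ → ℝ := fun t => if ht : t ∈ Ioo (0:ℝ) 1 then
      gradient f (upd z i t) i + μ * gd t ht else 0 with hDdef
  have hD : ∀ t ∈ Ioo (0:ℝ) 1, HasDerivAt h (D t) t ∧ D t ≠ 0 := by
    intro t ht
    have hDt : D t = gradient f (upd z i t) i + μ * gd t ht := by
      simp only [hDdef, dif_pos ht]
    constructor
    · rw [hDt]
      exact (aux_f_deriv n f hf z i t).add (((hgd1 t ht).add_const S).const_mul μ)
    · rw [hDt]
      intro h0
      have hb : |gradient f (upd z i t) i| < μ * c :=
        hgb _ (aux_upd_mem n z hz i t (Ioo_subset_Icc_self ht)) i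
      have habs : |μ * gd t ht| = μ * |gd t ht| := by
        rw [abs_mul, abs_of_pos hμ0]
      have h2 : c ≤ |gd t ht| := hgd2 t ht
      have h3 : μ * gd t ht = -(gradient f (upd z i t) i) := by linarith
      have h4 : |μ * gd t ht| = |gradient f (upd z i t) i| := by rw [h3, abs_neg]
      nlinarith
  have hcont : ∀ t ∈ Ioo (0:ℝ) 1, ContinuousWithinAt h (Ioo (0:ℝ) 1) t :=
    fun t ht => ((hD t ht).1).continuousAt.continuousWithinAt
  have hziIcc : z i ∈ Icc (0:ℝ) 1 := Ioo_subset_Icc_self hzi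
  -- continuity of the auxiliary function φ
  set φ : ℝ → ℝ := fun t => f (upd z i t) + μ * S with hφ
  have hφcont : Continuous φ := by
    have hpath : Continuous fun t : ℝ => upd z i t := by
      apply continuous_iff_continuousAt.mpr
      exact fun t => (aux_path_deriv n z i t).continuousAt
    exact ((hf.continuous).comp hpath).add continuous_const
  have hφle : ∀ t ∈ Ioo (0:ℝ) 1, φ t ≤ h t := by
    intro t ht
    have : 0 ≤ μ * g t := mul_nonneg hμ0.le (hg_nn t (Ioo_subset_Icc_self ht))
    show f (upd z i t) + μ * S ≤ f (upd z i t) + μ * (g t + S)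
    nlinarith
  have hgoal : ∀ t : ℝ, f (upd z i t) + μ * ∑ j, g (upd z i t j) = f (upd z i t) + μ * (g t + S) := by
    intro t
    rw [aux_sum_update]
  have hRHS : f z + μ * ∑ j, g (z j) = h (z i) := by
    have h2 := hgoal (z i)
    rw [upd_self] at h2
    rw [h2]
    show f z + μ * (g (z i) + S) = f (upd z i (z i)) + μ * (g (z i) + S)
    rw [upd_self]
  rcases hasDerivWithinAt_forall_lt_or_forall_gt_of_forall_ne (convex_Ioo (0:ℝ) 1)
      (fun t ht => ((hD t ht).1).hasDerivWithinAt) (fun t ht => (hD t ht).2)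
    with hneg | hpos
  · -- derivative negative: h strictly decreasing, go to t = 1
    refine ⟨1, Or.inr rfl, ?_⟩
    have hanti : StrictAntiOn h (Ioo (0:ℝ) 1) := by
      apply strictAntiOn_of_deriv_neg (convex_Ioo (0:ℝ) 1)
        (fun t ht => hcont t ht)
      intro t ht
      rw [interior_Ioo] at ht
      rw [(hD t ht).1.deriv]
      exact hneg t ht
    have hmem : Ioo (z i) 1 ∈ 𝓝[<] (1:ℝ) :=
      Ioo_mem_nhdsLT_of_mem ⟨hzi.2, le_refl 1⟩
    have hev : ∀ᶠ t in 𝓝[<] (1:ℝ), φ t ≤ h (z i) := by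
      filter_upwards [hmem] with t ht
      have htIoo : t ∈ Ioo (0:ℝ) 1 := ⟨hzi.1.trans ht.1, ht.2⟩
      exact (hφle t htIoo).trans (hanti hzi htIoo ht.1).le
    have htend : Tendsto φ (𝓝[<] (1:ℝ)) (𝓝 (φ 1)) :=
      (hφcont.continuousAt (x := (1:ℝ))).continuousWithinAt
    have h1le : φ 1 ≤ h (z i) := le_of_tendsto htend hev
    rw [hgoal 1, hRHS]
    show f (upd z i 1) + μ * (g 1 + S) ≤ h (z i)
    rw [hg1]
    simpa [hφ] using h1le
  · -- derivative positive: h strictly increasing, go to t = 0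
    refine ⟨0, Or.inl rfl, ?_⟩
    have hmono : StrictMonoOn h (Ioo (0:ℝ) 1) := by
      apply strictMonoOn_of_deriv_pos (convex_Ioo (0:ℝ) 1)
        (fun t ht => hcont t ht)
      intro t ht
      rw [interior_Ioo] at ht
      rw [(hD t ht).1.deriv]
      exact hpos t ht
    have hmem : Ioo (0:ℝ) (z i) ∈ 𝓝[>] (0:ℝ) :=
      Ioo_mem_nhdsGT_of_mem ⟨le_refl 0, hzi.1⟩
    have hev : ∀ᶠ t in 𝓝[>] (0:ℝ), φ t ≤ h (z i) := by
      filter_upwards [hmem] with t ht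
      have htIoo : t ∈ Ioo (0:ℝ) 1 := ⟨ht.1, ht.2.trans hzi.2⟩
      exact (hφle t htIoo).trans (hmono htIoo hzi ht.2).le
    have htend : Tendsto φ (𝓝[>] (0:ℝ)) (𝓝 (φ 0)) :=
      (hφcont.continuousAt (x := (0:ℝ))).continuousWithinAt
    have h0le : φ 0 ≤ h (z i) := le_of_tendsto htend hev
    rw [hgoal 0, hRHS]
    show f (upd z i 0) + μ * (g 0 + S) ≤ h (z i)
    rw [hg0]
    simpa [hφ] using h0le

lemma aux_coord_le_norm (n : ℕ) (x : EuclideanSpace ℝ (Fin n)) (i : Fin n) : |x i| ≤ ‖x‖ := by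
  have h1 : ⟪x, EuclideanSpace.single i (1:ℝ)⟫ = x i := by
    simpa using EuclideanSpace.inner_single_right (𝕜 := ℝ) i 1 x
  have h2 := abs_real_inner_le_norm x (EuclideanSpace.single i (1:ℝ))
  rw [h1] at h2
  simpa using h2

lemma aux_norm_gradient (n : ℕ) (f : EuclideanSpace ℝ (Fin n) → ℝ)
    (x : EuclideanSpace ℝ (Fin n)) : ‖gradient f x‖ = ‖fderiv ℝ f x‖ := by
  rw [gradient]
  exact LinearIsometryEquiv.norm_map _ _

lemma aux_compact (n : ℕ) :
    IsCompact {v : EuclideanSpace ℝ (Fin n) | ∀ i, v i ∈ Icc (0:ℝ) 1} := by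
  have hS : IsCompact (Set.univ.pi fun _ : Fin n => Icc (0:ℝ) 1) :=
    isCompact_univ_pi fun _ => isCompact_Icc
  have heq : {v : EuclideanSpace ℝ (Fin n) | ∀ i, v i ∈ Icc (0:ℝ) 1}
      = (EuclideanSpace.equiv (Fin n) ℝ).toHomeomorph ⁻¹'
        (Set.univ.pi fun _ : Fin n => Icc (0:ℝ) 1) := by
    ext v
    simp only [Set.mem_setOf_eq, Set.mem_preimage, Set.mem_univ_pi,
      ContinuousLinearEquiv.coe_toHomeomorph]
    exact Iff.rfl
  rw [heq]
  exact (Homeomorph.isCompact_preimage _).2 hS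

theorem stmt6 (n : ℕ) (hn : 1 ≤ n)
    (f : EuclideanSpace ℝ (Fin n) → ℝ) (hf : ContDiff ℝ 1 f)
    (g : ℝ → ℝ)
    (hg_lsc : LowerSemicontinuousOn g (Icc (0:ℝ) 1))
    (hg_nn : ∀ t ∈ Icc (0:ℝ) 1, 0 ≤ g t)
    (hg_zero : ∀ t ∈ Icc (0:ℝ) 1, (g t = 0 ↔ t = 0 ∨ t = 1))
    (c : ℝ) (hc : 0 < c)
    (hg_deriv : ∀ t ∈ Ioo (0:ℝ) 1, ∃ d : ℝ, HasDerivAt g d t ∧ c ≤ |d|)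
    (B : Set (EuclideanSpace ℝ (Fin n)))
    (hB : B = {v : EuclideanSpace ℝ (Fin n) | ∀ i, v i ∈ Icc (0:ℝ) 1})
    (μ : ℝ)
    (hμ : sSup ((fun u => (⨆ i, |gradient f u i|) / c) '' B) < μ)
    (F : EuclideanSpace ℝ (Fin n) → ℝ)
    (hF : F = fun v => f v + μ * ∑ i, g (v i))
    (xs : EuclideanSpace ℝ (Fin n)) :
    ((∀ i, xs i = 0 ∨ xs i = 1) ∧
        ∀ z : EuclideanSpace ℝ (Fin n), (∀ i, z i = 0 ∨ z i = 1) → f xs ≤ f z) ↔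
      (xs ∈ B ∧ ∀ z ∈ B, F xs ≤ F z) := by
  classical
  haveI : Nonempty (Fin n) := Fin.pos_iff_nonempty.mp (by omega)
  have hBc : IsCompact B := by rw [hB]; exact aux_compact n
  -- bddAbove of the sup/c image
  have hbdd : BddAbove ((fun u => (⨆ i, |gradient f u i|) / c) '' B) := by
    obtain ⟨M, hM⟩ := hBc.bddAbove_image
      ((hf.continuous_fderiv one_ne_zero).norm.continuousOn
        (s := B) : ContinuousOn (fun x => ‖fderiv ℝ f x‖) B)
    refine ⟨M / c, ?_⟩
    rintro y ⟨x, hx, rfl⟩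
    have h1 : (⨆ i, |gradient f x i|) ≤ ‖fderiv ℝ f x‖ := by
      refine ciSup_le fun i => ?_
      rw [← aux_norm_gradient]
      exact aux_coord_le_norm n (gradient f x) i
    have h2 : ‖fderiv ℝ f x‖ ≤ M := hM (Set.mem_image_of_mem _ hx)
    exact div_le_div_of_nonneg_right (h1.trans h2) hc.le
  -- pointwise gradient bound
  have hkey : ∀ x : EuclideanSpace ℝ (Fin n), (∀ j, x j ∈ Icc (0:ℝ) 1) →
      ∀ i, |gradient f x i| < μ * c := by
    intro x hx i
    have hxB : x ∈ B := by rw [hB]; exact hx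
    have h1 : |gradient f x i| ≤ ⨆ j, |gradient f x j| :=
      le_ciSup (f := fun j => |gradient f x j|)
        (Set.Finite.bddAbove (Set.finite_range fun j => |gradient f x j|)) i
    have h2 : (⨆ j, |gradient f x j|) / c ≤
        sSup ((fun u => (⨆ i, |gradient f u i|) / c) '' B) :=
      le_csSup hbdd (Set.mem_image_of_mem _ hxB)
    have h3 : (⨆ j, |gradient f x j|) / c < μ := lt_of_le_of_lt h2 hμ
    have h4 : (⨆ j, |gradient f x j|) < μ * c := (div_lt_iff₀ hc).mp h3
    exact lt_of_le_of_lt h1 h4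
  have hμ0 : 0 < μ := by
    have h0B : ∀ j, (0 : EuclideanSpace ℝ (Fin n)) j ∈ Icc (0:ℝ) 1 := by
      intro j; simp
    have := hkey 0 h0B ⟨0, by omega⟩
    have habs : (0:ℝ) ≤ |gradient f 0 ⟨0, by omega⟩| := abs_nonneg _
    nlinarith
  have hg0 : g 0 = 0 := (hg_zero 0 ⟨le_refl 0, zero_le_one⟩).mpr (Or.inl rfl)
  have hg1 : g 1 = 0 := (hg_zero 1 ⟨zero_le_one, le_refl 1⟩).mpr (Or.inr rfl)
  have hvsum : ∀ v : EuclideanSpace ℝ (Fin n), (∀ j, v j = 0 ∨ v j = 1) →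
      ∑ j, g (v j) = 0 := by
    intro v hv
    apply Finset.sum_eq_zero
    intro j _
    rcases hv j with h | h <;> rw [h] <;> [exact hg0; exact hg1]
  have hvmem : ∀ v : EuclideanSpace ℝ (Fin n), (∀ j, v j = 0 ∨ v j = 1) →
      ∀ j, v j ∈ Icc (0:ℝ) 1 := by
    intro v hv j
    rcases hv j with h | h <;> rw [h] <;> constructor <;> norm_num
  -- reduction to vertices
  have reduce : ∀ k : ℕ, ∀ z : EuclideanSpace ℝ (Fin n), (∀ j, z j ∈ Icc (0:ℝ) 1) →
      (Finset.univ.filter fun j => ¬(z j = 0 ∨ z j = 1)).card ≤ k →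
      ∃ v : EuclideanSpace ℝ (Fin n), (∀ j, v j = 0 ∨ v j = 1) ∧ F v ≤ F z := by
    intro k
    induction k with
    | zero =>
      intro z hz hcard
      refine ⟨z, ?_, le_refl _⟩
      intro j
      by_contra hj
      have hjmem : j ∈ Finset.univ.filter fun j => ¬(z j = 0 ∨ z j = 1) := by
        simp only [Finset.mem_filter, Finset.mem_univ, true_and]
        exact hj
      have := Finset.card_pos.mpr ⟨j, hjmem⟩
      omega
    | succ k ih =>
      intro z hz hcard
      by_cases hall : ∀ j, z j = 0 ∨ z j = 1
      · exact ⟨z, hall, le_refl _⟩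
      · push_neg at hall
        obtain ⟨i, hi⟩ := hall
        have hIoo : z i ∈ Ioo (0:ℝ) 1 :=
          ⟨(hz i).1.lt_of_ne (Ne.symm hi.1), (hz i).2.lt_of_ne hi.2⟩
        obtain ⟨t, ht01, hle⟩ := aux_onedim n f hf g hg_nn hg0 hg1 c hc hg_deriv μ hμ0
          hkey z hz i hIoo
        have htIcc : t ∈ Icc (0:ℝ) 1 := by
          rcases ht01 with h | h <;> rw [h] <;> constructor <;> norm_num
        have hz' : ∀ j, upd z i t j ∈ Icc (0:ℝ) 1 := aux_upd_mem n z hz i t htIcc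
        have hcard' : (Finset.univ.filter fun j => ¬(upd z i t j = 0 ∨ upd z i t j = 1)).card ≤ k := by
          have hsub : (Finset.univ.filter fun j => ¬(upd z i t j = 0 ∨ upd z i t j = 1))
              ⊆ (Finset.univ.filter fun j => ¬(z j = 0 ∨ z j = 1)).erase i := by
            intro j hj
            simp only [Finset.mem_filter, Finset.mem_univ, true_and] at hj
            have hji : j ≠ i := by
              intro hji
              subst hji
              rw [upd_apply] at hj
              simp at hj
              exact absurd ht01 (by tauto)
            have : upd z i t j = z j := by rw [upd_apply, if_neg hji]
            rw [this] at hj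
            refine Finset.mem_erase.mpr ⟨hji, ?_⟩
            simp only [Finset.mem_filter, Finset.mem_univ, true_and]
            exact hj
          have himem : i ∈ Finset.univ.filter fun j => ¬(z j = 0 ∨ z j = 1) := by
            simp [hi.1, hi.2]
          have h1 := Finset.card_le_card hsub
          have h2 := Finset.card_erase_of_mem himem
          have h3 := Finset.card_pos.mpr ⟨i, himem⟩
          omega
        obtain ⟨v, hv1, hv2⟩ := ih (upd z i t) hz' hcard'
        refine ⟨v, hv1, hv2.trans ?_⟩
        rw [hF]
        exact hle
  constructor
  · rintro ⟨hvert, hmin⟩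
    have hxsB : xs ∈ B := by rw [hB]; exact hvmem xs hvert
    refine ⟨hxsB, ?_⟩
    intro z hzB
    have hz : ∀ j, z j ∈ Icc (0:ℝ) 1 := by rw [hB] at hzB; exact hzB
    obtain ⟨v, hv1, hv2⟩ := reduce _ z hz le_rfl
    have hFxs : F xs = f xs := by rw [hF]; simp [hvsum xs hvert]
    have hFv : F v = f v := by rw [hF]; simp [hvsum v hv1]
    calc F xs = f xs := hFxs
      _ ≤ f v := hmin v hv1
      _ = F v := hFv.symm
      _ ≤ F z := hv2
  · rintro ⟨hxsB, hmin⟩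
    rw [hB] at hxsB
    have hvert : ∀ i, xs i = 0 ∨ xs i = 1 := by
      intro i
      by_contra hi
      push_neg at hi
      have hIoo : xs i ∈ Ioo (0:ℝ) 1 :=
        ⟨(hxsB i).1.lt_of_ne (Ne.symm hi.1), (hxsB i).2.lt_of_ne hi.2⟩
      obtain ⟨d, hd, hcd⟩ := hg_deriv (xs i) hIoo
      set S : ℝ := ∑ j ∈ Finset.univ \ {i}, g (xs j) with hS
      set h : ℝ → ℝ := fun t => f (upd xs i t) + μ * (g t + S) with hh
      have hhF : ∀ t, h t = F (upd xs i t) := by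
        intro t
        rw [hF]
        show f (upd xs i t) + μ * (g t + S) = f (upd xs i t) + μ * ∑ j, g (upd xs i t j)
        rw [aux_sum_update]
      have hlocmin : IsLocalMin h (xs i) := by
        filter_upwards [Ioo_mem_nhds hIoo.1 hIoo.2] with t ht
        have htB : upd xs i t ∈ B := by
          rw [hB]; exact aux_upd_mem n xs hxsB i t (Ioo_subset_Icc_self ht)
        have h1 : h (xs i) = F xs := by rw [hhF, upd_self]
        rw [h1, hhF]
        exact hmin _ htB
      have hderiv : HasDerivAt h (gradient f (upd xs i (xs i)) i + μ * d) (xs i) :=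
        (aux_f_deriv n f hf xs i (xs i)).add ((hd.add_const S).const_mul μ)
      have hzero := hlocmin.hasDerivAt_eq_zero hderiv
      rw [upd_self] at hzero
      have hb : |gradient f xs i| < μ * c := hkey xs hxsB i
      have habs : |μ * d| = μ * |d| := by rw [abs_mul, abs_of_pos hμ0]
      have h3 : μ * d = -(gradient f xs i) := by linarith
      have h4 : |μ * d| = |gradient f xs i| := by rw [h3, abs_neg]
      nlinarith
    refine ⟨hvert, ?_⟩
    intro z hzvert
    have hzB : z ∈ B := by rw [hB]; exact hvmem z hzvert
    have hFxs : F xs = f xs := by rw [hF]; simp [hvsum xs hvert]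
    have hFz : F z = f z := by rw [hF]; simp [hvsum z hzvert]
    calc f xs = F xs := hFxs.symm
      _ ≤ F z := hmin z hzB
      _ = f z := hFz
end

section
/- Let n ≥ 1, B = [0,1]ⁿ ⊂ ℝⁿ, let f: ℝⁿ → ℝ be differentiable, g: ℝ → ℝ, μ > 0, and x̃ ∈ B. Suppose there exists ν ∈ ℝⁿ such that (i) φ(z) ≥ φ(x̃) + ⟨ν, z − x̃⟩ for all z ∈ B, and (ii) ⟨∇f(x̃) + μν, z − x̃⟩ ≥ 0 for all z ∈ B (i.e., x̃ is a KKT point and φ is convex on B at x̃). Then for every τ > 0, x̃ is a P-stationary point with constant τ of the problem min_{x∈B} F(x;μ). -/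
open Set Filter
open scoped RealInnerProductSpace

theorem stmt7 (n : ℕ) (hn : 1 ≤ n)
    (f : EuclideanSpace ℝ (Fin n) → ℝ) (hf : Differentiable ℝ f)
    (g : ℝ → ℝ) (μ : ℝ) (hμ : 0 < μ)
    (B : Set (EuclideanSpace ℝ (Fin n)))
    (hB : B = {v : EuclideanSpace ℝ (Fin n) | ∀ i, v i ∈ Icc (0:ℝ) 1})
    (φ : EuclideanSpace ℝ (Fin n) → ℝ) (hφ : φ = fun v => ∑ i, g (v i))
    (xt : EuclideanSpace ℝ (Fin n)) (hxt : xt ∈ B)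
    (ν : EuclideanSpace ℝ (Fin n))
    (h1 : ∀ z ∈ B, φ xt + ⟪ν, z - xt⟫ ≤ φ z)
    (h2 : ∀ z ∈ B, 0 ≤ ⟪gradient f xt + μ • ν, z - xt⟫) :
    ∀ τ : ℝ, 0 < τ → ∀ z ∈ B,
      (1/2) * ‖xt - (xt - τ • gradient f xt)‖^2 + τ * μ * φ xt ≤
      (1/2) * ‖z - (xt - τ • gradient f xt)‖^2 + τ * μ * φ z := by
  intro τ hτ z hz
  set G := gradient f xt with hG
  have key : 0 ≤ ⟪G + μ • ν, z - xt⟫ := h2 z hz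
  have hφz : φ xt + ⟪ν, z - xt⟫ ≤ φ z := h1 z hz
  have e1 : xt - (xt - τ • G) = τ • G := by abel
  have e2 : z - (xt - τ • G) = (z - xt) + τ • G := by abel
  rw [e1, e2]
  have expand : ‖(z - xt) + τ • G‖^2
      = ‖z - xt‖^2 + 2 * ⟪z - xt, τ • G⟫ + ‖τ • G‖^2 :=
    norm_add_sq_real _ _
  rw [expand]
  have hinner : ⟪z - xt, τ • G⟫ = τ * ⟪G, z - xt⟫ := by
    rw [real_inner_smul_right, real_inner_comm]
  have hsplit : ⟪G + μ • ν, z - xt⟫ = ⟪G, z - xt⟫ + μ * ⟪ν, z - xt⟫ := by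
    rw [inner_add_left, real_inner_smul_left]
  have hφ' : τ * μ * (φ xt + ⟪ν, z - xt⟫) ≤ τ * μ * φ z := by
    apply mul_le_mul_of_nonneg_left hφz (by positivity)
  nlinarith [sq_nonneg ‖z - xt‖, mul_nonneg hτ.le key]
end

section
/- Let n ≥ 1, B = [0,1]ⁿ ⊂ ℝⁿ, let f: ℝⁿ → ℝ be continuously differentiable and L-strongly smooth on B (i.e., f(x) ≤ f(w) + ⟨∇f(w), x − w⟩ + (L/2)‖x − w‖² for all x, w ∈ B, with L > 0), and let g: ℝ → ℝ be lower semicontinuous on [0,1] with g(x) ≥ 0 for all x ∈ [0,1], g(x) = 0 if and only if x ∈ {0,1}, and g differentiable at every x ∈ (0,1) with |g'(x)| ≥ c for a fixed c > 0. Set μ̄ := sup_{x ∈ B} ‖∇f(x)‖_∞ / c and let μ > μ̄. If x̄ ∈ B is a local minimizer of F(·;μ) relative to B, then there exists τ > 0 such that x̄ is a P-stationary point with constant τ of min_{x∈B} F(x;μ). -/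
open Set Filter Topology
open scoped RealInnerProductSpace

lemma coord_ineq (c μ D d τ x0 z gz : ℝ) (hc : 0 < c) (hμ : 0 < μ)
    (hD0 : 0 ≤ D) (hd : |d| ≤ D) (hDμ : D ≤ μ * c) (hτ : τ = 1/(8*(D+1)))
    (hx0 : x0 = 0 ∨ x0 = 1) (hz0 : 0 ≤ z) (hz1 : z ≤ 1) (hgz0 : 0 ≤ gz)
    (hgz : 0 < z → z < 1 → c * min z (1-z) ≤ gz) :
    0 ≤ 1/2*(z - x0)^2 + τ*d*(z - x0) + τ*μ*gz := by
  have hτpos : 0 < τ := by rw [hτ]; positivity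
  have hτd : τ * |d| ≤ 1/8 := by
    rw [hτ]
    rw [div_mul_eq_mul_div, div_le_div_iff₀ (by positivity) (by norm_num)]
    nlinarith
  have hd1 : -|d| ≤ d := neg_abs_le d
  have hd2 : d ≤ |d| := le_abs_self d
  set t := z - x0 with ht
  clear_value t
  rcases le_or_gt |t| (1/2) with hts | hts
  · rcases eq_or_ne t 0 with h0 | h0
    · rw [h0]
      have : 0 ≤ τ*μ*gz := by positivity
      nlinarith
    · rcases hx0 with h | h
      · have htz : t = z := by rw [ht, h, sub_zero]
        have hz0' : 0 < z := lt_of_le_of_ne hz0 (fun he => h0 (by rw [htz, ← he]))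
        have hzh : z ≤ 1/2 := by rwa [htz, abs_of_nonneg hz0] at hts
        have hz1' : z < 1 := by linarith
        have hglb := hgz hz0' hz1'
        rw [min_eq_left (by linarith)] at hglb
        have habs : |d| ≤ μ * c := le_trans hd hDμ
        rw [htz]
        nlinarith [mul_le_mul_of_nonneg_left hglb (mul_nonneg hτpos.le hμ.le),
          mul_le_mul_of_nonneg_right (mul_le_mul_of_nonneg_left hd1 hτpos.le) hz0,
          mul_le_mul_of_nonneg_right (mul_le_mul_of_nonneg_left habs hτpos.le) hz0,
          sq_nonneg z]
      · have htz : t = z - 1 := by rw [ht, h]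
        have habs' : |t| = 1 - z := by rw [htz, abs_of_nonpos (by linarith)]; ring
        have hz1' : z < 1 := by
          rcases lt_or_eq_of_le hz1 with h' | h'
          · exact h'
          · exact absurd (by rw [htz, h', sub_self]) h0
        have hzh : 1/2 ≤ z := by rw [habs'] at hts; linarith
        have hz0' : 0 < z := by linarith
        have hglb := hgz hz0' hz1'
        rw [min_eq_right (by linarith)] at hglb
        have habs : |d| ≤ μ * c := le_trans hd hDμ
        rw [htz]
        nlinarith [mul_le_mul_of_nonneg_left hglb (mul_nonneg hτpos.le hμ.le),
          mul_le_mul_of_nonneg_right (mul_le_mul_of_nonneg_left hd2 hτpos.le) (sub_nonneg.mpr hz1),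
          mul_le_mul_of_nonneg_right (mul_le_mul_of_nonneg_left habs hτpos.le) (sub_nonneg.mpr hz1),
          sq_nonneg (z-1)]
  · have hT1 : |t| ≤ 1 := by
      rw [abs_le]; rcases hx0 with h | h <;> rw [ht, h] <;> constructor <;> linarith
    have h1 : -(τ * |d| * |t|) ≤ τ*d*t := by
      have : |τ*d*t| ≤ τ * |d| * |t| := by
        rw [abs_mul, abs_mul, abs_of_pos hτpos]
      linarith [neg_abs_le (τ*d*t)]
    have h2 : 0 ≤ τ*μ*gz := by positivity
    have hpos : 0 < |t| := by linarith
    nlinarith [sq_abs t, mul_le_mul_of_nonneg_right hτd (abs_nonneg t),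
      mul_lt_mul_of_pos_left hts hpos]

lemma gmin_aux (g : ℝ → ℝ) (c : ℝ) (hc : 0 < c)
    (hg_lsc : LowerSemicontinuousOn g (Icc (0:ℝ) 1))
    (hg0 : g 0 = 0) (hg1 : g 1 = 0)
    (hg_deriv : ∀ t ∈ Ioo (0:ℝ) 1, ∃ d : ℝ, HasDerivAt g d t ∧ c ≤ |d|) :
    ∀ w ∈ Ioo (0:ℝ) 1, c * min w (1-w) ≤ g w := by
  choose! dd hdd hddc using hg_deriv
  have hgc : ∀ t ∈ Ioo (0:ℝ) 1, ContinuousAt g t := fun t ht => (hdd t ht).continuousAt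
  have hslope : ∀ a b : ℝ, a ∈ Ioo (0:ℝ) 1 → b ∈ Ioo (0:ℝ) 1 → a < b →
      c * (b - a) ≤ |g b - g a| := by
    intro a b ha hb hab
    have hsub : Icc a b ⊆ Ioo (0:ℝ) 1 := fun x hx => ⟨lt_of_lt_of_le ha.1 hx.1, lt_of_le_of_lt hx.2 hb.2⟩
    obtain ⟨ξ, hξ, hξeq⟩ := exists_hasDerivAt_eq_slope g dd hab
      (fun t ht => (hgc t (hsub ht)).continuousWithinAt)
      (fun t ht => hdd t (hsub (Ioo_subset_Icc_self ht)))
    have hcd : c ≤ |dd ξ| := hddc ξ (hsub (Ioo_subset_Icc_self hξ))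
    rw [hξeq] at hcd
    have hba : (0:ℝ) < b - a := sub_pos.mpr hab
    rw [abs_div, abs_of_pos hba, le_div_iff₀ hba] at hcd
    linarith
  have hmono : (∀ a b : ℝ, a ∈ Ioo (0:ℝ) 1 → b ∈ Ioo (0:ℝ) 1 → a < b → c*(b-a) ≤ g b - g a)
      ∨ (∀ a b : ℝ, a ∈ Ioo (0:ℝ) 1 → b ∈ Ioo (0:ℝ) 1 → a < b → c*(b-a) ≤ g a - g b) := by
    have hq : (1/4 : ℝ) ∈ Ioo (0:ℝ) 1 := by norm_num
    have hq3 : (3/4 : ℝ) ∈ Ioo (0:ℝ) 1 := by norm_num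
    have hqs := hslope (1/4) (3/4) hq hq3 (by norm_num)
    have key : ∀ a b : ℝ, a ∈ Ioo (0:ℝ) 1 → b ∈ Ioo (0:ℝ) 1 → a < b →
        (g (1/4) < g (3/4) → g a < g b) ∧ (g (3/4) < g (1/4) → g b < g a) := by
      intro a b ha hb hab
      set A := min a (1/4 : ℝ) with hA
      set Bb := max b (3/4 : ℝ) with hBb
      have hA0 : (0:ℝ) < A := lt_min ha.1 (by norm_num)
      have hB1 : Bb < 1 := max_lt hb.2 (by norm_num)
      have hAB : A ≤ Bb := le_trans (min_le_left _ _) (le_trans hab.le (le_max_left _ _))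
      have hIcc : Icc A Bb ⊆ Ioo (0:ℝ) 1 := fun x hx => ⟨lt_of_lt_of_le hA0 hx.1, lt_of_le_of_lt hx.2 hB1⟩
      have hcont : ContinuousOn g (Icc A Bb) := fun t ht => (hgc t (hIcc ht)).continuousWithinAt
      have hinj : InjOn g (Icc A Bb) := by
        intro x hx y hy hxy
        by_contra hne
        rcases lt_or_gt_of_ne hne with h | h
        · have := hslope x y (hIcc hx) (hIcc hy) h
          rw [hxy, sub_self, abs_zero] at this
          nlinarith
        · have := hslope y x (hIcc hy) (hIcc hx) h
          rw [hxy, sub_self, abs_zero] at this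
          nlinarith
      have hma : a ∈ Icc A Bb := ⟨min_le_left _ _, le_trans hab.le (le_max_left _ _)⟩
      have hmb : b ∈ Icc A Bb := ⟨le_trans (min_le_left _ _) hab.le, le_max_left _ _⟩
      have hm4 : (1/4:ℝ) ∈ Icc A Bb := ⟨min_le_right _ _, le_trans (by norm_num) (le_max_right _ _)⟩
      have hm34 : (3/4:ℝ) ∈ Icc A Bb := ⟨le_trans (min_le_right _ _) (by norm_num), le_max_right _ _⟩
      rcases hcont.strictMonoOn_of_injOn_Icc' hAB hinj with hsm | hsm
      · exact ⟨fun _ => hsm hma hmb hab, fun h' => absurd (hsm hm4 hm34 (by norm_num)) (by linarith)⟩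
      · exact ⟨fun h' => absurd (hsm hm4 hm34 (by norm_num)) (by linarith), fun _ => hsm hma hmb hab⟩
    rcases lt_trichotomy (g (1/4:ℝ)) (g (3/4:ℝ)) with h | h | h
    · left
      intro a b ha hb hab
      have hlt := (key a b ha hb hab).1 h
      have := hslope a b ha hb hab
      rw [abs_of_pos (by linarith)] at this
      exact this
    · exfalso; rw [h, sub_self, abs_zero] at hqs; nlinarith
    · right
      intro a b ha hb hab
      have hlt := (key a b ha hb hab).2 h
      have := hslope a b ha hb hab
      rw [abs_of_neg (by linarith)] at this
      linarith
  intro w hw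
  have hminle : ∀ ε : ℝ, 0 < ε → c * min w (1-w) ≤ g w + 2*ε := by
    intro ε hε
    set m : ℝ := min (min w (1-w)) (ε/c) with hm
    have hm0 : 0 < m := lt_min (lt_min hw.1 (by linarith [hw.2])) (by positivity)
    have hmw : m ≤ min w (1-w) := min_le_left _ _
    have hmε : c * m ≤ ε := by
      rw [← le_div_iff₀' hc]
      exact min_le_right _ _
    rcases hmono with hmono | hmono
    · have hlsc0 := hg_lsc 0 ⟨le_rfl, zero_le_one⟩ (-ε) (by show g 0 > -ε; rw [hg0]; linarith)
      have hsub : Ioo (0:ℝ) m ⊆ Icc (0:ℝ) 1 := fun x hx =>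
        ⟨hx.1.le, le_trans hx.2.le (by linarith [min_le_left w (1-w), hw.2, (min_le_left (min w (1-w)) (ε/c))])⟩
      have hne : (𝓝[Ioo (0:ℝ) m] (0:ℝ)).NeBot := by
        rw [← mem_closure_iff_nhdsWithin_neBot, closure_Ioo hm0.ne]
        exact ⟨le_rfl, hm0.le⟩
      have hev : ∀ᶠ x in 𝓝[Ioo (0:ℝ) m] (0:ℝ), -ε < g x := hlsc0.filter_mono (nhdsWithin_mono 0 hsub)
      obtain ⟨a, hga, ham⟩ := (hev.and eventually_mem_nhdsWithin).exists
      have haw : a < w := lt_of_lt_of_le ham.2 (le_trans hmw (min_le_left _ _))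
      have ha1 : a ∈ Ioo (0:ℝ) 1 := ⟨ham.1, lt_trans haw hw.2⟩
      have := hmono a w ha1 hw haw
      have hca : c * a ≤ c * m := by nlinarith [ham.2.le]
      nlinarith [min_le_left w (1-w)]
    · have hlsc1 := hg_lsc 1 ⟨zero_le_one, le_rfl⟩ (-ε) (by show g 1 > -ε; rw [hg1]; linarith)
      have hm1 : m < 1 := lt_of_le_of_lt (le_trans hmw (min_le_right _ _)) (by linarith [hw.1])
      have hsub : Ioo (1-m) 1 ⊆ Icc (0:ℝ) 1 := fun x hx => ⟨by linarith [hx.1, hm1], hx.2.le⟩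
      have hne : (𝓝[Ioo (1-m) 1] (1:ℝ)).NeBot := by
        rw [← mem_closure_iff_nhdsWithin_neBot, closure_Ioo (by linarith : (1:ℝ)-m ≠ 1)]
        exact ⟨by linarith, le_rfl⟩
      have hev : ∀ᶠ x in 𝓝[Ioo (1-m) 1] (1:ℝ), -ε < g x := hlsc1.filter_mono (nhdsWithin_mono 1 hsub)
      obtain ⟨b, hgb, hbm⟩ := (hev.and eventually_mem_nhdsWithin).exists
      have hwb : w < b := by
        have : w ≤ 1 - m := by linarith [le_trans hmw (min_le_right w (1-w))]
        linarith [hbm.1]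
      have hb1 : b ∈ Ioo (0:ℝ) 1 := ⟨lt_trans hw.1 hwb, hbm.2⟩
      have := hmono w b hw hb1 hwb
      have hcb : c * (1 - b) ≤ c * m := by nlinarith [hbm.1]
      nlinarith [min_le_right w (1-w)]
  by_contra hlt
  push_neg at hlt
  have := hminle ((c * min w (1-w) - g w)/3) (by linarith)
  linarith

theorem stmt8 (n : ℕ) (hn : 1 ≤ n)
    (f : EuclideanSpace ℝ (Fin n) → ℝ) (hf : ContDiff ℝ 1 f)
    (B : Set (EuclideanSpace ℝ (Fin n)))
    (hB : B = {v : EuclideanSpace ℝ (Fin n) | ∀ i, v i ∈ Icc (0:ℝ) 1})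
    (L : ℝ) (hL : 0 < L)
    (hsmooth : ∀ x ∈ B, ∀ w ∈ B,
      f x ≤ f w + ⟪gradient f w, x - w⟫ + L/2 * ‖x - w‖^2)
    (g : ℝ → ℝ)
    (hg_lsc : LowerSemicontinuousOn g (Icc (0:ℝ) 1))
    (hg_nn : ∀ t ∈ Icc (0:ℝ) 1, 0 ≤ g t)
    (hg_zero : ∀ t ∈ Icc (0:ℝ) 1, (g t = 0 ↔ t = 0 ∨ t = 1))
    (c : ℝ) (hc : 0 < c)
    (hg_deriv : ∀ t ∈ Ioo (0:ℝ) 1, ∃ d : ℝ, HasDerivAt g d t ∧ c ≤ |d|)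
    (μ : ℝ)
    (hμ : sSup ((fun u => (⨆ i, |gradient f u i|) / c) '' B) < μ)
    (φ : EuclideanSpace ℝ (Fin n) → ℝ) (hφ : φ = fun v => ∑ i, g (v i))
    (xb : EuclideanSpace ℝ (Fin n)) (hxb : xb ∈ B)
    (hmin : IsLocalMinOn (fun v => f v + μ * φ v) B xb) :
    ∃ τ : ℝ, 0 < τ ∧ ∀ z ∈ B,
      (1/2) * ‖xb - (xb - τ • gradient f xb)‖^2 + τ * μ * φ xb ≤
      (1/2) * ‖z - (xb - τ • gradient f xb)‖^2 + τ * μ * φ z := by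
  haveI hnemp : Nonempty (Fin n) := Fin.pos_iff_nonempty.mp hn
  subst hB hφ
  have hxbI : ∀ i, xb i ∈ Icc (0:ℝ) 1 := hxb
  -- compactness of B
  have hBc : IsCompact {v : EuclideanSpace ℝ (Fin n) | ∀ i, v i ∈ Icc (0:ℝ) 1} := by
    have h1 : IsCompact (Set.univ.pi fun _ : Fin n => Icc (0:ℝ) 1) :=
      isCompact_univ_pi fun _ => isCompact_Icc
    have h2 := h1.image (EuclideanSpace.equiv (Fin n) ℝ).symm.continuous
    convert h2 using 1
    ext v
    constructor
    · intro hv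
      exact ⟨EuclideanSpace.equiv (Fin n) ℝ v, fun i _ => hv i, rfl⟩
    · rintro ⟨w, hw, rfl⟩ i
      exact hw i (mem_univ i)
  have hgrad : Continuous (gradient f) :=
    (InnerProductSpace.toDual ℝ (EuclideanSpace ℝ (Fin n))).symm.continuous.comp
      (hf.continuous_fderiv one_ne_zero)
  have hnormsq : ∀ v : EuclideanSpace ℝ (Fin n), ‖v‖^2 = ∑ i, (v i)^2 := by
    intro v
    rw [EuclideanSpace.norm_eq, Real.sq_sqrt (by positivity)]
    simp [sq_abs]
  have hcoordle : ∀ (v : EuclideanSpace ℝ (Fin n)) (i : Fin n), |v i| ≤ ‖v‖ := by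
    intro v i
    have h2 : (v i)^2 ≤ ∑ j, (v j)^2 :=
      Finset.single_le_sum (fun j _ => sq_nonneg (v j)) (Finset.mem_univ i)
    nlinarith [abs_nonneg (v i), norm_nonneg v, sq_abs (v i), hnormsq v]
  set D := ⨆ i, |gradient f xb i| with hDdef
  have hbddS : BddAbove ((fun u => (⨆ i, |gradient f u i|) / c) ''
      {v : EuclideanSpace ℝ (Fin n) | ∀ i, v i ∈ Icc (0:ℝ) 1}) := by
    obtain ⟨M, hM⟩ := (hBc.image (continuous_norm.comp hgrad)).bddAbove
    refine ⟨M / c, ?_⟩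
    rintro x ⟨u, hu, rfl⟩
    have hle : (⨆ i, |gradient f u i|) ≤ M :=
      ciSup_le fun i => le_trans (hcoordle _ i) (hM ⟨u, hu, rfl⟩)
    exact (div_le_div_iff_of_pos_right hc).mpr hle
  have hDle : D / c ≤ sSup ((fun u => (⨆ i, |gradient f u i|) / c) ''
      {v : EuclideanSpace ℝ (Fin n) | ∀ i, v i ∈ Icc (0:ℝ) 1}) :=
    le_csSup hbddS ⟨xb, hxb, rfl⟩
  have hDμc : D < μ * c := by
    have := lt_of_le_of_lt hDle hμ
    rwa [div_lt_iff₀ hc] at this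
  have hGiD : ∀ i, |gradient f xb i| ≤ D := fun i =>
    le_ciSup (f := fun j => |gradient f xb j|) (Set.Finite.bddAbove (Set.finite_range _)) i
  have hD0 : 0 ≤ D := le_trans (abs_nonneg (gradient f xb (Classical.arbitrary _)))
    (hGiD _)
  have hμ0 : 0 < μ := lt_of_le_of_lt (div_nonneg hD0 hc.le) (lt_of_le_of_lt hDle hμ)
  -- every coordinate of xb is 0 or 1
  have hbin : ∀ i, xb i = 0 ∨ xb i = 1 := by
    intro i
    rcases eq_or_lt_of_le (hxbI i).1 with h0 | h0
    · exact Or.inl h0.symm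
    rcases eq_or_lt_of_le (hxbI i).2 with h1 | h1
    · exact Or.inr h1
    exfalso
    obtain ⟨d, hdg, hdc⟩ := hg_deriv (xb i) ⟨h0, h1⟩
    set E : EuclideanSpace ℝ (Fin n) := EuclideanSpace.single i (1:ℝ) with hE
    set γ : ℝ → EuclideanSpace ℝ (Fin n) := fun t => xb + (t - xb i) • E with hγ
    have hγapp : ∀ (t : ℝ) (j : Fin n), γ t j = if j = i then t else xb j := by
      intro t j
      rcases eq_or_ne j i with h | h
      · subst h
        simp [hγ, hE, PiLp.add_apply, PiLp.smul_apply, EuclideanSpace.single_apply]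
      · simp [hγ, hE, PiLp.add_apply, PiLp.smul_apply, EuclideanSpace.single_apply, h]
    have hγx : γ (xb i) = xb := by
      rw [hγ]; simp
    have hγcont : Continuous γ := by
      apply continuous_const.add
      exact (continuous_id.sub continuous_const).smul continuous_const
    have htend : Tendsto γ (𝓝 (xb i))
        (𝓝[{v : EuclideanSpace ℝ (Fin n) | ∀ j, v j ∈ Icc (0:ℝ) 1}] xb) := by
      rw [tendsto_nhdsWithin_iff]
      constructor
      · have := hγcont.tendsto (xb i); rwa [hγx] at this
      · filter_upwards [Icc_mem_nhds h0 h1] with t htt j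
        rw [hγapp]
        split_ifs
        · exact htt
        · exact hxbI j
    have hmin' : IsMinFilter (fun v => f v + μ * ∑ j, g (v j))
        (𝓝[{v : EuclideanSpace ℝ (Fin n) | ∀ j, v j ∈ Icc (0:ℝ) 1}] xb) (γ (xb i)) := by
      rw [hγx]; exact hmin
    have hlocmin : IsLocalMin ((fun v => f v + μ * ∑ j, g (v j)) ∘ γ) (xb i) :=
      hmin'.comp_tendsto htend
    have hcurve : HasDerivAt γ E (xb i) := by
      have h1' : HasDerivAt (fun t : ℝ => t - xb i) 1 (xb i) := (hasDerivAt_id _).sub_const _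
      have h2' := (h1'.smul_const E).const_add xb
      simpa [hγ] using h2'
    have hfc : HasDerivAt (fun t => f (γ t)) (fderiv ℝ f xb E) (xb i) := by
      have hdf : HasFDerivAt f (fderiv ℝ f xb) (γ (xb i)) := by
        rw [hγx]; exact (hf.differentiable one_ne_zero xb).hasFDerivAt
      exact hdf.comp_hasDerivAt _ hcurve
    have hsum : HasDerivAt (fun t => ∑ j, g (γ t j)) d (xb i) := by
      have hrw : (fun t => ∑ j, g (γ t j))
          = fun t => ∑ j : Fin n, g (if j = i then t else xb j) := by
        funext t; exact Finset.sum_congr rfl fun j _ => by rw [hγapp]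
      rw [hrw]
      have h2' : HasDerivAt (fun t => ∑ j : Fin n, g (if j = i then t else xb j))
          (∑ j : Fin n, if j = i then d else 0) (xb i) := by
        apply HasDerivAt.fun_sum
        intro j _
        rcases eq_or_ne j i with h | h
        · subst h; simpa using hdg
        · simpa [h] using hasDerivAt_const (xb i) (g (xb j))
      simpa [Finset.sum_ite_eq'] using h2'
    have hderiv : HasDerivAt ((fun v => f v + μ * ∑ j, g (v j)) ∘ γ)
        (fderiv ℝ f xb E + μ * d) (xb i) := hfc.add (hsum.const_mul μ)
    have hzero := hlocmin.hasDerivAt_eq_zero hderiv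
    have hfdi : fderiv ℝ f xb E = gradient f xb i := by
      have h := (InnerProductSpace.toDual_symm_apply
        (y := fderiv ℝ f xb) (x := E)).symm
      rw [show (InnerProductSpace.toDual ℝ (EuclideanSpace ℝ (Fin n))).symm (fderiv ℝ f xb)
          = gradient f xb from rfl] at h
      rw [hE] at h ⊢
      rw [h, EuclideanSpace.inner_single_right]
      simp
    rw [hfdi] at hzero
    have h1 : |gradient f xb i| ≤ D := hGiD i
    have h3 : gradient f xb i = -(μ * d) := by linarith
    rw [h3, abs_neg, abs_mul, abs_of_pos hμ0] at h1
    nlinarith [h1, hDμc, hdc, hμ0]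
  -- lower bound for g
  have hg0 : g 0 = 0 := (hg_zero 0 ⟨le_rfl, zero_le_one⟩).mpr (Or.inl rfl)
  have hg1 : g 1 = 0 := (hg_zero 1 ⟨zero_le_one, le_rfl⟩).mpr (Or.inr rfl)
  have hgmin := gmin_aux g c hc hg_lsc hg0 hg1 hg_deriv
  have hφxb : ∑ j, g (xb j) = 0 := Finset.sum_eq_zero fun j _ => by
    rcases hbin j with h | h <;> rw [h] <;> assumption
  refine ⟨1/(8*(D+1)), by positivity, ?_⟩
  intro z hz
  set τ := 1/(8*(D+1)) with hτ
  have key : ∀ i : Fin n, 1/2*(τ*gradient f xb i)^2 ≤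
      1/2*(z i - xb i + τ*gradient f xb i)^2 + τ*μ*g (z i) := by
    intro i
    have hco := coord_ineq c μ D (gradient f xb i) τ (xb i) (z i) (g (z i)) hc hμ0 hD0
      (hGiD i) hDμc.le hτ (hbin i) (hz i).1 (hz i).2 (hg_nn _ (hz i))
      (fun hh1 hh2 => hgmin (z i) ⟨hh1, hh2⟩)
    nlinarith [hco]
  have e1 : xb - (xb - τ • gradient f xb) = τ • gradient f xb := by
    abel
  have e2 : ‖τ • gradient f xb‖^2 = ∑ i, (τ * gradient f xb i)^2 := by
    rw [hnormsq]
    exact Finset.sum_congr rfl fun i _ => by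
      rw [PiLp.smul_apply, smul_eq_mul]
  have e3 : ‖z - (xb - τ • gradient f xb)‖^2
      = ∑ i, (z i - xb i + τ * gradient f xb i)^2 := by
    rw [hnormsq]
    refine Finset.sum_congr rfl fun i _ => ?_
    have : (z - (xb - τ • gradient f xb)) i = z i - xb i + τ * gradient f xb i := by
      rw [PiLp.sub_apply, PiLp.sub_apply, PiLp.smul_apply, smul_eq_mul]; ring
    rw [this]
  beta_reduce
  rw [e1, hφxb, mul_zero, add_zero, e2, e3]
  calc (1/2) * ∑ i, (τ * gradient f xb i)^2
      = ∑ i, 1/2 * (τ * gradient f xb i)^2 := by rw [Finset.mul_sum]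
    _ ≤ ∑ i, (1/2*(z i - xb i + τ*gradient f xb i)^2 + τ*μ*g (z i)) :=
        Finset.sum_le_sum fun i _ => key i
    _ = (1/2) * (∑ i, (z i - xb i + τ*gradient f xb i)^2) + τ*μ*∑ i, g (z i) := by
        rw [Finset.sum_add_distrib, ← Finset.mul_sum, ← Finset.mul_sum]
end

section
/- Let n ≥ 1, B = [0,1]ⁿ ⊂ ℝⁿ, let f: ℝⁿ → ℝ be differentiable and ℓ-strongly convex on B (i.e., f(x) ≥ f(w) + ⟨∇f(w), x − w⟩ + (ℓ/2)‖x − w‖² for all x, w ∈ B, with ℓ > 0), let g: ℝ → ℝ and μ > 0. If x̄ ∈ B is a P-stationary point with constant τ ≥ 1/ℓ of min_{x∈B} F(x;μ), then x̄ is a global minimizer of F(·;μ) over B, i.e., F(x̄;μ) ≤ F(w;μ) for all w ∈ B. -/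
open Set Filter
open scoped RealInnerProductSpace

theorem stmt9 (n : ℕ) (hn : 1 ≤ n)
    (f : EuclideanSpace ℝ (Fin n) → ℝ) (hf : Differentiable ℝ f)
    (B : Set (EuclideanSpace ℝ (Fin n)))
    (hB : B = {v : EuclideanSpace ℝ (Fin n) | ∀ i, v i ∈ Icc (0:ℝ) 1})
    (l : ℝ) (hl : 0 < l)
    (hconv : ∀ x ∈ B, ∀ w ∈ B,
      f w + ⟪gradient f w, x - w⟫ + l/2 * ‖x - w‖^2 ≤ f x)
    (g : ℝ → ℝ) (μ : ℝ) (hμ : 0 < μ)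
    (φ : EuclideanSpace ℝ (Fin n) → ℝ) (hφ : φ = fun v => ∑ i, g (v i))
    (τ : ℝ) (hτ : 1/l ≤ τ)
    (xb : EuclideanSpace ℝ (Fin n)) (hxb : xb ∈ B)
    (hP : ∀ z ∈ B,
      (1/2) * ‖xb - (xb - τ • gradient f xb)‖^2 + τ * μ * φ xb ≤
      (1/2) * ‖z - (xb - τ • gradient f xb)‖^2 + τ * μ * φ z) :
    ∀ w ∈ B, f xb + μ * φ xb ≤ f w + μ * φ w := by
  intro w hw
  set u := gradient f xb with hu
  have hτ0 : 0 < τ := lt_of_lt_of_le (by positivity) hτ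
  have key := hP w hw
  have h1 : xb - (xb - τ • u) = τ • u := by abel
  have h2 : w - (xb - τ • u) = (w - xb) + τ • u := by abel
  rw [h1, h2, norm_add_sq_real] at key
  have hir : ⟪w - xb, τ • u⟫ = τ * ⟪u, w - xb⟫ := by
    rw [real_inner_smul_right, real_inner_comm]
  rw [hir] at key
  have hc := hconv w hw xb hxb
  have hs : (0:ℝ) ≤ ‖w - xb‖^2 := by positivity
  have hτl : 1 ≤ τ * l := by
    rw [div_le_iff₀ hl] at hτ; linarith
  have hmul : τ * (f xb + ⟪u, w - xb⟫ + l/2 * ‖w - xb‖^2) ≤ τ * f w :=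
    mul_le_mul_of_nonneg_left hc hτ0.le
  have hprod : 0 ≤ (τ * l - 1) * ‖w - xb‖^2 :=
    mul_nonneg (by linarith) hs
  have hfin : τ * (f xb + μ * φ xb) ≤ τ * (f w + μ * φ w) := by nlinarith
  exact le_of_mul_le_mul_left (by linarith) hτ0
end

section
/- Let n ≥ 1, B = [0,1]ⁿ ⊂ ℝⁿ, and let C ⊆ ℝⁿ be a convex set with B ⊆ C. Let f: ℝⁿ → ℝ be differentiable with ∇f Lipschitz continuous on C with constant β > 0, let φ: ℝⁿ → ℝ, and let λ > 0 and σ ≥ 8·max{λ, β}. Suppose w ∈ B, x ∈ C, μ ≥ 0, φ(w) ≥ 0, Q is a symmetric positive semidefinite n×n matrix with operator norm ‖Q‖ ≤ λ, and y = −∇f(w) − Q(x − w). Then, with L(w,x,y;μ) := f(x) + μφ(w) + ⟨y, x − w⟩ + (σ/2)‖x − w‖², one has L(w,x,y;μ) + (3σ/8)‖x − w‖² ≥ f(w) + (σ/2)‖x − w‖² ≥ inf_{u∈B} f(u). -/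
open Set Filter
open scoped RealInnerProductSpace

theorem stmt10 (n : ℕ) (hn : 1 ≤ n)
    (B : Set (EuclideanSpace ℝ (Fin n)))
    (hB : B = {v : EuclideanSpace ℝ (Fin n) | ∀ i, v i ∈ Icc (0:ℝ) 1})
    (C : Set (EuclideanSpace ℝ (Fin n))) (hC : Convex ℝ C) (hBC : B ⊆ C)
    (f : EuclideanSpace ℝ (Fin n) → ℝ) (hf : Differentiable ℝ f)
    (β lam σ : ℝ) (hβ : 0 < β) (hlam : 0 < lam) (hσ : 8 * max lam β ≤ σ)
    (hLip : ∀ u ∈ C, ∀ v ∈ C, ‖gradient f u - gradient f v‖ ≤ β * ‖u - v‖)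
    (φ : EuclideanSpace ℝ (Fin n) → ℝ)
    (w x : EuclideanSpace ℝ (Fin n)) (hw : w ∈ B) (hx : x ∈ C)
    (μ : ℝ) (hμ : 0 ≤ μ) (hφw : 0 ≤ φ w)
    (Q : EuclideanSpace ℝ (Fin n) →L[ℝ] EuclideanSpace ℝ (Fin n))
    (hQsa : IsSelfAdjoint Q) (hQpsd : ∀ v, 0 ≤ ⟪Q v, v⟫) (hQ : ‖Q‖ ≤ lam)
    (y : EuclideanSpace ℝ (Fin n)) (hy : y = -gradient f w - Q (x - w)) :
    sInf (f '' B) ≤ f w + σ/2 * ‖x - w‖^2 ∧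
    f w + σ/2 * ‖x - w‖^2 ≤
      (f x + μ * φ w + ⟪y, x - w⟫ + σ/2 * ‖x - w‖^2) + 3*σ/8 * ‖x - w‖^2 := by
  have hwC : w ∈ C := hBC hw
  have hlamσ : lam ≤ σ / 8 := by
    have := le_max_left lam β; linarith
  have hβσ : β ≤ σ / 8 := by
    have := le_max_right lam β; linarith
  constructor
  · -- compactness of B
    have hBcomp : IsCompact B := by
      have : B = (⇑(EuclideanSpace.equiv (Fin n) ℝ)) ⁻¹' (Set.pi univ fun _ => Icc (0:ℝ) 1) := by
        rw [hB]; ext v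
        simp only [mem_setOf_eq, mem_preimage, Set.mem_pi, Set.mem_univ, true_implies]
        rfl
      rw [this]
      exact ((EuclideanSpace.equiv (Fin n) ℝ).toHomeomorph.isCompact_preimage).2
        (isCompact_univ_pi fun _ => isCompact_Icc)
    have hbdd : BddBelow (f '' B) := (hBcomp.image hf.continuous).bddBelow
    have h1 : sInf (f '' B) ≤ f w := csInf_le hbdd (mem_image_of_mem f hw)
    nlinarith [sq_nonneg ‖x - w‖]
  · set g := gradient f w with hg
    have hseg : segment ℝ w x ⊆ C := hC.segment_subset hwC hx
    have key : |f x - f w - ⟪g, x - w⟫| ≤ β * ‖x - w‖ * ‖x - w‖ := by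
      have hder : ∀ u ∈ segment ℝ w x,
          HasFDerivWithinAt (fun u => f u - ⟪g, u⟫)
            (fderiv ℝ f u - (InnerProductSpace.toDual ℝ _ g : _ →L[ℝ] ℝ)) (segment ℝ w x) u := by
        intro u hu
        exact ((hf u).hasFDerivAt.sub
          ((InnerProductSpace.toDual ℝ _ g : _ →L[ℝ] ℝ).hasFDerivAt)).hasFDerivWithinAt
      have hbound : ∀ u ∈ segment ℝ w x,
          ‖fderiv ℝ f u - (InnerProductSpace.toDual ℝ _ g : _ →L[ℝ] ℝ)‖ ≤ β * ‖x - w‖ := by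
        intro u hu
        have h1 : fderiv ℝ f u = InnerProductSpace.toDual ℝ _ (gradient f u) := by
          simp [gradient]
        have h2 : ‖fderiv ℝ f u - (InnerProductSpace.toDual ℝ _ g : _ →L[ℝ] ℝ)‖
            = ‖gradient f u - g‖ := by
          rw [h1, ← map_sub]
          exact (InnerProductSpace.toDual ℝ _).norm_map _
        rw [h2]
        have h3 : ‖gradient f u - g‖ ≤ β * ‖u - w‖ := hLip u (hseg hu) w hwC
        have h4 : ‖u - w‖ ≤ ‖x - w‖ := by
          obtain ⟨a, b, ha, hb, hab, rfl⟩ := hu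
          have : a • w + b • x - w = b • (x - w) := by
            have : a = 1 - b := by linarith
            subst this
            module
          rw [this, norm_smul]
          simp only [Real.norm_eq_abs, abs_of_nonneg hb]
          nlinarith [norm_nonneg (x - w)]
        calc ‖gradient f u - g‖ ≤ β * ‖u - w‖ := h3
          _ ≤ β * ‖x - w‖ := by nlinarith
      have hmain := (convex_segment w x).norm_image_sub_le_of_norm_hasFDerivWithin_le
        hder hbound (left_mem_segment ℝ w x) (right_mem_segment ℝ w x)
      have hinner : ⟪g, x⟫ - ⟪g, w⟫ = ⟪g, x - w⟫ := (inner_sub_right g x w).symm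
      rw [Real.norm_eq_abs] at hmain
      calc |f x - f w - ⟪g, x - w⟫| = |(f x - ⟪g, x⟫) - (f w - ⟪g, w⟫)| := by
            rw [← hinner]; ring_nf
        _ ≤ β * ‖x - w‖ * ‖x - w‖ := hmain
    have hQb : ⟪Q (x - w), x - w⟫ ≤ lam * ‖x - w‖ ^ 2 := by
      calc ⟪Q (x - w), x - w⟫ ≤ ‖Q (x - w)‖ * ‖x - w‖ := real_inner_le_norm _ _
        _ ≤ (‖Q‖ * ‖x - w‖) * ‖x - w‖ := by
            have := Q.le_opNorm (x - w)
            nlinarith [norm_nonneg (x - w)]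
        _ ≤ lam * ‖x - w‖ ^ 2 := by nlinarith [norm_nonneg (x - w), sq_nonneg ‖x - w‖]
    have hyinner : ⟪y, x - w⟫ = -⟪g, x - w⟫ - ⟪Q (x - w), x - w⟫ := by
      rw [hy, inner_sub_left, inner_neg_left]
    rw [hyinner]
    have habs := (abs_le.1 key).1
    have heq : β * ‖x - w‖ * ‖x - w‖ = β * ‖x - w‖ ^ 2 := by ring
    have h5 : β * ‖x - w‖ ^ 2 ≤ σ/8 * ‖x - w‖ ^ 2 :=
      mul_le_mul_of_nonneg_right hβσ (sq_nonneg _)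
    have h6 : lam * ‖x - w‖ ^ 2 ≤ σ/8 * ‖x - w‖ ^ 2 :=
      mul_le_mul_of_nonneg_right hlamσ (sq_nonneg _)
    linarith [mul_nonneg hμ hφw, mul_nonneg hlam.le (sq_nonneg ‖x - w‖)]
end

section
/- (Lemma 4.) Under the ShaPeak algorithm setup and the assumption that ∇f is Lipschitz continuous on N with constant β, the iterates satisfy: (1) for every k ≥ 0, (w^k, x^k) ∈ Ω and x^k ∈ N (and w^k ∈ B); (2) for every k ≥ 0, L̃^{k+1} − L̃^k ≤ −(σ/8)‖x^{k+1} − x^k‖². -/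
open Set Filter
open scoped RealInnerProductSpace

lemma grad_fderiv' {E : Type*} [NormedAddCommGroup E] [InnerProductSpace ℝ E] [CompleteSpace E]
    (f : E → ℝ) (z : E) :
    fderiv ℝ f z = InnerProductSpace.toDual ℝ E (gradient f z) := by
  rw [gradient, LinearIsometryEquiv.apply_symm_apply]

lemma descent_base {E : Type*} [NormedAddCommGroup E] [InnerProductSpace ℝ E] [CompleteSpace E]
    (f : E → ℝ) (hf : Differentiable ℝ f) {s : Set E} (hs : Convex ℝ s)
    {β : ℝ} (hβ : 0 ≤ β)
    (hLip : ∀ u ∈ s, ∀ v ∈ s, ‖gradient f u - gradient f v‖ ≤ β * ‖u - v‖) :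
    ∀ a ∈ s, ∀ b ∈ s,
      |f b - f a - ⟪gradient f a, b - a⟫| ≤ β * ‖b - a‖ ^ 2 := by
  intro a ha b hb
  have hseg : segment ℝ a b ⊆ s := hs.segment_subset ha hb
  have key := Convex.norm_image_sub_le_of_norm_hasFDerivWithin_le'
    (f := f) (s := segment ℝ a b) (f' := fun z => fderiv ℝ f z) (φ := fderiv ℝ f a)
    (C := β * ‖b - a‖)
    (fun z _ => (hf z).hasFDerivAt.hasFDerivWithinAt)
    ?_ (convex_segment a b) (left_mem_segment ℝ a b) (right_mem_segment ℝ a b)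
  · have happ : (fderiv ℝ f a) (b - a) = ⟪gradient f a, b - a⟫ := by
      rw [grad_fderiv']; exact InnerProductSpace.toDual_apply_apply
    rw [happ] at key
    calc |f b - f a - ⟪gradient f a, b - a⟫| ≤ β * ‖b - a‖ * ‖b - a‖ := key
    _ = β * ‖b - a‖ ^ 2 := by ring
  · intro z hz
    have hnorm : ‖fderiv ℝ f z - fderiv ℝ f a‖ = ‖gradient f z - gradient f a‖ := by
      rw [grad_fderiv', grad_fderiv', ← map_sub]
      exact (InnerProductSpace.toDual ℝ E).norm_map _
    rw [hnorm]
    refine (hLip z (hseg hz) a ha).trans ?_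
    have : ‖z - a‖ ≤ ‖b - a‖ := by
      obtain ⟨ta, tb, hta, htb, htab, rfl⟩ := hz
      have hz' : ta • a + tb • b - a = tb • (b - a) := by
        have h1 : ta = 1 - tb := by linarith
        rw [h1]; module
      rw [hz', norm_smul, Real.norm_eq_abs, abs_of_nonneg htb]
      nlinarith [norm_nonneg (b - a)]
    nlinarith

lemma descent_lemma {E : Type*} [NormedAddCommGroup E] [InnerProductSpace ℝ E] [CompleteSpace E]
    (f : E → ℝ) (hf : Differentiable ℝ f) {s : Set E} (hs : Convex ℝ s)
    {β : ℝ} (hβ : 0 ≤ β)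
    (hLip : ∀ u ∈ s, ∀ v ∈ s, ‖gradient f u - gradient f v‖ ≤ β * ‖u - v‖) :
    ∀ a ∈ s, ∀ b ∈ s,
      |f b - f a - ⟪gradient f a, b - a⟫| ≤ β / 2 * ‖b - a‖ ^ 2 := by
  have main : ∀ m : ℕ, ∀ a ∈ s, ∀ b ∈ s,
      |f b - f a - ⟪gradient f a, b - a⟫| ≤ (β / 2 + β * (1/2)^m) * ‖b - a‖ ^ 2 := by
    intro m
    induction m with
    | zero =>
      intro a ha b hb
      refine (descent_base f hf hs hβ hLip a ha b hb).trans ?_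
      have := sq_nonneg ‖b - a‖
      nlinarith
    | succ m ih =>
      intro a ha b hb
      set c := (1/2 : ℝ) • a + (1/2 : ℝ) • b with hc
      have hcs : c ∈ s := hs ha hb (by norm_num) (by norm_num) (by norm_num)
      have hca : c - a = (1/2 : ℝ) • (b - a) := by rw [hc]; module
      have hbc : b - c = (1/2 : ℝ) • (b - a) := by rw [hc]; module
      have hnca : ‖c - a‖ = 1/2 * ‖b - a‖ := by
        rw [hca, norm_smul, Real.norm_eq_abs]; norm_num
      have hnbc : ‖b - c‖ = 1/2 * ‖b - a‖ := by
        rw [hbc, norm_smul, Real.norm_eq_abs]; norm_num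
      have h1 := ih a ha c hcs
      have h2 := ih c hcs b hb
      have h3 : |⟪gradient f c - gradient f a, b - c⟫| ≤ β * (1/2 * ‖b - a‖) * (1/2 * ‖b - a‖) := by
        refine (abs_real_inner_le_norm _ _).trans ?_
        rw [hnbc]
        have h4 : ‖gradient f c - gradient f a‖ ≤ β * (1/2 * ‖b - a‖) := by
          refine (hLip c hcs a ha).trans ?_
          rw [hnca]
        have h5 : (0:ℝ) ≤ 1/2 * ‖b - a‖ := by positivity
        exact mul_le_mul_of_nonneg_right h4 h5
      have hid : f b - f a - ⟪gradient f a, b - a⟫ =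
          (f c - f a - ⟪gradient f a, c - a⟫) + (f b - f c - ⟪gradient f c, b - c⟫)
          + ⟪gradient f c - gradient f a, b - c⟫ := by
        have hsplit : (b : E) - a = (c - a) + (b - c) := by abel
        rw [inner_sub_left, hsplit, inner_add_right]
        ring
      rw [hid, hnca] at *
      have habs := abs_add_le (f c - f a - ⟪gradient f a, c - a⟫ + (f b - f c - ⟪gradient f c, b - c⟫))
        (⟪gradient f c - gradient f a, b - c⟫)
      have habs2 := abs_add_le (f c - f a - ⟪gradient f a, c - a⟫) (f b - f c - ⟪gradient f c, b - c⟫)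
      have hE := sq_nonneg ‖b - a‖
      have hbc2 : ‖b - c‖ = 1/2 * ‖b - a‖ := hnbc
      rw [hbc2] at h2
      have hp : ((1:ℝ)/2)^(m+1) = (1/2)^m * (1/2) := pow_succ _ _
      have hsq : (1/2 * ‖b - a‖)^2 = 1/4 * ‖b - a‖^2 := by ring
      rw [hsq] at h1 h2
      rw [hp]
      nlinarith [h1, h2, h3]
  intro a ha b hb
  have hlim : Tendsto (fun m : ℕ => (β / 2 + β * (1/2)^m) * ‖b - a‖ ^ 2) atTop
      (nhds ((β / 2 + β * 0) * ‖b - a‖ ^ 2)) := by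
    exact (Tendsto.mul_const _ (tendsto_const_nhds.add
      ((tendsto_pow_atTop_nhds_zero_of_lt_one (by norm_num) (by norm_num)).const_mul β)))
  have := ge_of_tendsto' hlim (fun m => main m a ha b hb)
  calc |f b - f a - ⟪gradient f a, b - a⟫| ≤ (β / 2 + β * 0) * ‖b - a‖ ^ 2 := this
  _ = β / 2 * ‖b - a‖ ^ 2 := by ring

set_option maxHeartbeats 4000000 in
theorem stmt11 (n : ℕ) (hn : 1 ≤ n)
    (B : Set (EuclideanSpace ℝ (Fin n)))
    (hB : B = {v : EuclideanSpace ℝ (Fin n) | ∀ i, v i ∈ Icc (0:ℝ) 1})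
    (g : ℝ → ℝ)
    (hg_lsc : LowerSemicontinuousOn g (Icc (0:ℝ) 1))
    (hg_nn : ∀ t ∈ Icc (0:ℝ) 1, 0 ≤ g t)
    (hg_zero : ∀ t ∈ Icc (0:ℝ) 1, (g t = 0 ↔ t = 0 ∨ t = 1))
    (φ : EuclideanSpace ℝ (Fin n) → ℝ) (hφ : φ = fun v => ∑ i, g (v i))
    (f : EuclideanSpace ℝ (Fin n) → ℝ) (hf : ContDiff ℝ 1 f)
    (fB : ℝ) (hfB : IsLeast (f '' B) fB)
    (lam β σ η ρ ε μ₀ : ℝ) (k₀ : ℕ)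
    (hlam : 0 < lam) (hβ : 0 < β) (hσ : 8 * max lam β ≤ σ)
    (hη : 1 < η) (hρ : ρ ∈ Ioc (0:ℝ) (1/6)) (hε : 0 < ε)
    (hk₀ : 1 ≤ k₀) (hμ₀ : 0 < μ₀)
    (w x y : ℕ → EuclideanSpace ℝ (Fin n)) (μ : ℕ → ℝ)
    (Q : ℕ → EuclideanSpace ℝ (Fin n) →L[ℝ] EuclideanSpace ℝ (Fin n))
    (hQsa : ∀ k, IsSelfAdjoint (Q k)) (hQpsd : ∀ k v, 0 ≤ ⟪Q k v, v⟫)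
    (hQ : ∀ k, ‖Q k‖ ≤ lam)
    (hw0 : ∀ i, (w 0) i = 0 ∨ (w 0) i = 1) (hx0 : x 0 = w 0)
    (hy0 : y 0 = -gradient f (w 0)) (hμinit : μ 0 = μ₀)
    (hwStep : ∀ k, w (k+1) ∈ B ∧ ∀ u ∈ B,
      μ k * φ (w (k+1)) + ⟪y k, x k - w (k+1)⟫ + σ/2 * ‖x k - w (k+1)‖^2 ≤
      μ k * φ u + ⟪y k, x k - u⟫ + σ/2 * ‖x k - u‖^2)
    (hxStep : ∀ k, σ • (w (k+1) - x (k+1)) + Q (k+1) (w (k+1) - x (k+1)) =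
      gradient f (w (k+1)) + y k)
    (hyStep : ∀ k, y (k+1) = y k + σ • (x (k+1) - w (k+1)))
    (hμStep : ∀ k : ℕ, μ (k+1) =
      if (k+1) % k₀ = 0 ∧ φ (w (k+1)) ≠ 0 then
        μ k + min ((η - 1) * μ k) (ρ * σ * ‖x (k+1) - w (k+1)‖^2 / (φ (w (k+1)) + ε))
      else μ k)
    (α : ℝ) (hα : α = 2 * (f (w 0) - fB) / σ)
    (Nset : Set (EuclideanSpace ℝ (Fin n)))
    (hN : Nset = {v | ∀ i, |v i| ≤ 1 + (Real.sqrt n + Real.sqrt α) / 8})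
    (hLip : ∀ u ∈ Nset, ∀ v ∈ Nset, ‖gradient f u - gradient f v‖ ≤ β * ‖u - v‖)
    (Ltil : ℕ → ℝ)
    (hLtil : Ltil = fun k =>
      (f (x k) + μ k * φ (w k) + ⟪y k, x k - w k⟫ + σ/2 * ‖x k - w k‖^2) +
        3*σ/8 * ‖x k - w k‖^2) :
    (∀ k, (w k ∈ B ∧ f (w k) + σ/2 * ‖w k - x k‖^2 ≤ f (w 0)) ∧ x k ∈ Nset) ∧
    (∀ k, Ltil (k+1) - Ltil k ≤ -(σ/8) * ‖x (k+1) - x k‖^2) := by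
  classical
  -- scalar basics
  have hmax : lam ≤ max lam β := le_max_left _ _
  have hmax' : β ≤ max lam β := le_max_right _ _
  have hσpos : 0 < σ := lt_of_lt_of_le (by nlinarith) hσ
  have hlamσ : lam ≤ σ / 8 := by linarith
  have hβσ : β ≤ σ / 8 := by linarith
  have hfdiff : Differentiable ℝ f := hf.differentiable one_ne_zero
  have hBmem : ∀ v, v ∈ B → ∀ i, v i ∈ Icc (0:ℝ) 1 := by
    intro v hv; rwa [hB] at hv
  have hw0B : w 0 ∈ B := by
    rw [hB]; intro i; rcases hw0 i with h | h <;> rw [h] <;> constructor <;> norm_num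
  have hfBle : ∀ v, v ∈ B → fB ≤ f v := fun v hv => hfB.2 ⟨v, hv, rfl⟩
  have hαnn : 0 ≤ α := by
    rw [hα]; exact div_nonneg (by linarith [hfBle _ hw0B]) hσpos.le
  have hcoord : ∀ v : EuclideanSpace ℝ (Fin n), ∀ i, |v i| ≤ ‖v‖ := by
    intro v i
    rw [EuclideanSpace.norm_eq, ← Real.sqrt_sq_eq_abs]
    apply Real.sqrt_le_sqrt
    calc v i ^ 2 = ‖v i‖ ^ 2 := by rw [Real.norm_eq_abs, sq_abs]
    _ ≤ ∑ j, ‖v j‖ ^ 2 :=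
      Finset.single_le_sum (f := fun j => ‖v j‖ ^ 2) (fun j _ => sq_nonneg _) (Finset.mem_univ i)
  have hBN : B ⊆ Nset := by
    intro v hv
    rw [hN]; intro i
    have h0 := (hBmem v hv i).1
    have h1 := (hBmem v hv i).2
    have h2 : |v i| ≤ 1 := abs_le.mpr ⟨by linarith, h1⟩
    have := Real.sqrt_nonneg (n : ℝ)
    have := Real.sqrt_nonneg α
    linarith
  have hNconv : Convex ℝ Nset := by
    rw [hN]
    intro u hu v hv ta tb hta htb htab
    simp only [Set.mem_setOf_eq] at hu hv ⊢
    intro i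
    have happ : (ta • u + tb • v) i = ta * u i + tb * v i := by simp
    rw [happ]
    calc |ta * u i + tb * v i| ≤ |ta * u i| + |tb * v i| := abs_add_le _ _
    _ = ta * |u i| + tb * |v i| := by
        rw [abs_mul, abs_mul, abs_of_nonneg hta, abs_of_nonneg htb]
    _ ≤ ta * (1 + (Real.sqrt n + Real.sqrt α) / 8) + tb * (1 + (Real.sqrt n + Real.sqrt α) / 8) := by
        gcongr
        · exact hu i
        · exact hv i
    _ = 1 + (Real.sqrt n + Real.sqrt α) / 8 := by rw [← add_mul, htab, one_mul]
  have hDL := descent_lemma f hfdiff hNconv hβ.le hLip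
  have hφnn : ∀ v, v ∈ B → 0 ≤ φ v := by
    intro v hv; rw [hφ]
    exact Finset.sum_nonneg fun i _ => hg_nn _ (hBmem v hv i)
  have hφ0 : φ (w 0) = 0 := by
    rw [hφ]
    apply Finset.sum_eq_zero
    intro i _
    rcases hw0 i with h | h <;> rw [h]
    · exact (hg_zero 0 (by constructor <;> norm_num)).mpr (Or.inl rfl)
    · exact (hg_zero 1 (by constructor <;> norm_num)).mpr (Or.inr rfl)
  have hyform : ∀ k, y k = -gradient f (w k) - Q k (x k - w k) := by
    intro k
    cases k with
    | zero => rw [hy0, hx0, sub_self, map_zero, sub_zero]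
    | succ k =>
      have h := hxStep k
      have hyk : y k = σ • (w (k+1) - x (k+1)) + Q (k+1) (w (k+1) - x (k+1))
          - gradient f (w (k+1)) := by rw [h]; abel
      have hQneg : Q (k+1) (w (k+1) - x (k+1)) = -(Q (k+1) (x (k+1) - w (k+1))) := by
        rw [← map_neg]; congr 1; abel
      have hsneg : σ • (w (k+1) - x (k+1)) = -(σ • (x (k+1) - w (k+1))) := by
        rw [← smul_neg]; congr 1; abel
      rw [hyStep k, hyk, hQneg, hsneg]; abel
  have hμnn : ∀ k, 0 ≤ μ k := by
    intro k
    induction k with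
    | zero => rw [hμinit]; exact hμ₀.le
    | succ k ih =>
      rw [hμStep k]
      split_ifs with h
      · have hp : 0 ≤ φ (w (k+1)) := hφnn _ (hwStep k).1
        have hmin : 0 ≤ min ((η - 1) * μ k)
            (ρ * σ * ‖x (k+1) - w (k+1)‖^2 / (φ (w (k+1)) + ε)) := by
          refine le_min (mul_nonneg (by linarith) ih) (div_nonneg ?_ (by linarith))
          exact mul_nonneg (mul_nonneg hρ.1.le hσpos.le) (sq_nonneg _)
        linarith
      · exact ih
  have hμincr : ∀ k, (μ (k+1) - μ k) * φ (w (k+1)) ≤ ρ * σ * ‖x (k+1) - w (k+1)‖^2 := by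
    intro k
    have hp : 0 ≤ φ (w (k+1)) := hφnn _ (hwStep k).1
    have hc : 0 ≤ ρ * σ * ‖x (k+1) - w (k+1)‖^2 :=
      mul_nonneg (mul_nonneg hρ.1.le hσpos.le) (sq_nonneg _)
    rw [hμStep k]
    split_ifs with h
    · have h1 := min_le_right ((η - 1) * μ k)
        (ρ * σ * ‖x (k+1) - w (k+1)‖^2 / (φ (w (k+1)) + ε))
      have h2 := mul_le_mul_of_nonneg_right h1 hp
      have h3 : ρ * σ * ‖x (k+1) - w (k+1)‖^2 / (φ (w (k+1)) + ε) * φ (w (k+1)) ≤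
          ρ * σ * ‖x (k+1) - w (k+1)‖^2 := by
        rw [div_mul_eq_mul_div, div_le_iff₀ (by linarith)]
        exact mul_le_mul_of_nonneg_left (by linarith) hc
      have h4 : μ k + min ((η - 1) * μ k)
          (ρ * σ * ‖x (k+1) - w (k+1)‖^2 / (φ (w (k+1)) + ε)) - μ k
          = min ((η - 1) * μ k)
          (ρ * σ * ‖x (k+1) - w (k+1)‖^2 / (φ (w (k+1)) + ε)) := by ring
      rw [h4]
      linarith
    · rw [sub_self, zero_mul]; exact hc
  -- Lower bound (claim A)
  have hlow : ∀ k, w k ∈ B → x k ∈ Nset → f (w k) + σ/2 * ‖x k - w k‖^2 ≤ Ltil k := by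
    intro k hwB hxN
    have hdl := (abs_le.mp (hDL (w k) (hBN hwB) (x k) hxN)).1
    have hyinner : ⟪y k, x k - w k⟫ =
        -⟪gradient f (w k), x k - w k⟫ - ⟪Q k (x k - w k), x k - w k⟫ := by
      rw [hyform k, inner_sub_left, inner_neg_left]
    have hQe : ⟪Q k (x k - w k), x k - w k⟫ ≤ lam * ‖x k - w k‖^2 := by
      have h1 := real_inner_le_norm (Q k (x k - w k)) (x k - w k)
      have h2 := mul_le_mul_of_nonneg_right
        (le_trans ((Q k).le_opNorm (x k - w k))
          (mul_le_mul_of_nonneg_right (hQ k) (norm_nonneg (x k - w k))))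
        (norm_nonneg (x k - w k))
      calc ⟪Q k (x k - w k), x k - w k⟫ ≤ ‖Q k (x k - w k)‖ * ‖x k - w k‖ := h1
      _ ≤ lam * ‖x k - w k‖ * ‖x k - w k‖ := h2
      _ = lam * ‖x k - w k‖^2 := by ring
    have hμφ : 0 ≤ μ k * φ (w k) := mul_nonneg (hμnn k) (hφnn _ hwB)
    have hE2 := sq_nonneg ‖x k - w k‖
    have c1 : β / 2 * ‖x k - w k‖^2 ≤ σ/16 * ‖x k - w k‖^2 :=
      mul_le_mul_of_nonneg_right (by linarith) (sq_nonneg _)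
    have c2 : lam * ‖x k - w k‖^2 ≤ σ/8 * ‖x k - w k‖^2 :=
      mul_le_mul_of_nonneg_right (by linarith) (sq_nonneg _)
    simp only [hLtil]
    linarith only [hdl, hyinner.ge, hyinner.le, hQe, hμφ, c1, c2,
      mul_nonneg hσpos.le (sq_nonneg ‖x k - w k‖)]
  have hL0 : Ltil 0 = f (w 0) := by
    simp only [hLtil]
    rw [hx0, sub_self, hφ0]
    simp
  -- main step
  have step : ∀ k, w k ∈ B → x k ∈ Nset → ‖x k - w k‖^2 ≤ α → Ltil k ≤ f (w 0) →
      (w (k+1) ∈ B ∧ x (k+1) ∈ Nset ∧ ‖x (k+1) - w (k+1)‖^2 ≤ α ∧ Ltil (k+1) ≤ f (w 0)) ∧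
      Ltil (k+1) - Ltil k ≤ -(σ/8) * ‖x (k+1) - x k‖^2 := by
    intro k hw1B hx1N hE2 hLle
    have hw2B := (hwStep k).1
    have hA0 : (0:ℝ) ≤ ‖x (k+1) - w (k+1)‖ := norm_nonneg _
    have hD0 : (0:ℝ) ≤ ‖x (k+1) - x k‖ := norm_nonneg _
    have hE0 : (0:ℝ) ≤ ‖x k - w k‖ := norm_nonneg _
    have hxk := hxStep k
    have hyk := hyform k
    have hGy : gradient f (w (k+1)) + y k =
        -(σ • (x (k+1) - w (k+1))) - Q (k+1) (x (k+1) - w (k+1)) := by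
      rw [← hxk]
      have hQneg : Q (k+1) (w (k+1) - x (k+1)) = -(Q (k+1) (x (k+1) - w (k+1))) := by
        rw [← map_neg]; congr 1; abel
      have hsneg : σ • (w (k+1) - x (k+1)) = -(σ • (x (k+1) - w (k+1))) := by
        rw [← smul_neg]; congr 1; abel
      rw [hQneg, hsneg]; abel
    have hpsd := hQpsd (k+1) (x (k+1) - w (k+1))
    have hnorm1 : σ * ‖x (k+1) - w (k+1)‖ ≤ ‖gradient f (w (k+1)) + y k‖ := by
      rw [hGy]
      have hexp : ‖-(σ • (x (k+1) - w (k+1))) - Q (k+1) (x (k+1) - w (k+1))‖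
          = ‖σ • (x (k+1) - w (k+1)) + Q (k+1) (x (k+1) - w (k+1))‖ := by
        rw [show -(σ • (x (k+1) - w (k+1))) - Q (k+1) (x (k+1) - w (k+1))
            = -(σ • (x (k+1) - w (k+1)) + Q (k+1) (x (k+1) - w (k+1))) by abel, norm_neg]
      rw [hexp]
      have h2 : (σ * ‖x (k+1) - w (k+1)‖)^2 ≤
          ‖σ • (x (k+1) - w (k+1)) + Q (k+1) (x (k+1) - w (k+1))‖^2 := by
        rw [norm_add_sq_real, real_inner_smul_left, norm_smul, Real.norm_eq_abs,
          abs_of_nonneg hσpos.le]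
        have h3 : ⟪x (k+1) - w (k+1), Q (k+1) (x (k+1) - w (k+1))⟫
            = ⟪Q (k+1) (x (k+1) - w (k+1)), x (k+1) - w (k+1)⟫ := real_inner_comm _ _
        rw [h3]
        nlinarith [sq_nonneg ‖Q (k+1) (x (k+1) - w (k+1))‖]
      have h4 := Real.sqrt_le_sqrt h2
      rwa [Real.sqrt_sq (by positivity), Real.sqrt_sq (norm_nonneg _)] at h4
    have hGG : ‖gradient f (w (k+1)) + y k‖ ≤ β * ‖w (k+1) - w k‖ + lam * ‖x k - w k‖ := by
      rw [hyk]
      have h1 : gradient f (w (k+1)) + (-gradient f (w k) - Q k (x k - w k)) =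
          (gradient f (w (k+1)) - gradient f (w k)) - Q k (x k - w k) := by abel
      rw [h1]
      refine (norm_sub_le _ _).trans ?_
      have h4 := hLip (w (k+1)) (hBN hw2B) (w k) (hBN hw1B)
      have h5 : ‖Q k (x k - w k)‖ ≤ lam * ‖x k - w k‖ :=
        le_trans ((Q k).le_opNorm _) (mul_le_mul_of_nonneg_right (hQ k) (norm_nonneg _))
      linarith
    have hkey : σ * ‖x (k+1) - w (k+1)‖ ≤ β * ‖w (k+1) - w k‖ + lam * ‖x k - w k‖ :=
      le_trans hnorm1 hGG
    have hEs : ‖x k - w k‖ ≤ Real.sqrt α := (Real.le_sqrt hE0 hαnn).mpr hE2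
    have hΔw : ‖w (k+1) - w k‖ ≤ Real.sqrt n := by
      have h1 : ‖w (k+1) - w k‖^2 ≤ (n:ℝ) := by
        rw [EuclideanSpace.norm_eq, Real.sq_sqrt (by positivity)]
        calc ∑ i, ‖(w (k+1) - w k) i‖ ^ 2 ≤ ∑ _i : Fin n, (1:ℝ) := by
              apply Finset.sum_le_sum
              intro i _
              have h2 := hBmem _ hw2B i
              have h3 := hBmem _ hw1B i
              have h4 : (w (k+1) - w k) i = w (k+1) i - w k i := by simp
              rw [h4, Real.norm_eq_abs, sq_abs]
              nlinarith only [h2.1, h2.2, h3.1, h3.2]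
        _ = (n:ℝ) := by simp
      exact (Real.le_sqrt (norm_nonneg _) (by positivity)).mpr h1
    have hAsm : ‖x (k+1) - w (k+1)‖ ≤ (Real.sqrt n + Real.sqrt α) / 8 := by
      have h1 : β * ‖w (k+1) - w k‖ ≤ σ/8 * Real.sqrt n :=
        mul_le_mul hβσ hΔw (norm_nonneg _) (by positivity)
      have h2 : lam * ‖x k - w k‖ ≤ σ/8 * Real.sqrt α :=
        mul_le_mul hlamσ hEs hE0 (by positivity)
      have h3 : σ * ‖x (k+1) - w (k+1)‖ ≤ σ * ((Real.sqrt n + Real.sqrt α) / 8) := by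
        linarith only [hkey, h1, h2]
      exact le_of_mul_le_mul_left h3 hσpos
    have hx2N : x (k+1) ∈ Nset := by
      rw [hN]
      simp only [Set.mem_setOf_eq]
      intro i
      have h6 : |x (k+1) i| ≤ |w (k+1) i| + |x (k+1) i - w (k+1) i| := by
        calc |x (k+1) i| = |w (k+1) i + (x (k+1) i - w (k+1) i)| := by ring_nf
        _ ≤ |w (k+1) i| + |x (k+1) i - w (k+1) i| := abs_add_le _ _
      have h7 : |x (k+1) i - w (k+1) i| ≤ ‖x (k+1) - w (k+1)‖ := by
        have h7' := hcoord (x (k+1) - w (k+1)) i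
        have h7'' : (x (k+1) - w (k+1)) i = x (k+1) i - w (k+1) i := by simp
        rwa [h7''] at h7'
      have h8 := hBmem _ hw2B i
      have h9 : |w (k+1) i| ≤ 1 := abs_le.mpr ⟨by linarith [h8.1], h8.2⟩
      linarith [hAsm]
    have h7AD : 7 * ‖x (k+1) - w (k+1)‖ ≤ ‖x (k+1) - x k‖ + 2 * ‖x k - w k‖ := by
      have h1 : w (k+1) - w k = (x (k+1) - x k) - (x (k+1) - w (k+1)) + (x k - w k) := by abel
      have h2 : ‖w (k+1) - w k‖ ≤ ‖x (k+1) - x k‖ + ‖x (k+1) - w (k+1)‖ + ‖x k - w k‖ := by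
        rw [h1]
        refine (norm_add_le _ _).trans ?_
        have h3 := norm_sub_le (x (k+1) - x k) (x (k+1) - w (k+1))
        linarith
      have h4 : β * ‖w (k+1) - w k‖ ≤
          σ/8 * (‖x (k+1) - x k‖ + ‖x (k+1) - w (k+1)‖ + ‖x k - w k‖) :=
        mul_le_mul hβσ h2 (norm_nonneg _) (by positivity)
      have h5 : lam * ‖x k - w k‖ ≤ σ/8 * ‖x k - w k‖ :=
        mul_le_mul_of_nonneg_right hlamσ hE0
      have h6 : σ * (7 * ‖x (k+1) - w (k+1)‖) ≤
          σ * (‖x (k+1) - x k‖ + 2 * ‖x k - w k‖) := by linarith only [hkey, h4, h5]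
      exact le_of_mul_le_mul_left h6 hσpos
    -- descent lemma bounds
    have hw2N := hBN hw2B
    have hup := (abs_le.mp (hDL (w (k+1)) hw2N (x (k+1)) hx2N)).2
    have hlo := (abs_le.mp (hDL (w (k+1)) hw2N (x k) hx1N)).1
    have hT1 := (hwStep k).2 (w k) hw1B
    have hy2a : ⟪y (k+1), x (k+1) - w (k+1)⟫ =
        ⟪y k, x (k+1) - w (k+1)⟫ + σ * ‖x (k+1) - w (k+1)‖^2 := by
      rw [hyStep k, inner_add_left, real_inner_smul_left, real_inner_self_eq_norm_sq]
    have habd : (x (k+1) - w (k+1)) - (x k - w (k+1)) = x (k+1) - x k := by abel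
    have h9 : ⟪gradient f (w (k+1)), x (k+1) - w (k+1)⟫ -
        ⟪gradient f (w (k+1)), x k - w (k+1)⟫ =
        ⟪gradient f (w (k+1)), x (k+1) - x k⟫ := by
      rw [← inner_sub_right, habd]
    have h9' : ⟪y k, x (k+1) - w (k+1)⟫ - ⟪y k, x k - w (k+1)⟫ = ⟪y k, x (k+1) - x k⟫ := by
      rw [← inner_sub_right, habd]
    have h8 : ⟪gradient f (w (k+1)), x (k+1) - x k⟫ + ⟪y k, x (k+1) - x k⟫ =
        -(σ * ⟪x (k+1) - w (k+1), x (k+1) - x k⟫) -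
        ⟪Q (k+1) (x (k+1) - w (k+1)), x (k+1) - x k⟫ := by
      rw [← inner_add_left, hGy, inner_sub_left, inner_neg_left, real_inner_smul_left]
    have hbd : ‖x k - w (k+1)‖^2 = ‖x (k+1) - w (k+1)‖^2 -
        2 * ⟪x (k+1) - w (k+1), x (k+1) - x k⟫ + ‖x (k+1) - x k‖^2 := by
      rw [show x k - w (k+1) = (x (k+1) - w (k+1)) - (x (k+1) - x k) by abel, norm_sub_sq_real]
    have hbdσ : σ/2 * ‖x k - w (k+1)‖^2 = σ/2 * ‖x (k+1) - w (k+1)‖^2 -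
        σ * ⟪x (k+1) - w (k+1), x (k+1) - x k⟫ + σ/2 * ‖x (k+1) - x k‖^2 := by
      rw [hbd]; ring
    have hQad : -⟪Q (k+1) (x (k+1) - w (k+1)), x (k+1) - x k⟫ ≤
        lam * (‖x (k+1) - w (k+1)‖ * ‖x (k+1) - x k‖) := by
      have h1 := abs_real_inner_le_norm (Q (k+1) (x (k+1) - w (k+1))) (x (k+1) - x k)
      have h2 : ‖Q (k+1) (x (k+1) - w (k+1))‖ ≤ lam * ‖x (k+1) - w (k+1)‖ :=
        le_trans ((Q (k+1)).le_opNorm _) (mul_le_mul_of_nonneg_right (hQ (k+1)) (norm_nonneg _))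
      have h3 := neg_abs_le ⟪Q (k+1) (x (k+1) - w (k+1)), x (k+1) - x k⟫
      have h4 : ‖Q (k+1) (x (k+1) - w (k+1))‖ * ‖x (k+1) - x k‖ ≤
          lam * ‖x (k+1) - w (k+1)‖ * ‖x (k+1) - x k‖ :=
        mul_le_mul_of_nonneg_right h2 hD0
      calc -⟪Q (k+1) (x (k+1) - w (k+1)), x (k+1) - x k⟫
          ≤ |⟪Q (k+1) (x (k+1) - w (k+1)), x (k+1) - x k⟫| := neg_le_abs _
      _ ≤ ‖Q (k+1) (x (k+1) - w (k+1))‖ * ‖x (k+1) - x k‖ := h1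
      _ ≤ lam * ‖x (k+1) - w (k+1)‖ * ‖x (k+1) - x k‖ := h4
      _ = lam * (‖x (k+1) - w (k+1)‖ * ‖x (k+1) - x k‖) := by ring
    have hble : ‖x k - w (k+1)‖ ≤ ‖x (k+1) - w (k+1)‖ + ‖x (k+1) - x k‖ := by
      rw [show x k - w (k+1) = (x (k+1) - w (k+1)) - (x (k+1) - x k) by abel]
      exact norm_sub_le _ _
    have hble2 : ‖x k - w (k+1)‖^2 ≤ (‖x (k+1) - w (k+1)‖ + ‖x (k+1) - x k‖)^2 :=
      pow_le_pow_left₀ (norm_nonneg _) hble 2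
    have hμb' : μ (k+1) * φ (w (k+1)) ≤ μ k * φ (w (k+1)) +
        ρ * σ * ‖x (k+1) - w (k+1)‖^2 := by linarith [hμincr k]
    -- product bounds
    have c1 : β/2 * ‖x (k+1) - w (k+1)‖^2 ≤ σ/16 * ‖x (k+1) - w (k+1)‖^2 :=
      mul_le_mul_of_nonneg_right (by linarith) (sq_nonneg _)
    have c2a : β/2 * ‖x k - w (k+1)‖^2 ≤ σ/16 * ‖x k - w (k+1)‖^2 :=
      mul_le_mul_of_nonneg_right (by linarith) (sq_nonneg _)
    have c2b : σ/16 * ‖x k - w (k+1)‖^2 ≤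
        σ/16 * (‖x (k+1) - w (k+1)‖ + ‖x (k+1) - x k‖)^2 :=
      mul_le_mul_of_nonneg_left hble2 (by positivity)
    have c3 : lam * (‖x (k+1) - w (k+1)‖ * ‖x (k+1) - x k‖) ≤
        σ/8 * (‖x (k+1) - w (k+1)‖ * ‖x (k+1) - x k‖) :=
      mul_le_mul_of_nonneg_right hlamσ (mul_nonneg hA0 hD0)
    have c4 : ρ * σ * ‖x (k+1) - w (k+1)‖^2 ≤ 1/6 * σ * ‖x (k+1) - w (k+1)‖^2 :=
      mul_le_mul_of_nonneg_right (mul_le_mul_of_nonneg_right hρ.2 hσpos.le) (sq_nonneg _)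
    -- pure numeric inequality
    have hpure : (1/16) * ‖x (k+1) - w (k+1)‖^2 +
        (1/16) * (‖x (k+1) - w (k+1)‖ + ‖x (k+1) - x k‖)^2 +
        (1/8) * (‖x (k+1) - w (k+1)‖ * ‖x (k+1) - x k‖) +
        (1/6) * ‖x (k+1) - w (k+1)‖^2 + (11/8) * ‖x (k+1) - w (k+1)‖^2 -
        (1/2) * ‖x (k+1) - x k‖^2 - (3/8) * ‖x k - w k‖^2 ≤
        -(1/8) * ‖x (k+1) - x k‖^2 := by
      nlinarith only [mul_le_mul h7AD h7AD (by positivity) (by positivity),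
        mul_le_mul_of_nonneg_right h7AD hD0, sq_nonneg (‖x (k+1) - x k‖ - ‖x k - w k‖),
        mul_nonneg hA0 hD0, mul_nonneg hD0 hE0, mul_nonneg hA0 hE0, hA0, hD0, hE0,
        sq_nonneg ‖x (k+1) - w (k+1)‖]
    have hscaled := mul_le_mul_of_nonneg_left hpure hσpos.le
    have hdesc : Ltil (k+1) - Ltil k ≤ -(σ/8) * ‖x (k+1) - x k‖^2 := by
      simp only [hLtil]
      linarith only [hup, hlo, hT1, hy2a.le, hy2a.ge, h9.le, h9.ge, h9'.le, h9'.ge,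
        h8.le, h8.ge, hbdσ.le, hbdσ.ge, hQad, hμb', c1, c2a, c2b, c3, c4, hscaled]
    have hLk1 : Ltil (k+1) ≤ f (w 0) := by
      have hDD : 0 ≤ σ/8 * ‖x (k+1) - x k‖^2 := by positivity
      linarith only [hdesc, hDD, hLle]
    have hA2α : ‖x (k+1) - w (k+1)‖^2 ≤ α := by
      have hfw2 := hfBle _ hw2B
      have hlow2 := hlow (k+1) hw2B hx2N
      rw [hα, le_div_iff₀ hσpos]
      nlinarith only [hlow2, hLk1, hfw2]
    exact ⟨⟨hw2B, hx2N, hA2α, hLk1⟩, hdesc⟩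
  have inv : ∀ k, w k ∈ B ∧ x k ∈ Nset ∧ ‖x k - w k‖^2 ≤ α ∧ Ltil k ≤ f (w 0) := by
    intro k
    induction k with
    | zero =>
      refine ⟨hw0B, hx0 ▸ hBN hw0B, ?_, hL0.le⟩
      rw [hx0, sub_self]
      simpa using hαnn
    | succ k ih => exact (step k ih.1 ih.2.1 ih.2.2.1 ih.2.2.2).1
  constructor
  · intro k
    obtain ⟨h1, h2, h3, h4⟩ := inv k
    refine ⟨⟨h1, ?_⟩, h2⟩
    have h5 := hlow k h1 h2
    rw [norm_sub_rev]
    linarith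
  · intro k
    obtain ⟨h1, h2, h3, h4⟩ := inv k
    exact (step k h1 h2 h3 h4).2
end

section
/- (Theorem 4, part 1.) Under the ShaPeak algorithm setup and the assumption that ∇f is Lipschitz continuous on N with constant β: the sequences {L(w^k, x^k, y^k; μ_k)} and {L̃^k} converge to the same value, the sequence {μ_k} converges, and ‖w^{k+1} − w^k‖ → 0, ‖x^{k+1} − x^k‖ → 0, ‖y^{k+1} − y^k‖ → 0, and ‖w^k − x^k‖ → 0 as k → ∞. -/
open Set Filter
open scoped RealInnerProductSpace

lemma shapeak_taylor {E : Type*} [NormedAddCommGroup E] [InnerProductSpace ℝ E] [CompleteSpace E]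
    {f : E → ℝ} (hf : ContDiff ℝ 1 f) {s : Set E} (hs : Convex ℝ s) {β : ℝ}
    (hβ0 : 0 ≤ β) (hLip : ∀ u ∈ s, ∀ v ∈ s, ‖gradient f u - gradient f v‖ ≤ β * ‖u - v‖)
    {u v : E} (hu : u ∈ s) (hv : v ∈ s) :
    |f v - f u - ⟪gradient f u, v - u⟫| ≤ β * ‖v - u‖^2 := by
  set c := gradient f u with hc
  have hdiff : ∀ z : E, HasFDerivAt (fun w => f w - ⟪c, w⟫)
      (InnerProductSpace.toDual ℝ E (gradient f z) - InnerProductSpace.toDual ℝ E c) z := by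
    intro z
    have h1 : HasFDerivAt f (InnerProductSpace.toDual ℝ E (gradient f z)) z :=
      ((hf.differentiable one_ne_zero) z).hasGradientAt.hasFDerivAt
    have h2 : HasFDerivAt (fun w => ⟪c, w⟫) (InnerProductSpace.toDual ℝ E c) z :=
      (InnerProductSpace.toDual ℝ E c).hasFDerivAt
    exact h1.sub h2
  have hseg : segment ℝ u v ⊆ s := hs.segment_subset hu hv
  have hbound : ∀ z ∈ segment ℝ u v,
      ‖InnerProductSpace.toDual ℝ E (gradient f z) - InnerProductSpace.toDual ℝ E c‖
        ≤ β * ‖v - u‖ := by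
    intro z hz
    rw [← map_sub, (InnerProductSpace.toDual ℝ E).norm_map]
    have h1 : ‖gradient f z - c‖ ≤ β * ‖z - u‖ := hLip z (hseg hz) u hu
    have h2 : ‖z - u‖ ≤ ‖v - u‖ := by
      obtain ⟨a, b, ha, hb, hab, rfl⟩ := hz
      have : a • u + b • v - u = b • (v - u) := by
        rw [smul_sub]; rw [show a = 1 - b by linarith]; module
      rw [this, norm_smul, Real.norm_eq_abs, abs_of_nonneg hb]
      nlinarith [norm_nonneg (v - u)]
    calc ‖gradient f z - c‖ ≤ β * ‖z - u‖ := h1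
      _ ≤ β * ‖v - u‖ := by nlinarith
  have key := (convex_segment u v).norm_image_sub_le_of_norm_hasFDerivWithin_le
    (fun z _ => (hdiff z).hasFDerivWithinAt) hbound (left_mem_segment ℝ u v)
    (right_mem_segment ℝ u v)
  have heq : (f v - ⟪c, v⟫) - (f u - ⟪c, u⟫) = f v - f u - ⟪c, v - u⟫ := by
    rw [inner_sub_right]; ring
  rw [← Real.norm_eq_abs, ← heq]
  calc ‖(f v - ⟪c, v⟫) - (f u - ⟪c, u⟫)‖ ≤ β * ‖v - u‖ * ‖v - u‖ := key
    _ = β * ‖v - u‖^2 := by ring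

lemma shapeak_quad {E : Type*} [NormedAddCommGroup E] [InnerProductSpace ℝ E]
    {Qm : E →L[ℝ] E} (hsym : ∀ p q : E, ⟪Qm p, q⟫ = ⟪p, Qm q⟫)
    (hpsd : ∀ p, 0 ≤ ⟪Qm p, p⟫) {σ : ℝ} (u v : E) :
    ⟪-(σ • v) - Qm v, v⟫ + σ/2*‖v‖^2 + (1/2)*⟪Qm v, v⟫ + σ/2*‖u - v‖^2
      ≤ ⟪-(σ • v) - Qm v, u⟫ + σ/2*‖u‖^2 + (1/2)*⟪Qm u, u⟫ := by
  have hp := hpsd (u - v)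
  have hs := hsym u v
  have hsv := hsym v u
  simp only [map_sub, inner_sub_left, inner_sub_right] at hp
  have e1 : ⟪-(σ • v) - Qm v, v⟫ = -(σ * ⟪v, v⟫) - ⟪Qm v, v⟫ := by
    rw [inner_sub_left, inner_neg_left, real_inner_smul_left]
  have e2 : ⟪-(σ • v) - Qm v, u⟫ = -(σ * ⟪v, u⟫) - ⟪Qm v, u⟫ := by
    rw [inner_sub_left, inner_neg_left, real_inner_smul_left]
  have n1 : ‖v‖^2 = ⟪v, v⟫ := (real_inner_self_eq_norm_sq v).symm
  have n2 : ‖u‖^2 = ⟪u, u⟫ := (real_inner_self_eq_norm_sq u).symm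
  have n3 : ‖u - v‖^2 = ⟪u, u⟫ - 2*⟪v, u⟫ + ⟪v, v⟫ := by
    rw [← real_inner_self_eq_norm_sq]
    simp only [inner_sub_left, inner_sub_right]
    rw [real_inner_comm v u]; ring
  have hcuv : ⟪u, v⟫ = ⟪v, u⟫ := real_inner_comm v u
  have hqc : ⟪u, Qm v⟫ = ⟪Qm v, u⟫ := real_inner_comm (Qm v) u
  have hqc2 : ⟪v, Qm u⟫ = ⟪Qm u, v⟫ := real_inner_comm (Qm u) v
  rw [e1, e2, n1, n2, n3]
  linarith

set_option maxHeartbeats 2000000 in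
theorem stmt12 (n : ℕ) (hn : 1 ≤ n)
    (B : Set (EuclideanSpace ℝ (Fin n)))
    (hB : B = {v : EuclideanSpace ℝ (Fin n) | ∀ i, v i ∈ Icc (0:ℝ) 1})
    (g : ℝ → ℝ)
    (hg_lsc : LowerSemicontinuousOn g (Icc (0:ℝ) 1))
    (hg_nn : ∀ t ∈ Icc (0:ℝ) 1, 0 ≤ g t)
    (hg_zero : ∀ t ∈ Icc (0:ℝ) 1, (g t = 0 ↔ t = 0 ∨ t = 1))
    (φ : EuclideanSpace ℝ (Fin n) → ℝ) (hφ : φ = fun v => ∑ i, g (v i))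
    (f : EuclideanSpace ℝ (Fin n) → ℝ) (hf : ContDiff ℝ 1 f)
    (fB : ℝ) (hfB : IsLeast (f '' B) fB)
    (lam β σ η ρ ε μ₀ : ℝ) (k₀ : ℕ)
    (hlam : 0 < lam) (hβ : 0 < β) (hσ : 8 * max lam β ≤ σ)
    (hη : 1 < η) (hρ : ρ ∈ Ioc (0:ℝ) (1/6)) (hε : 0 < ε)
    (hk₀ : 1 ≤ k₀) (hμ₀ : 0 < μ₀)
    (w x y : ℕ → EuclideanSpace ℝ (Fin n)) (μ : ℕ → ℝ)
    (Q : ℕ → EuclideanSpace ℝ (Fin n) →L[ℝ] EuclideanSpace ℝ (Fin n))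
    (hQsa : ∀ k, IsSelfAdjoint (Q k)) (hQpsd : ∀ k v, 0 ≤ ⟪Q k v, v⟫)
    (hQ : ∀ k, ‖Q k‖ ≤ lam)
    (hw0 : ∀ i, (w 0) i = 0 ∨ (w 0) i = 1) (hx0 : x 0 = w 0)
    (hy0 : y 0 = -gradient f (w 0)) (hμinit : μ 0 = μ₀)
    (hwStep : ∀ k, w (k+1) ∈ B ∧ ∀ u ∈ B,
      μ k * φ (w (k+1)) + ⟪y k, x k - w (k+1)⟫ + σ/2 * ‖x k - w (k+1)‖^2 ≤
      μ k * φ u + ⟪y k, x k - u⟫ + σ/2 * ‖x k - u‖^2)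
    (hxStep : ∀ k, σ • (w (k+1) - x (k+1)) + Q (k+1) (w (k+1) - x (k+1)) =
      gradient f (w (k+1)) + y k)
    (hyStep : ∀ k, y (k+1) = y k + σ • (x (k+1) - w (k+1)))
    (hμStep : ∀ k : ℕ, μ (k+1) =
      if (k+1) % k₀ = 0 ∧ φ (w (k+1)) ≠ 0 then
        μ k + min ((η - 1) * μ k) (ρ * σ * ‖x (k+1) - w (k+1)‖^2 / (φ (w (k+1)) + ε))
      else μ k)
    (α : ℝ) (hα : α = 2 * (f (w 0) - fB) / σ)
    (Nset : Set (EuclideanSpace ℝ (Fin n)))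
    (hN : Nset = {v | ∀ i, |v i| ≤ 1 + (Real.sqrt n + Real.sqrt α) / 8})
    (hLip : ∀ u ∈ Nset, ∀ v ∈ Nset, ‖gradient f u - gradient f v‖ ≤ β * ‖u - v‖)
    (Ltil : ℕ → ℝ)
    (hLtil : Ltil = fun k =>
      (f (x k) + μ k * φ (w k) + ⟪y k, x k - w k⟫ + σ/2 * ‖x k - w k‖^2) +
        3*σ/8 * ‖x k - w k‖^2) :
    ∃ Lstar μinf : ℝ,
      Tendsto (fun k => f (x k) + μ k * φ (w k) + ⟪y k, x k - w k⟫ +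
        σ/2 * ‖x k - w k‖^2) atTop (nhds Lstar) ∧
      Tendsto Ltil atTop (nhds Lstar) ∧
      Tendsto μ atTop (nhds μinf) ∧
      Tendsto (fun k => ‖w (k+1) - w k‖) atTop (nhds 0) ∧
      Tendsto (fun k => ‖x (k+1) - x k‖) atTop (nhds 0) ∧
      Tendsto (fun k => ‖y (k+1) - y k‖) atTop (nhds 0) ∧
      Tendsto (fun k => ‖w k - x k‖) atTop (nhds 0) := by
  have hσpos : 0 < σ := lt_of_lt_of_le (by positivity) hσ
  have hlamσ : lam ≤ σ/8 := by
    have := le_max_left lam β; linarith [hσ]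
  have hβσ : β ≤ σ/8 := by
    have := le_max_right lam β; linarith [hσ]
  have hρpos : 0 < ρ := hρ.1
  have hρ6 : ρ ≤ 1/6 := hρ.2
  -- membership of iterates
  have hwB : ∀ k, w k ∈ B := by
    intro k
    cases k with
    | zero =>
      rw [hB]
      intro i
      rcases hw0 i with h | h <;> rw [h] <;> constructor <;> norm_num
    | succ k => exact (hwStep k).1
  have hfBle : ∀ v ∈ B, fB ≤ f v := fun v hv => hfB.2 ⟨v, hv, rfl⟩
  have hφnn : ∀ v ∈ B, 0 ≤ φ v := by
    intro v hv
    rw [hφ]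
    exact Finset.sum_nonneg fun i _ => hg_nn _ (by rw [hB] at hv; exact hv i)
  have hφ0 : φ (w 0) = 0 := by
    rw [hφ]
    apply Finset.sum_eq_zero
    intro i _
    rcases hw0 i with h | h <;> rw [h]
    · exact (hg_zero 0 (by norm_num)).2 (Or.inl rfl)
    · exact (hg_zero 1 (by norm_num)).2 (Or.inr rfl)
  have hα0 : 0 ≤ α := by
    rw [hα]
    have h := hfBle (w 0) (hwB 0)
    apply div_nonneg <;> linarith
  have coord : ∀ (v : EuclideanSpace ℝ (Fin n)) (i : Fin n), |v i| ≤ ‖v‖ := by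
    intro v i
    rw [EuclideanSpace.norm_eq]
    have h1 : ‖v i‖^2 ≤ ∑ j, ‖v j‖^2 :=
      Finset.single_le_sum (fun j _ => sq_nonneg ‖v j‖) (Finset.mem_univ i)
    calc |v i| = Real.sqrt (‖v i‖^2) := by
          rw [Real.sqrt_sq (norm_nonneg _), Real.norm_eq_abs]
      _ ≤ _ := Real.sqrt_le_sqrt h1
  have hBN : B ⊆ Nset := by
    intro v hv
    rw [hN]
    intro i
    rw [hB] at hv
    have h := hv i
    have h1 : |v i| ≤ 1 := abs_le.2 ⟨by linarith [h.1], h.2⟩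
    have : (0:ℝ) ≤ Real.sqrt n + Real.sqrt α := by positivity
    linarith
  have hNc : Convex ℝ Nset := by
    rw [hN]
    intro p hp q hq a b ha hb hab
    intro i
    have : (a • p + b • q) i = a * p i + b * q i := rfl
    rw [this]
    calc |a * p i + b * q i| ≤ |a * p i| + |b * q i| := abs_add_le _ _
      _ = a * |p i| + b * |q i| := by
          rw [abs_mul, abs_mul, abs_of_nonneg ha, abs_of_nonneg hb]
      _ ≤ a * (1 + (Real.sqrt n + Real.sqrt α) / 8) +
          b * (1 + (Real.sqrt n + Real.sqrt α) / 8) := by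
          have := hp i; have := hq i
          gcongr
      _ = 1 + (Real.sqrt n + Real.sqrt α) / 8 := by rw [← add_mul, hab, one_mul]
  have taylor : ∀ u ∈ Nset, ∀ v ∈ Nset,
      |f v - f u - ⟪gradient f u, v - u⟫| ≤ β * ‖v - u‖^2 :=
    fun u hu v hv => shapeak_taylor hf hNc hβ.le hLip hu hv
  have hQsym : ∀ k (p q : EuclideanSpace ℝ (Fin n)), ⟪Q k p, q⟫ = ⟪p, Q k q⟫ :=
    fun k => ((ContinuousLinearMap.isSelfAdjoint_iff_isSymmetric).1 (hQsa k))
  have hQnorm : ∀ k (v : EuclideanSpace ℝ (Fin n)), ‖Q k v‖ ≤ lam * ‖v‖ := by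
    intro k v
    calc ‖Q k v‖ ≤ ‖Q k‖ * ‖v‖ := (Q k).le_opNorm v
      _ ≤ lam * ‖v‖ := by gcongr; exact hQ k
  have hQle : ∀ k (v : EuclideanSpace ℝ (Fin n)), ⟪Q k v, v⟫ ≤ lam * ‖v‖^2 := by
    intro k v
    calc ⟪Q k v, v⟫ ≤ ‖Q k v‖ * ‖v‖ := real_inner_le_norm _ _
      _ ≤ lam * ‖v‖ * ‖v‖ := by gcongr; exact hQnorm k v
      _ = lam * ‖v‖^2 := by ring
  -- y in terms of gradient
  have hyF : ∀ k, y k = -(Q k (x k - w k)) - gradient f (w k) := by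
    intro k
    cases k with
    | zero =>
      rw [hy0, hx0]
      simp
    | succ k =>
      have h := hxStep k
      have hyk : y k = σ • (w (k+1) - x (k+1)) + Q (k+1) (w (k+1) - x (k+1))
          - gradient f (w (k+1)) := by rw [h]; abel
      rw [hyStep k, hyk,
        show w (k+1) - x (k+1) = -(x (k+1) - w (k+1)) by abel, map_neg, smul_neg]
      abel
  have hwd : ∀ k, ‖w (k+1) - w k‖ ≤ Real.sqrt n := by
    intro k
    have h1 := hwB (k+1); have h2 := hwB k
    rw [hB] at h1 h2
    rw [EuclideanSpace.norm_eq]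
    have hle : ∑ i, ‖(w (k+1) - w k) i‖^2 ≤ (n:ℝ) := by
      calc ∑ i, ‖(w (k+1) - w k) i‖^2 ≤ ∑ _i : Fin n, (1:ℝ) := by
            apply Finset.sum_le_sum
            intro i _
            have ha := h1 i; have hb := h2 i
            have hii : (w (k+1) - w k) i = w (k+1) i - w k i := rfl
            rw [hii, Real.norm_eq_abs, sq_abs]
            nlinarith [ha.1, ha.2, hb.1, hb.2]
        _ = (n:ℝ) := by simp
    exact Real.sqrt_le_sqrt hle
  have hrec : ∀ k, σ * ‖x (k+1) - w (k+1)‖ ≤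
      β * ‖w (k+1) - w k‖ + lam * ‖x k - w k‖ := by
    intro k
    set v := w (k+1) - x (k+1) with hv
    have hnv : ‖v‖ = ‖x (k+1) - w (k+1)‖ := by rw [hv, norm_sub_rev]
    have hkey : σ * ‖v‖ ≤ ‖σ • v + Q (k+1) v‖ := by
      have h1 : σ * ‖v‖^2 ≤ ⟪σ • v + Q (k+1) v, v⟫ := by
        rw [inner_add_left, real_inner_smul_left, real_inner_self_eq_norm_sq]
        have := hQpsd (k+1) v
        linarith
      have h2 : ⟪σ • v + Q (k+1) v, v⟫ ≤ ‖σ • v + Q (k+1) v‖ * ‖v‖ :=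
        real_inner_le_norm _ _
      rcases eq_or_lt_of_le (norm_nonneg v) with h | h
      · rw [← h]; simp [norm_nonneg]
      · nlinarith
    have hS : σ • v + Q (k+1) v =
        gradient f (w (k+1)) - gradient f (w k) - Q k (x k - w k) := by
      rw [hv, hxStep k, hyF k]; abel
    have hnorm : ‖gradient f (w (k+1)) - gradient f (w k) - Q k (x k - w k)‖ ≤
        β * ‖w (k+1) - w k‖ + lam * ‖x k - w k‖ := by
      calc ‖gradient f (w (k+1)) - gradient f (w k) - Q k (x k - w k)‖
          ≤ ‖gradient f (w (k+1)) - gradient f (w k)‖ + ‖Q k (x k - w k)‖ :=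
            norm_sub_le _ _
        _ ≤ β * ‖w (k+1) - w k‖ + lam * ‖x k - w k‖ := by
            gcongr
            · exact hLip _ (hBN (hwB (k+1))) _ (hBN (hwB k))
            · exact hQnorm k _
    rw [← hnv]
    calc σ * ‖v‖ ≤ ‖σ • v + Q (k+1) v‖ := hkey
      _ = _ := by rw [hS]
      _ ≤ _ := hnorm
  have hrecn : ∀ k, ‖x (k+1) - w (k+1)‖ ≤ (Real.sqrt n + ‖x k - w k‖)/8 := by
    intro k
    have h1 : β * ‖w (k+1) - w k‖ ≤ σ/8 * Real.sqrt n :=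
      mul_le_mul hβσ (hwd k) (norm_nonneg _) (by linarith)
    have h2 : lam * ‖x k - w k‖ ≤ σ/8 * ‖x k - w k‖ :=
      mul_le_mul_of_nonneg_right hlamσ (norm_nonneg _)
    have h3 : σ * ‖x (k+1) - w (k+1)‖ ≤ σ * ((Real.sqrt n + ‖x k - w k‖)/8) := by
      linarith [hrec k]
    exact le_of_mul_le_mul_left h3 hσpos
  have hrecs : ∀ k, ‖x (k+1) - w (k+1)‖ ≤
      2/7 * ‖x k - w k‖ + 1/7 * ‖x (k+1) - x k‖ := by
    intro k
    have htri : ‖w (k+1) - w k‖ ≤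
        ‖x (k+1) - w (k+1)‖ + ‖x (k+1) - x k‖ + ‖x k - w k‖ := by
      have e : w (k+1) - w k = (w (k+1) - x (k+1)) + (x (k+1) - x k) + (x k - w k) := by
        abel
      rw [e]
      refine le_trans (norm_add_le _ _) ?_
      have h := norm_add_le (w (k+1) - x (k+1)) (x (k+1) - x k)
      rw [norm_sub_rev (w (k+1)) (x (k+1))] at h
      linarith
    have hb1 : β * ‖w (k+1) - w k‖ ≤
        σ/8 * (‖x (k+1) - w (k+1)‖ + ‖x (k+1) - x k‖ + ‖x k - w k‖) :=
      mul_le_mul hβσ htri (norm_nonneg _) (by linarith)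
    have h2 : lam * ‖x k - w k‖ ≤ σ/8 * ‖x k - w k‖ :=
      mul_le_mul_of_nonneg_right hlamσ (norm_nonneg _)
    have h3 : σ * ‖x (k+1) - w (k+1)‖ ≤
        σ * (2/7 * ‖x k - w k‖ + 1/7 * ‖x (k+1) - x k‖) := by
      linarith [hrec k]
    exact le_of_mul_le_mul_left h3 hσpos
  have hμstep : ∀ k, 0 < μ k → μ k ≤ μ (k+1) := by
    intro k hk
    rw [hμStep k]
    split_ifs with h
    · have h1 : 0 ≤ (η - 1) * μ k := by nlinarith
      have h2 : 0 ≤ ρ * σ * ‖x (k+1) - w (k+1)‖^2 / (φ (w (k+1)) + ε) := by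
        apply div_nonneg
        · exact mul_nonneg (mul_nonneg hρpos.le hσpos.le) (sq_nonneg _)
        · linarith [hφnn _ (hwB (k+1))]
      have := le_min h1 h2
      linarith
    · exact le_refl _
  have hμpos : ∀ k, 0 < μ k := by
    intro k
    induction k with
    | zero => rw [hμinit]; exact hμ₀
    | succ k ih => exact lt_of_lt_of_le ih (hμstep k ih)
  have hμpm : ∀ k, 0 < μ k ∧ μ k ≤ μ (k+1) := fun k => ⟨hμpos k, hμstep k (hμpos k)⟩
  have hμinc : ∀ k, (μ (k+1) - μ k) * φ (w (k+1)) ≤ ρ*σ*‖x (k+1) - w (k+1)‖^2 ∧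
      μ (k+1) - μ k ≤ ρ*σ/ε*‖x (k+1) - w (k+1)‖^2 := by
    intro k
    have hφk : 0 ≤ φ (w (k+1)) := hφnn _ (hwB (k+1))
    have hA : 0 ≤ ρ * σ * ‖x (k+1) - w (k+1)‖^2 :=
      mul_nonneg (mul_nonneg hρpos.le hσpos.le) (sq_nonneg _)
    rw [hμStep k]
    split_ifs with h
    · have hcancel : μ k + min ((η - 1) * μ k)
          (ρ * σ * ‖x (k+1) - w (k+1)‖^2 / (φ (w (k+1)) + ε)) - μ k =
          min ((η - 1) * μ k)
          (ρ * σ * ‖x (k+1) - w (k+1)‖^2 / (φ (w (k+1)) + ε)) := by ring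
      rw [hcancel]
      have h1 : min ((η - 1) * μ k)
          (ρ * σ * ‖x (k+1) - w (k+1)‖^2 / (φ (w (k+1)) + ε)) ≤
          ρ * σ * ‖x (k+1) - w (k+1)‖^2 / (φ (w (k+1)) + ε) := min_le_right _ _
      have hden : (0:ℝ) < φ (w (k+1)) + ε := by linarith
      constructor
      · refine le_trans (mul_le_mul_of_nonneg_right h1 hφk) ?_
        rw [div_mul_eq_mul_div, div_le_iff₀ hden]
        nlinarith
      · refine le_trans h1 ?_
        rw [div_le_iff₀ hden]
        have : ρ*σ/ε*‖x (k+1) - w (k+1)‖^2 * (φ (w (k+1)) + ε) =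
            ρ*σ*‖x (k+1) - w (k+1)‖^2 * ((φ (w (k+1)) + ε)/ε) := by
          field_simp
        rw [this]
        have hge : (1:ℝ) ≤ (φ (w (k+1)) + ε)/ε := by
          rw [le_div_iff₀ hε]; linarith
        nlinarith
    · have hB2 : 0 ≤ ρ*σ/ε*‖x (k+1) - w (k+1)‖^2 :=
        mul_nonneg (div_nonneg (mul_nonneg hρpos.le hσpos.le) hε.le) (sq_nonneg _)
      constructor
      · simp only [sub_self, zero_mul]; exact hA
      · simp only [sub_self]; exact hB2
  have lower : ∀ k, x k ∈ Nset → fB + σ/2*‖x k - w k‖^2 ≤ Ltil k := by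
    intro k hxkN
    have hwkN : w k ∈ Nset := hBN (hwB k)
    have ht := taylor (w k) hwkN (x k) hxkN
    rw [abs_le] at ht
    have hin : ⟪y k, x k - w k⟫ =
        -⟪Q k (x k - w k), x k - w k⟫ - ⟪gradient f (w k), x k - w k⟫ := by
      rw [hyF k, inner_sub_left, inner_neg_left]
    have hq := hQle k (x k - w k)
    have hμφ : 0 ≤ μ k * φ (w k) := mul_nonneg (hμpm k).1.le (hφnn _ (hwB k))
    have hfwk : fB ≤ f (w k) := hfBle _ (hwB k)
    have hb : β * ‖x k - w k‖^2 ≤ σ/8 * ‖x k - w k‖^2 :=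
      mul_le_mul_of_nonneg_right hβσ (sq_nonneg _)
    have hl : lam * ‖x k - w k‖^2 ≤ σ/8 * ‖x k - w k‖^2 :=
      mul_le_mul_of_nonneg_right hlamσ (sq_nonneg _)
    have hnn : 0 ≤ σ * ‖x k - w k‖^2 := mul_nonneg hσpos.le (sq_nonneg _)
    simp only [hLtil]
    rw [hin]
    linarith [ht.1]
  have descent : ∀ k, x k ∈ Nset → x (k+1) ∈ Nset →
      Ltil (k+1) ≤ Ltil k - σ/24*(‖x k - w k‖^2 + ‖x (k+1) - x k‖^2) := by
    intro k hx0N hx1N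
    have hWN : w (k+1) ∈ Nset := hBN (hwB (k+1))
    have st1 := (hwStep k).2 (w k) (hwB k)
    have hG : -(σ • (x (k+1) - w (k+1))) - Q (k+1) (x (k+1) - w (k+1))
        = gradient f (w (k+1)) + y k := by
      rw [← hxStep k,
        show w (k+1) - x (k+1) = -(x (k+1) - w (k+1)) by abel, map_neg, smul_neg]
      abel
    have quad := shapeak_quad (hQsym (k+1)) (fun p => hQpsd (k+1) p) (σ := σ)
      (x k - w (k+1)) (x (k+1) - w (k+1))
    rw [hG] at quad
    rw [show (x k - w (k+1)) - (x (k+1) - w (k+1)) = x k - x (k+1) by abel] at quad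
    rw [norm_sub_rev (x k) (x (k+1))] at quad
    simp only [inner_add_left] at quad
    have t1 := taylor (w (k+1)) hWN (x (k+1)) hx1N
    have t0 := taylor (w (k+1)) hWN (x k) hx0N
    rw [abs_le] at t1 t0
    have qb := hQle (k+1) (x k - w (k+1))
    have qp := hQpsd (k+1) (x (k+1) - w (k+1))
    have st3 : ⟪y (k+1), x (k+1) - w (k+1)⟫ =
        ⟪y k, x (k+1) - w (k+1)⟫ + σ * ‖x (k+1) - w (k+1)‖^2 := by
      rw [hyStep k, inner_add_left, real_inner_smul_left, real_inner_self_eq_norm_sq]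
    have st4 := (hμinc k).1
    have hXW : ‖x k - w (k+1)‖^2 ≤
        2*‖x (k+1) - x k‖^2 + 2*‖x (k+1) - w (k+1)‖^2 := by
      have htri : ‖x k - w (k+1)‖ ≤ ‖x k - x (k+1)‖ + ‖x (k+1) - w (k+1)‖ := by
        have e : x k - w (k+1) = (x k - x (k+1)) + (x (k+1) - w (k+1)) := by abel
        rw [e]; exact norm_add_le _ _
      rw [norm_sub_rev (x k) (x (k+1))] at htri
      have hsq := pow_le_pow_left₀ (norm_nonneg (x k - w (k+1))) htri 2
      nlinarith [hsq, sq_nonneg (‖x (k+1) - x k‖ - ‖x (k+1) - w (k+1)‖)]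
    have ha1sq : ‖x (k+1) - w (k+1)‖^2 ≤
        8/49*‖x k - w k‖^2 + 2/49*‖x (k+1) - x k‖^2 := by
      have hsq := pow_le_pow_left₀ (norm_nonneg (x (k+1) - w (k+1))) (hrecs k) 2
      nlinarith [hsq, sq_nonneg (2*‖x k - w k‖ - ‖x (k+1) - x k‖)]
    have pb1 : β * ‖x (k+1) - w (k+1)‖^2 ≤ σ/8 * ‖x (k+1) - w (k+1)‖^2 :=
      mul_le_mul_of_nonneg_right hβσ (sq_nonneg _)
    have pb0 : β * ‖x k - w (k+1)‖^2 ≤ σ/8 * ‖x k - w (k+1)‖^2 :=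
      mul_le_mul_of_nonneg_right hβσ (sq_nonneg _)
    have pb2 : lam * ‖x k - w (k+1)‖^2 ≤ σ/8 * ‖x k - w (k+1)‖^2 :=
      mul_le_mul_of_nonneg_right hlamσ (sq_nonneg _)
    have pb3 : ρ*σ*‖x (k+1) - w (k+1)‖^2 ≤ 1/6*(σ*‖x (k+1) - w (k+1)‖^2) := by
      have h0 : 0 ≤ σ*‖x (k+1) - w (k+1)‖^2 := mul_nonneg hσpos.le (sq_nonneg _)
      have := mul_le_mul_of_nonneg_right hρ6 h0
      nlinarith
    have pb4 : σ * ‖x (k+1) - w (k+1)‖^2 ≤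
        σ*(8/49*‖x k - w k‖^2 + 2/49*‖x (k+1) - x k‖^2) :=
      mul_le_mul_of_nonneg_left ha1sq hσpos.le
    have pb5 : σ * ‖x k - w (k+1)‖^2 ≤
        σ*(2*‖x (k+1) - x k‖^2 + 2*‖x (k+1) - w (k+1)‖^2) :=
      mul_le_mul_of_nonneg_left hXW hσpos.le
    simp only [hLtil]
    rw [st3]
    linarith [st1, quad, t1.2, t0.1, qb, qp, st4, pb0, pb1, pb2, pb3, pb4, pb5]
  have hL0 : Ltil 0 = f (w 0) := by
    rw [hLtil]
    simp only [hx0, hφ0, hμinit, sub_self, inner_zero_right, norm_zero]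
    ring
  have hxN : ∀ k, ‖x k - w k‖ ≤ (Real.sqrt n + Real.sqrt α)/8 → x k ∈ Nset := by
    intro k hk
    rw [hN]
    intro i
    have h1 : |(x k - w k) i| ≤ ‖x k - w k‖ := coord _ i
    have h2 : (x k - w k) i = x k i - w k i := rfl
    have h3 := hwB k
    rw [hB] at h3
    have h4 := h3 i
    have h6 : |x k i| ≤ |w k i| + |x k i - w k i| := by
      have heq : x k i = w k i + (x k i - w k i) := by ring
      conv_lhs => rw [heq]
      exact abs_add_le _ _
    have h5 : |w k i| ≤ 1 := abs_le.2 ⟨by linarith [h4.1], h4.2⟩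
    rw [h2] at h1
    linarith
  have main : ∀ k, x k ∈ Nset ∧ ‖x k - w k‖ ≤ Real.sqrt α ∧ Ltil k ≤ f (w 0) := by
    intro k
    induction k with
    | zero =>
      refine ⟨by rw [hx0]; exact hBN (hwB 0), ?_, le_of_eq hL0⟩
      rw [hx0, sub_self, norm_zero]
      exact Real.sqrt_nonneg α
    | succ k ih =>
      obtain ⟨hxkN, hak, hLk⟩ := ih
      have ha1 : ‖x (k+1) - w (k+1)‖ ≤ (Real.sqrt n + Real.sqrt α)/8 := by
        have h1 := hrecn k
        have h2 : (Real.sqrt n + ‖x k - w k‖)/8 ≤ (Real.sqrt n + Real.sqrt α)/8 := by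
          linarith
        linarith
      have hx1N : x (k+1) ∈ Nset := hxN _ ha1
      have hdes := descent k hxkN hx1N
      have hnn2 : 0 ≤ σ/24*(‖x k - w k‖^2 + ‖x (k+1) - x k‖^2) :=
        mul_nonneg (by linarith) (by positivity)
      have hLk1 : Ltil (k+1) ≤ f (w 0) := by linarith
      refine ⟨hx1N, ?_, hLk1⟩
      have hlow := lower (k+1) hx1N
      have hsq : ‖x (k+1) - w (k+1)‖^2 ≤ α := by
        rw [hα, le_div_iff₀ hσpos]
        nlinarith
      have h5 := Real.sqrt_le_sqrt hsq
      rw [Real.sqrt_sq (norm_nonneg _)] at h5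
      exact h5
  -- global consequences
  have haN : ∀ k, x k ∈ Nset := fun k => (main k).1
  have hdesc : ∀ k, Ltil (k+1) ≤ Ltil k - σ/24*(‖x k - w k‖^2 + ‖x (k+1) - x k‖^2) :=
    fun k => descent k (haN k) (haN (k+1))
  have hnn : ∀ k, 0 ≤ σ/24*(‖x k - w k‖^2 + ‖x (k+1) - x k‖^2) :=
    fun k => mul_nonneg (by linarith) (by positivity)
  have hanti : Antitone Ltil := antitone_nat_of_succ_le (fun k => by linarith [hdesc k, hnn k])
  have hlb : ∀ k, fB ≤ Ltil k := by
    intro k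
    have h := lower k (haN k)
    nlinarith [mul_nonneg hσpos.le (sq_nonneg ‖x k - w k‖)]
  have hbdd : BddBelow (range Ltil) := ⟨fB, by rintro z ⟨k, rfl⟩; exact hlb k⟩
  have hLconv : Tendsto Ltil atTop (nhds (⨅ k, Ltil k)) := tendsto_atTop_ciInf hanti hbdd
  have hLconv' : Tendsto (fun k => Ltil (k+1)) atTop (nhds (⨅ k, Ltil k)) :=
    hLconv.comp (tendsto_add_atTop_nat 1)
  have hgap : Tendsto (fun k => Ltil k - Ltil (k+1)) atTop (nhds 0) := by
    have h := hLconv.sub hLconv'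
    simpa using h
  have hsq0 : Tendsto (fun k => ‖x k - w k‖^2 + ‖x (k+1) - x k‖^2) atTop (nhds 0) := by
    have h1 : ∀ k, σ/24*(‖x k - w k‖^2 + ‖x (k+1) - x k‖^2) ≤ Ltil k - Ltil (k+1) :=
      fun k => by linarith [hdesc k]
    have h2 : Tendsto (fun k => σ/24*(‖x k - w k‖^2 + ‖x (k+1) - x k‖^2)) atTop (nhds 0) :=
      squeeze_zero hnn h1 hgap
    have h3 := h2.const_mul (24/σ)
    have h4 : (fun k => 24/σ * (σ/24*(‖x k - w k‖^2 + ‖x (k+1) - x k‖^2))) =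
        fun k => ‖x k - w k‖^2 + ‖x (k+1) - x k‖^2 := by
      funext k
      field_simp
    rw [h4] at h3
    simpa using h3
  have ha2 : Tendsto (fun k => ‖x k - w k‖^2) atTop (nhds 0) :=
    squeeze_zero (fun k => sq_nonneg _)
      (fun k => by linarith [sq_nonneg ‖x (k+1) - x k‖]) hsq0
  have hs2 : Tendsto (fun k => ‖x (k+1) - x k‖^2) atTop (nhds 0) :=
    squeeze_zero (fun k => sq_nonneg _)
      (fun k => by linarith [sq_nonneg ‖x k - w k‖]) hsq0
  have haconv : Tendsto (fun k => ‖x k - w k‖) atTop (nhds 0) := by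
    have h2 : Tendsto (fun k => Real.sqrt (‖x k - w k‖^2)) atTop (nhds (Real.sqrt 0)) :=
      (Real.continuous_sqrt.tendsto 0).comp ha2
    have h3 : (fun k => Real.sqrt (‖x k - w k‖^2)) = fun k => ‖x k - w k‖ := by
      funext k; exact Real.sqrt_sq (norm_nonneg _)
    rw [h3] at h2
    simpa using h2
  have hsconv : Tendsto (fun k => ‖x (k+1) - x k‖) atTop (nhds 0) := by
    have h2 : Tendsto (fun k => Real.sqrt (‖x (k+1) - x k‖^2)) atTop (nhds (Real.sqrt 0)) :=
      (Real.continuous_sqrt.tendsto 0).comp hs2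
    have h3 : (fun k => Real.sqrt (‖x (k+1) - x k‖^2)) = fun k => ‖x (k+1) - x k‖ := by
      funext k; exact Real.sqrt_sq (norm_nonneg _)
    rw [h3] at h2
    simpa using h2
  have haconv' : Tendsto (fun k => ‖x (k+1) - w (k+1)‖) atTop (nhds 0) :=
    haconv.comp (tendsto_add_atTop_nat 1)
  -- μ convergence
  have hμmono : Monotone μ := monotone_nat_of_le_succ (fun k => (hμpm k).2)
  have hTel : ∀ K, σ/24 * (∑ j ∈ Finset.range K, ‖x (j+1) - w (j+1)‖^2) ≤
      Ltil 0 - Ltil (K+1) := by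
    intro K
    induction K with
    | zero =>
      simp only [Finset.range_zero, Finset.sum_empty, mul_zero]
      linarith [hdesc 0, hnn 0]
    | succ K ih =>
      rw [Finset.sum_range_succ]
      have h := hdesc (K+1)
      have h2 : 0 ≤ σ/24 * ‖x (K+1+1) - x (K+1)‖^2 :=
        mul_nonneg (by linarith) (sq_nonneg _)
      have h3 : σ/24*‖x (K+1) - w (K+1)‖^2 ≤ Ltil (K+1) - Ltil (K+1+1) := by
        nlinarith
      have hexp : σ/24 * (∑ j ∈ Finset.range K, ‖x (j+1) - w (j+1)‖^2 +
          ‖x (K+1) - w (K+1)‖^2) =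
          σ/24 * (∑ j ∈ Finset.range K, ‖x (j+1) - w (j+1)‖^2) +
          σ/24 * ‖x (K+1) - w (K+1)‖^2 := by ring
      rw [hexp]
      linarith
  have hSa : ∀ K, ∑ j ∈ Finset.range K, ‖x (j+1) - w (j+1)‖^2 ≤
      24/σ * (f (w 0) - fB) := by
    intro K
    have h1 := hTel K
    have h2 := hlb (K+1)
    rw [hL0] at h1
    have h3 : σ/24 * (∑ j ∈ Finset.range K, ‖x (j+1) - w (j+1)‖^2) ≤ f (w 0) - fB := by
      linarith
    have h4 := mul_le_mul_of_nonneg_left h3 (by positivity : (0:ℝ) ≤ 24/σ)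
    calc ∑ j ∈ Finset.range K, ‖x (j+1) - w (j+1)‖^2
        = 24/σ * (σ/24 * (∑ j ∈ Finset.range K, ‖x (j+1) - w (j+1)‖^2)) := by
          field_simp
      _ ≤ 24/σ * (f (w 0) - fB) := h4
  have hμb : ∀ K, μ K ≤ μ₀ + ρ*σ/ε * (∑ j ∈ Finset.range K, ‖x (j+1) - w (j+1)‖^2) := by
    intro K
    induction K with
    | zero => simp [hμinit]
    | succ K ih =>
      rw [Finset.sum_range_succ]
      have h := (hμinc K).2
      have hexp : μ₀ + ρ*σ/ε * (∑ j ∈ Finset.range K, ‖x (j+1) - w (j+1)‖^2 +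
          ‖x (K+1) - w (K+1)‖^2) =
          (μ₀ + ρ*σ/ε * (∑ j ∈ Finset.range K, ‖x (j+1) - w (j+1)‖^2)) +
          ρ*σ/ε * ‖x (K+1) - w (K+1)‖^2 := by ring
      rw [hexp]
      linarith
  have hρσε : 0 ≤ ρ*σ/ε := div_nonneg (mul_nonneg hρpos.le hσpos.le) hε.le
  have hμbdd : BddAbove (range μ) := by
    refine ⟨μ₀ + ρ*σ/ε * (24/σ * (f (w 0) - fB)), ?_⟩
    rintro z ⟨K, rfl⟩
    have h1 := hμb K
    have h2 := mul_le_mul_of_nonneg_left (hSa K) hρσε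
    linarith
  have hμconv : Tendsto μ atTop (nhds (⨆ k, μ k)) := tendsto_atTop_ciSup hμmono hμbdd
  -- assemble
  refine ⟨⨅ k, Ltil k, ⨆ k, μ k, ?_, hLconv, hμconv, ?_, hsconv, ?_, ?_⟩
  · have heq : (fun k => f (x k) + μ k * φ (w k) + ⟪y k, x k - w k⟫ +
        σ/2 * ‖x k - w k‖^2) = fun k => Ltil k - 3*σ/8 * ‖x k - w k‖^2 := by
      funext k
      simp only [hLtil]
      ring
    rw [heq]
    have h2 : Tendsto (fun k => 3*σ/8 * ‖x k - w k‖^2) atTop (nhds 0) := by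
      have := ha2.const_mul (3*σ/8)
      simpa using this
    have h3 := hLconv.sub h2
    simpa using h3
  · -- w diff
    have hb : ∀ k, ‖w (k+1) - w k‖ ≤
        ‖x (k+1) - w (k+1)‖ + ‖x (k+1) - x k‖ + ‖x k - w k‖ := by
      intro k
      have e : w (k+1) - w k = (w (k+1) - x (k+1)) + (x (k+1) - x k) + (x k - w k) := by
        abel
      rw [e]
      refine le_trans (norm_add_le _ _) ?_
      have h := norm_add_le (w (k+1) - x (k+1)) (x (k+1) - x k)
      rw [norm_sub_rev (w (k+1)) (x (k+1))] at h
      linarith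
    have hsum : Tendsto (fun k => ‖x (k+1) - w (k+1)‖ + ‖x (k+1) - x k‖ + ‖x k - w k‖)
        atTop (nhds 0) := by
      have := (haconv'.add hsconv).add haconv
      simpa using this
    exact squeeze_zero (fun k => norm_nonneg _) hb hsum
  · -- y diff
    have heq : (fun k => ‖y (k+1) - y k‖) = fun k => σ * ‖x (k+1) - w (k+1)‖ := by
      funext k
      rw [hyStep k]
      rw [show y k + σ • (x (k+1) - w (k+1)) - y k = σ • (x (k+1) - w (k+1)) by abel]
      rw [norm_smul, Real.norm_eq_abs, abs_of_pos hσpos]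
    rw [heq]
    have := haconv'.const_mul σ
    simpa using this
  · -- w k - x k
    have heq : (fun k => ‖w k - x k‖) = fun k => ‖x k - w k‖ :=
      funext fun k => norm_sub_rev _ _
    rw [heq]
    exact haconv
end

section
/- (Theorem 4, part 2.) Under the ShaPeak algorithm setup and the assumption that ∇f is Lipschitz continuous on N with constant β: the sequence {μ_k} converges to some μ_∞ > 0, and every accumulation point x^∞ of the sequence {x^k} lies in B and is a P-stationary point with constant 1/σ of the problem min_{x∈B} f(x) + μ_∞ φ(x); that is, x^∞ minimizes z ↦ (1/2)‖z − (x^∞ − (1/σ)∇f(x^∞))‖² + (μ_∞/σ)φ(z) over B. -/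
set_option linter.unusedSectionVars false
set_option linter.unusedVariables false
set_option maxHeartbeats 1000000
open Set Filter
open scoped RealInnerProductSpace


section aux
variable {F : Type*} [NormedAddCommGroup F] [InnerProductSpace ℝ F] [CompleteSpace F]

lemma shp_hasDerivAt_line (f : F → ℝ) (hf : ContDiff ℝ 1 f) (a b : F) (t : ℝ) :
    HasDerivAt (fun s : ℝ => f (a + s • (b - a)))
      ⟪gradient f (a + t • (b - a)), b - a⟫ t := by
  have hγ : HasDerivAt (fun s : ℝ => a + s • (b - a)) (b - a) t := by
    simpa using ((hasDerivAt_id t).smul_const (b - a)).const_add a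
  have hd := ((hf.differentiable one_ne_zero) (a + t • (b - a))).hasGradientAt.hasFDerivAt
  have := hd.comp_hasDerivAt t hγ
  exact this

lemma shp_taylor (f : F → ℝ) (hf : ContDiff ℝ 1 f) (β : ℝ) (hβ : 0 ≤ β) (s : Set F)
    (hs : Convex ℝ s)
    (hLip : ∀ u ∈ s, ∀ v ∈ s, ‖gradient f u - gradient f v‖ ≤ β * ‖u - v‖)
    {a b : F} (ha : a ∈ s) (hb : b ∈ s) :
    |f b - f a - ⟪gradient f a, b - a⟫| ≤ β * ‖b - a‖ ^ 2 := by
  obtain ⟨c, hc, hceq⟩ := exists_hasDerivAt_eq_slope (fun t : ℝ => f (a + t • (b - a)))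
    (fun t => ⟪gradient f (a + t • (b - a)), b - a⟫) (by norm_num : (0:ℝ) < 1)
    (fun t _ => (shp_hasDerivAt_line f hf a b t).continuousAt.continuousWithinAt)
    (fun t _ => shp_hasDerivAt_line f hf a b t)
  have hmem : a + c • (b - a) ∈ s := by
    obtain ⟨hc1, hc2⟩ := hc
    have := hs ha hb (by linarith : (0:ℝ) ≤ 1 - c) (le_of_lt hc1) (by ring)
    convert this using 1
    module
  have h1 : f b - f a = ⟪gradient f (a + c • (b - a)), b - a⟫ := by
    have he1 : a + (1:ℝ) • (b - a) = b := by module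
    have he0 : a + (0:ℝ) • (b - a) = a := by module
    rw [he1, he0] at hceq
    rw [hceq]; norm_num
  rw [h1]
  have h2 : ⟪gradient f (a + c • (b - a)), b - a⟫ - ⟪gradient f a, b - a⟫
      = ⟪gradient f (a + c • (b - a)) - gradient f a, b - a⟫ := by
    rw [inner_sub_left]
  rw [h2]
  calc |⟪gradient f (a + c • (b - a)) - gradient f a, b - a⟫|
      ≤ ‖gradient f (a + c • (b - a)) - gradient f a‖ * ‖b - a‖ := abs_real_inner_le_norm _ _
    _ ≤ (β * ‖(a + c • (b - a)) - a‖) * ‖b - a‖ := by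
        gcongr; exact hLip _ hmem _ ha
    _ ≤ (β * (1 * ‖b - a‖)) * ‖b - a‖ := by
        gcongr
        · have hrw : a + c • (b - a) - a = c • (b - a) := by module
          rw [hrw, norm_smul, Real.norm_eq_abs, abs_of_pos hc.1, one_mul]
          have := hc.2
          nlinarith [norm_nonneg (b - a)]
    _ = β * ‖b - a‖ ^ 2 := by ring

lemma shp_sa_inner (Q : F →L[ℝ] F) (h : IsSelfAdjoint Q) (v u : F) : ⟪Q v, u⟫ = ⟪v, Q u⟫ := by
  conv_lhs => rw [← ContinuousLinearMap.isSelfAdjoint_iff'.mp h]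
  exact ContinuousLinearMap.adjoint_inner_left Q u v

lemma shp_inner_Q_le (lam : ℝ) (Q : F →L[ℝ] F) (hQ : ‖Q‖ ≤ lam) (v : F) :
    ⟪Q v, v⟫ ≤ lam * ‖v‖ ^ 2 := by
  calc ⟪Q v, v⟫ ≤ ‖Q v‖ * ‖v‖ := real_inner_le_norm _ _
    _ ≤ (‖Q‖ * ‖v‖) * ‖v‖ := by gcongr; exact Q.le_opNorm v
    _ ≤ (lam * ‖v‖) * ‖v‖ := by have := norm_nonneg v; gcongr
    _ = lam * ‖v‖ ^ 2 := by ring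

lemma shp_norm_lower (σ : ℝ) (hσ : 0 ≤ σ) (Q : F →L[ℝ] F) (hpsd : ∀ v, 0 ≤ ⟪Q v, v⟫) (v : F) :
    σ * ‖v‖ ≤ ‖σ • v + Q v‖ := by
  rcases eq_or_ne v 0 with rfl | hv
  · simp
  · have hvpos : 0 < ‖v‖ := norm_pos_iff.mpr hv
    have h1 : σ * ‖v‖ ^ 2 ≤ ⟪σ • v + Q v, v⟫ := by
      rw [inner_add_left, real_inner_smul_left, real_inner_self_eq_norm_sq]
      nlinarith [hpsd v]
    have h2 : ⟪σ • v + Q v, v⟫ ≤ ‖σ • v + Q v‖ * ‖v‖ := real_inner_le_norm _ _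
    nlinarith

lemma shp_quad (σ : ℝ) (Q : F →L[ℝ] F) (hsa : IsSelfAdjoint Q) (u' e : F) :
    (⟪-(σ • u') - Q u', u'⟫ + σ/2 * ‖u'‖^2 + 1/2 * ⟪Q u', u'⟫) + σ/2 * ‖e‖^2 + 1/2 * ⟪Q e, e⟫
    = ⟪-(σ • u') - Q u', u' + e⟫ + σ/2 * ‖u' + e‖^2 + 1/2 * ⟪Q (u' + e), u' + e⟫ := by
  have hsw : ⟪Q u', e⟫ = ⟪u', Q e⟫ := shp_sa_inner Q hsa u' e
  have hip : ⟪u', Q e⟫ = ⟪Q e, u'⟫ := real_inner_comm _ _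
  simp only [norm_add_sq_real, inner_sub_left, inner_add_left, inner_add_right, inner_neg_left,
    real_inner_smul_left, map_add]
  nlinarith [hsw, hip]
end aux

lemma shp_coord_le {n : ℕ} (v : EuclideanSpace ℝ (Fin n)) (i : Fin n) : |v i| ≤ ‖v‖ := by
  rw [EuclideanSpace.norm_eq]
  have h1 : |v i| = Real.sqrt (|v i|^2) := by rw [Real.sqrt_sq_eq_abs, abs_abs]
  rw [h1]
  apply Real.sqrt_le_sqrt
  have : |v i| ^ 2 = ‖v i‖ ^ 2 := by rw [Real.norm_eq_abs]
  rw [this]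
  exact Finset.single_le_sum (f := fun j => ‖v j‖ ^ 2) (fun j _ => by positivity) (Finset.mem_univ i)

lemma shp_norm_le_sqrt {n : ℕ} (v : EuclideanSpace ℝ (Fin n)) (h : ∀ i, |v i| ≤ 1) :
    ‖v‖ ≤ Real.sqrt n := by
  rw [EuclideanSpace.norm_eq]
  apply Real.sqrt_le_sqrt
  calc ∑ i, ‖v i‖ ^ 2 ≤ ∑ _i : Fin n, (1:ℝ) := by
        apply Finset.sum_le_sum
        intro i _
        have := h i
        rw [Real.norm_eq_abs]
        nlinarith [abs_nonneg (v i)]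
    _ = n := by simp

lemma shp_convex {n : ℕ} (r : ℝ) : Convex ℝ {v : EuclideanSpace ℝ (Fin n) | ∀ i, |v i| ≤ r} := by
  intro p hp q hq a b ha hb hab
  intro i
  have hpi := hp i
  have hqi := hq i
  have : (a • p + b • q) i = a * p i + b * q i := rfl
  rw [this]
  calc |a * p i + b * q i| ≤ |a * p i| + |b * q i| := abs_add_le _ _
    _ = a * |p i| + b * |q i| := by rw [abs_mul, abs_mul, abs_of_nonneg ha, abs_of_nonneg hb]
    _ ≤ a * r + b * r := by gcongr
    _ = r := by rw [show a * r + b * r = (a + b) * r by ring, hab, one_mul]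

lemma shp_closedB {n : ℕ} : IsClosed {v : EuclideanSpace ℝ (Fin n) | ∀ i, v i ∈ Icc (0:ℝ) 1} := by
  have : {v : EuclideanSpace ℝ (Fin n) | ∀ i, v i ∈ Icc (0:ℝ) 1}
      = ⋂ i, (EuclideanSpace.proj (𝕜 := ℝ) i) ⁻¹' (Icc (0:ℝ) 1) := by
    ext v; simp [EuclideanSpace.proj]
  rw [this]
  exact isClosed_iInter fun i => isClosed_Icc.preimage (EuclideanSpace.proj i).continuous


lemma shp_sq2 {a b c : ℝ} (h : a ≤ b + c) (ha : 0 ≤ a) (hb : 0 ≤ b) (hc : 0 ≤ c) :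
    a^2 ≤ 2*b^2 + 2*c^2 := by nlinarith [sq_nonneg (b - c)]

lemma shp_sq3 {a b c : ℝ} (h : 7*a ≤ b + 2*c) (ha : 0 ≤ a) (hb : 0 ≤ b) (hc : 0 ≤ c) :
    49*a^2 ≤ 2*b^2 + 8*c^2 := by nlinarith [sq_nonneg (b - 2*c)]

theorem stmt13 (n : ℕ) (hn : 1 ≤ n)
    (B : Set (EuclideanSpace ℝ (Fin n)))
    (hB : B = {v : EuclideanSpace ℝ (Fin n) | ∀ i, v i ∈ Icc (0:ℝ) 1})
    (g : ℝ → ℝ)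
    (hg_lsc : LowerSemicontinuousOn g (Icc (0:ℝ) 1))
    (hg_nn : ∀ t ∈ Icc (0:ℝ) 1, 0 ≤ g t)
    (hg_zero : ∀ t ∈ Icc (0:ℝ) 1, (g t = 0 ↔ t = 0 ∨ t = 1))
    (φ : EuclideanSpace ℝ (Fin n) → ℝ) (hφ : φ = fun v => ∑ i, g (v i))
    (f : EuclideanSpace ℝ (Fin n) → ℝ) (hf : ContDiff ℝ 1 f)
    (fB : ℝ) (hfB : IsLeast (f '' B) fB)
    (lam β σ η ρ ε μ₀ : ℝ) (k₀ : ℕ)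
    (hlam : 0 < lam) (hβ : 0 < β) (hσ : 8 * max lam β ≤ σ)
    (hη : 1 < η) (hρ : ρ ∈ Ioc (0:ℝ) (1/6)) (hε : 0 < ε)
    (hk₀ : 1 ≤ k₀) (hμ₀ : 0 < μ₀)
    (w x y : ℕ → EuclideanSpace ℝ (Fin n)) (μ : ℕ → ℝ)
    (Q : ℕ → EuclideanSpace ℝ (Fin n) →L[ℝ] EuclideanSpace ℝ (Fin n))
    (hQsa : ∀ k, IsSelfAdjoint (Q k)) (hQpsd : ∀ k v, 0 ≤ ⟪Q k v, v⟫)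
    (hQ : ∀ k, ‖Q k‖ ≤ lam)
    (hw0 : ∀ i, (w 0) i = 0 ∨ (w 0) i = 1) (hx0 : x 0 = w 0)
    (hy0 : y 0 = -gradient f (w 0)) (hμinit : μ 0 = μ₀)
    (hwStep : ∀ k, w (k+1) ∈ B ∧ ∀ u ∈ B,
      μ k * φ (w (k+1)) + ⟪y k, x k - w (k+1)⟫ + σ/2 * ‖x k - w (k+1)‖^2 ≤
      μ k * φ u + ⟪y k, x k - u⟫ + σ/2 * ‖x k - u‖^2)
    (hxStep : ∀ k, σ • (w (k+1) - x (k+1)) + Q (k+1) (w (k+1) - x (k+1)) =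
      gradient f (w (k+1)) + y k)
    (hyStep : ∀ k, y (k+1) = y k + σ • (x (k+1) - w (k+1)))
    (hμStep : ∀ k : ℕ, μ (k+1) =
      if (k+1) % k₀ = 0 ∧ φ (w (k+1)) ≠ 0 then
        μ k + min ((η - 1) * μ k) (ρ * σ * ‖x (k+1) - w (k+1)‖^2 / (φ (w (k+1)) + ε))
      else μ k)
    (α : ℝ) (hα : α = 2 * (f (w 0) - fB) / σ)
    (Nset : Set (EuclideanSpace ℝ (Fin n)))
    (hN : Nset = {v | ∀ i, |v i| ≤ 1 + (Real.sqrt n + Real.sqrt α) / 8})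
    (hLip : ∀ u ∈ Nset, ∀ v ∈ Nset, ‖gradient f u - gradient f v‖ ≤ β * ‖u - v‖) :
    ∃ μinf : ℝ, Tendsto μ atTop (nhds μinf) ∧ 0 < μinf ∧
      ∀ xinf : EuclideanSpace ℝ (Fin n), MapClusterPt xinf atTop x →
        xinf ∈ B ∧ ∀ z ∈ B,
          (1/2) * ‖xinf - (xinf - (1/σ) • gradient f xinf)‖^2 + (μinf/σ) * φ xinf ≤
          (1/2) * ‖z - (xinf - (1/σ) • gradient f xinf)‖^2 + (μinf/σ) * φ z := by
  -- basic facts about σ, lam, β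
  have hσ8lam : 8 * lam ≤ σ := le_trans (by nlinarith [le_max_left lam β]) hσ
  have hσ8β : 8 * β ≤ σ := le_trans (by nlinarith [le_max_right lam β]) hσ
  have hσpos : 0 < σ := by nlinarith
  -- membership facts
  have hw0B : w 0 ∈ B := by
    rw [hB]; intro i; rcases hw0 i with h | h <;> rw [h] <;> constructor <;> norm_num
  have hwB : ∀ k, w k ∈ B := by
    intro k; cases k with
    | zero => exact hw0B
    | succ k => exact (hwStep k).1
  have hfBle : ∀ v ∈ B, fB ≤ f v := fun v hv => hfB.2 ⟨v, hv, rfl⟩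
  have hφnn : ∀ v ∈ B, 0 ≤ φ v := by
    intro v hv; rw [hφ]
    exact Finset.sum_nonneg fun i _ => hg_nn _ (by rw [hB] at hv; exact hv i)
  have hφw0 : φ (w 0) = 0 := by
    rw [hφ]
    apply Finset.sum_eq_zero
    intro i _
    have hi : (w 0) i ∈ Icc (0:ℝ) 1 := by rw [hB] at hw0B; exact hw0B i
    exact (hg_zero _ hi).2 (hw0 i)
  have hαnn : 0 ≤ α := by
    rw [hα]
    have h := hfBle (w 0) hw0B
    apply div_nonneg (by linarith) (by linarith)
  have hrnn : 0 ≤ (Real.sqrt n + Real.sqrt α) / 8 := by positivity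
  have hBN : B ⊆ Nset := by
    intro v hv
    rw [hB] at hv; rw [hN]
    intro i
    have := hv i
    rw [abs_le]
    constructor <;> [linarith [this.1, hrnn]; linarith [this.2, hrnn]]
  have hconvN : Convex ℝ Nset := by rw [hN]; exact shp_convex _
  have hxN : ∀ k, ‖x k - w k‖ ≤ (Real.sqrt n + Real.sqrt α) / 8 → x k ∈ Nset := by
    intro k hk
    rw [hN]; intro i
    have h1 : |(x k) i - (w k) i| ≤ ‖x k - w k‖ := shp_coord_le (x k - w k) i
    have h2 : (w k) i ∈ Icc (0:ℝ) 1 := by have := hwB k; rw [hB] at this; exact this i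
    have := abs_sub_abs_le_abs_sub ((x k) i) ((w k) i)
    have h3 : |(w k) i| ≤ 1 := by rw [abs_le]; exact ⟨by linarith [h2.1], h2.2⟩
    calc |(x k) i| ≤ |(w k) i| + |(x k) i - (w k) i| := by
          have := abs_add_le ((w k) i) ((x k) i - (w k) i)
          simpa using this
      _ ≤ 1 + (Real.sqrt n + Real.sqrt α) / 8 := by linarith
  have htaylor : ∀ a ∈ Nset, ∀ b ∈ Nset,
      |f b - f a - ⟪gradient f a, b - a⟫| ≤ β * ‖b - a‖ ^ 2 :=
    fun a ha b hb => shp_taylor f hf β (le_of_lt hβ) Nset hconvN hLip ha hb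
  -- μ monotonicity and positivity
  have hφε : ∀ k, 0 < φ (w k) + ε := fun k => by
    have := hφnn (w k) (hwB k); linarith
  have hμub : ∀ k, μ k ≤ μ (k+1) ∨ ¬ (0 < μ k) := fun k => by
    by_cases hpos : 0 < μ k
    · left
      rw [hμStep k]
      split
      · have h1 : 0 ≤ (η - 1) * μ k := by nlinarith
        have h2 : 0 ≤ ρ * σ * ‖x (k+1) - w (k+1)‖^2 / (φ (w (k+1)) + ε) := by
          apply div_nonneg _ (le_of_lt (hφε (k+1)))
          have := hρ.1
          positivity
        have := le_min h1 h2
        linarith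
      · exact le_refl _
    · right; exact hpos
  have hμmono : ∀ k, μ₀ ≤ μ k ∧ μ k ≤ μ (k+1) := by
    intro k
    induction k with
    | zero =>
      have h0 : μ₀ ≤ μ 0 := le_of_eq hμinit.symm
      rcases hμub 0 with h | h
      · exact ⟨h0, h⟩
      · exact absurd (lt_of_lt_of_le hμ₀ h0) h
    | succ k ih =>
      have h0 : μ₀ ≤ μ (k+1) := le_trans ih.1 ih.2
      rcases hμub (k+1) with h | h
      · exact ⟨h0, h⟩
      · exact absurd (lt_of_lt_of_le hμ₀ h0) h
  have hμpos : ∀ k, 0 < μ k := fun k => lt_of_lt_of_le hμ₀ (hμmono k).1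
  -- identity for y
  have hI1 : ∀ k, y k = -gradient f (w k) - Q k (x k - w k) := by
    intro k
    cases k with
    | zero =>
      rw [hy0, hx0, sub_self, map_zero]
      abel
    | succ k =>
      have h1 := hxStep k
      have h2 := hyStep k
      have h3 : y k = σ • (w (k+1) - x (k+1)) + Q (k+1) (w (k+1) - x (k+1))
          - gradient f (w (k+1)) := by
        rw [h1]; abel
      rw [h2, h3]
      have h4 : Q (k+1) (w (k+1) - x (k+1)) = - Q (k+1) (x (k+1) - w (k+1)) := by
        rw [← map_neg]; congr 1; abel
      rw [h4]
      module
  have hQnorm : ∀ k (v : EuclideanSpace ℝ (Fin n)), ‖Q k v‖ ≤ lam * ‖v‖ := by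
    intro k v
    calc ‖Q k v‖ ≤ ‖Q k‖ * ‖v‖ := (Q k).le_opNorm v
      _ ≤ lam * ‖v‖ := by have := norm_nonneg v; gcongr; exact hQ k
  have hu'bound : ∀ k, σ * ‖x (k+1) - w (k+1)‖ ≤ β * ‖w (k+1) - w k‖ + lam * ‖x k - w k‖ := by
    intro k
    have h0 : ‖x (k+1) - w (k+1)‖ = ‖w (k+1) - x (k+1)‖ := norm_sub_rev _ _
    rw [h0]
    calc σ * ‖w (k+1) - x (k+1)‖
        ≤ ‖σ • (w (k+1) - x (k+1)) + Q (k+1) (w (k+1) - x (k+1))‖ :=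
          shp_norm_lower σ (le_of_lt hσpos) (Q (k+1)) (hQpsd (k+1)) _
      _ = ‖(gradient f (w (k+1)) - gradient f (w k)) + (- Q k (x k - w k))‖ := by
          rw [hxStep k, hI1 k]; congr 1; abel
      _ ≤ ‖gradient f (w (k+1)) - gradient f (w k)‖ + ‖- Q k (x k - w k)‖ := norm_add_le _ _
      _ ≤ β * ‖w (k+1) - w k‖ + lam * ‖x k - w k‖ := by
          gcongr
          · exact hLip _ (hBN (hwB (k+1))) _ (hBN (hwB k))
          · rw [norm_neg]; exact hQnorm k _
  have hΔw : ∀ k, ‖w (k+1) - w k‖ ≤ Real.sqrt n := by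
    intro k
    apply shp_norm_le_sqrt
    intro i
    have h1 : (w (k+1)) i ∈ Icc (0:ℝ) 1 := by have := hwB (k+1); rw [hB] at this; exact this i
    have h2 : (w k) i ∈ Icc (0:ℝ) 1 := by have := hwB k; rw [hB] at this; exact this i
    have : (w (k+1) - w k) i = (w (k+1)) i - (w k) i := rfl
    rw [this, abs_le]
    constructor <;> [linarith [h1.1, h2.2]; linarith [h1.2, h2.1]]
  -- Lyapunov function
  obtain ⟨E, hE⟩ : ∃ E : ℕ → ℝ, ∀ k,
      E k = f (x k) + μ k * φ (w k) + ⟪y k, x k - w k⟫ + σ * ‖x k - w k‖^2 :=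
    ⟨_, fun k => rfl⟩
  have hE0 : E 0 = f (w 0) := by
    rw [hE]
    simp only [hx0, hφw0, sub_self, inner_zero_right, norm_zero]
    ring
  have hE_lb : ∀ k, x k ∈ Nset → fB + 3*σ/4 * ‖x k - w k‖^2 ≤ E k := by
    intro k hxk
    rw [hE]
    have hwN : w k ∈ Nset := hBN (hwB k)
    -- Taylor lower bound on f (x k)
    have ht := htaylor (w k) hwN (x k) hxk
    have ht1 : f (w k) + ⟪gradient f (w k), x k - w k⟫ - β * ‖x k - w k‖^2 ≤ f (x k) := by
      have := abs_le.mp ht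
      linarith [this.1]
    -- inner product with y k
    have hy : ⟪y k, x k - w k⟫ = -⟪gradient f (w k), x k - w k⟫ - ⟪Q k (x k - w k), x k - w k⟫ := by
      rw [hI1 k, inner_sub_left, inner_neg_left]
    have hq : ⟪Q k (x k - w k), x k - w k⟫ ≤ lam * ‖x k - w k‖^2 :=
      shp_inner_Q_le lam (Q k) (hQ k) _
    have hμφ : 0 ≤ μ k * φ (w k) :=
      mul_nonneg (le_of_lt (hμpos k)) (hφnn _ (hwB k))
    have hfb : fB ≤ f (w k) := hfBle _ (hwB k)
    have hβ' : β * ‖x k - w k‖^2 ≤ σ/8 * ‖x k - w k‖^2 := by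
      apply mul_le_mul_of_nonneg_right _ (sq_nonneg _)
      linarith
    have hlam' : lam * ‖x k - w k‖^2 ≤ σ/8 * ‖x k - w k‖^2 := by
      apply mul_le_mul_of_nonneg_right _ (sq_nonneg _)
      linarith
    rw [hy]
    linarith
  have hstep : ∀ k, x k ∈ Nset → x (k+1) ∈ Nset →
      E (k+1) + σ/8 * ‖x k - w k‖^2 + σ/28 * ‖x k - x (k+1)‖^2 ≤ E k := by
    intro k hxkN hxk1N
    have hw'B := hwB (k+1)
    have hw'N : w (k+1) ∈ Nset := hBN hw'B
    have h1 := (hwStep k).2 (w k) (hwB k)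
    have ht1 := htaylor (w (k+1)) hw'N (x (k+1)) hxk1N
    have h3 : f (x (k+1)) ≤ f (w (k+1)) + ⟪gradient f (w (k+1)), x (k+1) - w (k+1)⟫
        + σ/8 * ‖x (k+1) - w (k+1)‖^2 := by
      have ha := (abs_le.mp ht1).2
      have hb : β * ‖x (k+1) - w (k+1)‖^2 ≤ σ/8 * ‖x (k+1) - w (k+1)‖^2 :=
        mul_le_mul_of_nonneg_right (by linarith) (sq_nonneg _)
      linarith
    have ht2 := htaylor (w (k+1)) hw'N (x k) hxkN
    have h4 : f (w (k+1)) + ⟪gradient f (w (k+1)), x k - w (k+1)⟫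
        ≤ f (x k) + σ/8 * ‖x k - w (k+1)‖^2 := by
      have ha := (abs_le.mp ht2).1
      have hb : β * ‖x k - w (k+1)‖^2 ≤ σ/8 * ‖x k - w (k+1)‖^2 :=
        mul_le_mul_of_nonneg_right (by linarith) (sq_nonneg _)
      linarith
    have h5 : ⟪y (k+1), x (k+1) - w (k+1)⟫
        = ⟪y k, x (k+1) - w (k+1)⟫ + σ * ‖x (k+1) - w (k+1)‖^2 := by
      rw [hyStep k, inner_add_left, real_inner_smul_left, real_inner_self_eq_norm_sq]
    have hpq : gradient f (w (k+1)) + y k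
        = -(σ • (x (k+1) - w (k+1))) - Q (k+1) (x (k+1) - w (k+1)) := by
      rw [← hxStep k]
      have hqq : Q (k+1) (w (k+1) - x (k+1)) = - Q (k+1) (x (k+1) - w (k+1)) := by
        rw [← map_neg]; congr 1; abel
      rw [hqq]; module
    have hquad := shp_quad σ (Q (k+1)) (hQsa (k+1)) (x (k+1) - w (k+1)) (x k - x (k+1))
    rw [show (x (k+1) - w (k+1)) + (x k - x (k+1)) = x k - w (k+1) by abel, ← hpq] at hquad
    simp only [inner_add_left] at hquad
    have hq1 : (0:ℝ) ≤ ⟪Q (k+1) (x (k+1) - w (k+1)), x (k+1) - w (k+1)⟫ := hQpsd _ _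
    have hq3 : (0:ℝ) ≤ ⟪Q (k+1) (x k - x (k+1)), x k - x (k+1)⟫ := hQpsd _ _
    have hq2 : ⟪Q (k+1) (x k - w (k+1)), x k - w (k+1)⟫ ≤ σ/8 * ‖x k - w (k+1)‖^2 := by
      have := shp_inner_Q_le lam (Q (k+1)) (hQ (k+1)) (x k - w (k+1))
      have hb : lam * ‖x k - w (k+1)‖^2 ≤ σ/8 * ‖x k - w (k+1)‖^2 :=
        mul_le_mul_of_nonneg_right (by linarith) (sq_nonneg _)
      linarith
    have h6 : ‖x k - w (k+1)‖^2 ≤ 2*‖x k - x (k+1)‖^2 + 2*‖x (k+1) - w (k+1)‖^2 := by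
      have htri := norm_add_le (x k - x (k+1)) (x (k+1) - w (k+1))
      rw [show x k - x (k+1) + (x (k+1) - w (k+1)) = x k - w (k+1) by abel] at htri
      exact shp_sq2 htri (norm_nonneg _) (norm_nonneg _) (norm_nonneg _)
    have h6σ : σ * ‖x k - w (k+1)‖^2 ≤ σ * (2*‖x k - x (k+1)‖^2 + 2*‖x (k+1) - w (k+1)‖^2) :=
      (mul_le_mul_iff_right₀ hσpos).mpr h6
    have h7 : μ (k+1) * φ (w (k+1)) ≤ μ k * φ (w (k+1)) + σ/6 * ‖x (k+1) - w (k+1)‖^2 := by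
      have hφ' : 0 ≤ φ (w (k+1)) := hφnn _ hw'B
      have hP' : 0 ≤ σ * ‖x (k+1) - w (k+1)‖^2 := by positivity
      rw [hμStep k]
      split
      · have hm1 : min ((η - 1) * μ k) (ρ * σ * ‖x (k+1) - w (k+1)‖^2 / (φ (w (k+1)) + ε))
            ≤ ρ * σ * ‖x (k+1) - w (k+1)‖^2 / (φ (w (k+1)) + ε) := min_le_right _ _
        have hm2 : min ((η - 1) * μ k) (ρ * σ * ‖x (k+1) - w (k+1)‖^2 / (φ (w (k+1)) + ε))
            * φ (w (k+1))
            ≤ (ρ * σ * ‖x (k+1) - w (k+1)‖^2 / (φ (w (k+1)) + ε)) * φ (w (k+1)) :=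
          mul_le_mul_of_nonneg_right hm1 hφ'
        have hρ1 : (0:ℝ) < ρ := hρ.1
        have hρ2 : ρ ≤ 1/6 := hρ.2
        have hm3 : (ρ * σ * ‖x (k+1) - w (k+1)‖^2 / (φ (w (k+1)) + ε)) * φ (w (k+1))
            ≤ ρ * σ * ‖x (k+1) - w (k+1)‖^2 := by
          rw [div_mul_eq_mul_div, div_le_iff₀ (hφε (k+1))]
          have hnum : 0 ≤ ρ * σ * ‖x (k+1) - w (k+1)‖^2 := by positivity
          nlinarith [mul_le_mul_of_nonneg_left (le_of_lt hε) hnum]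
        have hm4 : ρ * σ * ‖x (k+1) - w (k+1)‖^2 ≤ σ/6 * ‖x (k+1) - w (k+1)‖^2 := by
          have ha : ρ * σ ≤ 1/6 * σ := mul_le_mul_of_nonneg_right hρ2 (le_of_lt hσpos)
          have hb := mul_le_mul_of_nonneg_right ha (sq_nonneg ‖x (k+1) - w (k+1)‖)
          linarith
        rw [add_mul]
        linarith [hm2, hm3, hm4]
      · have : 0 ≤ σ/6 * ‖x (k+1) - w (k+1)‖^2 := by positivity
        linarith
    have h8 : 7 * ‖x (k+1) - w (k+1)‖ ≤ ‖x k - x (k+1)‖ + 2 * ‖x k - w k‖ := by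
      have hb := hu'bound k
      have htri : ‖w (k+1) - w k‖ ≤ ‖x (k+1) - w (k+1)‖ + ‖x k - x (k+1)‖ + ‖x k - w k‖ := by
        have h0 := norm_add₃_le (a := -(x (k+1) - w (k+1))) (b := -(x k - x (k+1)))
          (c := x k - w k)
        rw [show -(x (k+1) - w (k+1)) + -(x k - x (k+1)) + (x k - w k) = w (k+1) - w k by abel,
          norm_neg, norm_neg] at h0
        exact h0
      have hb1 : β * ‖w (k+1) - w k‖
          ≤ σ/8 * (‖x (k+1) - w (k+1)‖ + ‖x k - x (k+1)‖ + ‖x k - w k‖) :=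
        mul_le_mul (by linarith) htri (norm_nonneg _) (by positivity)
      have hb2 : lam * ‖x k - w k‖ ≤ σ/8 * ‖x k - w k‖ :=
        mul_le_mul_of_nonneg_right (by linarith) (norm_nonneg _)
      have hσ7 : σ * (7 * ‖x (k+1) - w (k+1)‖) ≤ σ * (‖x k - x (k+1)‖ + 2 * ‖x k - w k‖) := by
        linarith [hb, hb1, hb2]
      exact (mul_le_mul_iff_right₀ hσpos).mp hσ7
    have h8sq : 49 * ‖x (k+1) - w (k+1)‖^2 ≤ 2*‖x k - x (k+1)‖^2 + 8*‖x k - w k‖^2 := by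
      exact shp_sq3 h8 (norm_nonneg _) (norm_nonneg _) (norm_nonneg _)
    have h8σ : σ * (49 * ‖x (k+1) - w (k+1)‖^2)
        ≤ σ * (2*‖x k - x (k+1)‖^2 + 8*‖x k - w k‖^2) := (mul_le_mul_iff_right₀ hσpos).mpr h8sq
    have hnn1 : 0 ≤ σ * ‖x k - w k‖^2 := by positivity
    have hnn2 : 0 ≤ σ * ‖x k - x (k+1)‖^2 := by positivity
    rw [hE (k+1), hE k]
    linarith only [h1, h3, h4, h5, hquad, hq1, hq3, hq2, h6σ, h7, h8σ, hnn1, hnn2]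
  have hα2 : f (w 0) - fB = σ * α / 2 := by
    rw [hα]; field_simp
  have hGood : ∀ k, ‖x k - w k‖ ≤ (Real.sqrt n + Real.sqrt α) / 8 ∧ E k ≤ f (w 0) := by
    intro k
    induction k with
    | zero =>
      constructor
      · rw [hx0, sub_self, norm_zero]; exact hrnn
      · rw [hE0]
    | succ k ih =>
      obtain ⟨ihr, ihE⟩ := ih
      have hxkN : x k ∈ Nset := hxN k ihr
      have hub : ‖x k - w k‖ ≤ Real.sqrt α := by
        have hlb := hE_lb k hxkN
        have h1 : σ * (3/4 * ‖x k - w k‖^2) ≤ σ * (α/2) := by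
          have : 3*σ/4 * ‖x k - w k‖^2 ≤ σ * α / 2 := by rw [← hα2]; linarith
          linarith [this]
        have h2 : 3/4 * ‖x k - w k‖^2 ≤ α/2 := (mul_le_mul_iff_right₀ hσpos).mp h1
        have h3 : ‖x k - w k‖^2 ≤ α := by linarith
        have h4 := Real.sqrt_le_sqrt h3
        rwa [Real.sqrt_sq (norm_nonneg _)] at h4
      have hr' : ‖x (k+1) - w (k+1)‖ ≤ (Real.sqrt n + Real.sqrt α) / 8 := by
        have h1 := hu'bound k
        have h2 := hΔw k
        have hb1 : β * ‖w (k+1) - w k‖ ≤ σ/8 * Real.sqrt n :=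
          mul_le_mul (by linarith) h2 (norm_nonneg _) (by positivity)
        have hb2 : lam * ‖x k - w k‖ ≤ σ/8 * Real.sqrt α :=
          mul_le_mul (by linarith) hub (norm_nonneg _) (by positivity)
        have h3 : σ * ‖x (k+1) - w (k+1)‖ ≤ σ * ((Real.sqrt n + Real.sqrt α) / 8) := by
          linarith
        exact (mul_le_mul_iff_right₀ hσpos).mp h3
      refine ⟨hr', ?_⟩
      have hs := hstep k hxkN (hxN (k+1) hr')
      have hp1 : 0 ≤ σ/8 * ‖x k - w k‖^2 := by positivity
      have hp2 : 0 ≤ σ/28 * ‖x k - x (k+1)‖^2 := by positivity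
      linarith
  have hdesc : ∀ k, E (k+1) + σ/8 * ‖x k - w k‖^2 + σ/28 * ‖x k - x (k+1)‖^2 ≤ E k :=
    fun k => hstep k (hxN k (hGood k).1) (hxN (k+1) (hGood (k+1)).1)
  have hElb' : ∀ k, fB ≤ E k := by
    intro k
    have := hE_lb k (hxN k (hGood k).1)
    have h2 : 0 ≤ 3*σ/4 * ‖x k - w k‖^2 := by positivity
    linarith
  -- summability
  have hpartial : ∀ K : ℕ, ∑ k ∈ Finset.range K,
      (σ/8 * ‖x k - w k‖^2 + σ/28 * ‖x k - x (k+1)‖^2) ≤ E 0 - E K := by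
    intro K
    induction K with
    | zero => simp
    | succ K ih =>
      rw [Finset.sum_range_succ]
      have := hdesc K
      linarith
  have hpartial' : ∀ K : ℕ, ∑ k ∈ Finset.range K,
      (σ/8 * ‖x k - w k‖^2 + σ/28 * ‖x k - x (k+1)‖^2) ≤ f (w 0) - fB := by
    intro K
    have h1 := hpartial K
    have h2 := hElb' K
    rw [hE0] at h1
    linarith
  have hSsum : Summable (fun k => σ/8 * ‖x k - w k‖^2 + σ/28 * ‖x k - x (k+1)‖^2) := by
    apply summable_of_sum_range_le (c := f (w 0) - fB)
    · intro k; positivity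
    · exact hpartial'
  have hPsum : Summable (fun k => ‖x k - w k‖^2) := by
    have h8 : (8:ℝ)/σ ≠ 0 := by positivity
    have h1 : Summable (fun k => σ/8 * ‖x k - w k‖^2) := by
      apply Summable.of_nonneg_of_le (fun k => by positivity) _ hSsum
      intro k
      have : 0 ≤ σ/28 * ‖x k - x (k+1)‖^2 := by positivity
      linarith
    have h2 := h1.mul_left ((8:ℝ)/σ)
    convert h2 using 2 with k
    have hσ' : σ ≠ 0 := ne_of_gt hσpos
    rfl
    rw [← mul_assoc, div_mul_div_comm, mul_comm (8:ℝ) σ, div_self (mul_ne_zero (ne_of_gt hσpos) (by norm_num)), one_mul]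
  have hDsum : Summable (fun k => ‖x k - x (k+1)‖^2) := by
    have h1 : Summable (fun k => σ/28 * ‖x k - x (k+1)‖^2) := by
      apply Summable.of_nonneg_of_le (fun k => by positivity) _ hSsum
      intro k
      have : 0 ≤ σ/8 * ‖x k - w k‖^2 := by positivity
      linarith
    have h2 := h1.mul_left ((28:ℝ)/σ)
    convert h2 using 2 with k
    have hσ' : σ ≠ 0 := ne_of_gt hσpos
    rfl
    rw [← mul_assoc, div_mul_div_comm, mul_comm (28:ℝ) σ, div_self (mul_ne_zero (ne_of_gt hσpos) (by norm_num)), one_mul]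
  have norm_tendsto : ∀ u : ℕ → EuclideanSpace ℝ (Fin n),
      Summable (fun k => ‖u k‖^2) → Tendsto u atTop (nhds 0) := by
    intro u hu
    have h1 : Tendsto (fun k => ‖u k‖^2) atTop (nhds 0) := hu.tendsto_atTop_zero
    have h2 : Tendsto (fun k => Real.sqrt (‖u k‖^2)) atTop (nhds 0) := by
      have := (Real.continuous_sqrt.tendsto' 0 0 (by simp)).comp h1
      exact this
    have h3 : (fun k => Real.sqrt (‖u k‖^2)) = fun k => ‖u k‖ := by
      funext k; exact Real.sqrt_sq (norm_nonneg _)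
    rw [h3] at h2
    exact tendsto_zero_iff_norm_tendsto_zero.mpr h2
  have hu0 : Tendsto (fun k => x k - w k) atTop (nhds 0) := norm_tendsto _ hPsum
  have hd0 : Tendsto (fun k => x k - x (k+1)) atTop (nhds 0) := norm_tendsto _ hDsum
  -- μ convergence
  have hincr : ∀ k, μ (k+1) - μ k ≤ (ρ * σ / ε) * ‖x (k+1) - w (k+1)‖^2 := by
    intro k
    rw [hμStep k]
    split
    · have h1 : min ((η - 1) * μ k) (ρ * σ * ‖x (k+1) - w (k+1)‖^2 / (φ (w (k+1)) + ε))
          ≤ ρ * σ * ‖x (k+1) - w (k+1)‖^2 / (φ (w (k+1)) + ε) := min_le_right _ _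
      have h2 : ρ * σ * ‖x (k+1) - w (k+1)‖^2 / (φ (w (k+1)) + ε)
          ≤ ρ * σ * ‖x (k+1) - w (k+1)‖^2 / ε := by
        apply div_le_div_of_nonneg_left _ hε
        · have := hφnn (w (k+1)) (hwB (k+1)); linarith
        · have h3 : (0:ℝ) < ρ := hρ.1
          positivity
      have h4 : ρ * σ * ‖x (k+1) - w (k+1)‖^2 / ε = (ρ * σ / ε) * ‖x (k+1) - w (k+1)‖^2 := by
        ring
      linarith
    · have h3 : (0:ℝ) < ρ := hρ.1
      have : 0 ≤ (ρ * σ / ε) * ‖x (k+1) - w (k+1)‖^2 := by positivity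
      linarith
  have hdsum : Summable (fun k => μ (k+1) - μ k) := by
    apply Summable.of_nonneg_of_le (fun k => by linarith [(hμmono k).2]) hincr
    exact ((summable_nat_add_iff 1).2 hPsum).mul_left _
  set μinf : ℝ := μ 0 + ∑' k, (μ (k+1) - μ k) with hμinf
  have hμtend : Tendsto μ atTop (nhds μinf) := by
    have h1 : ∀ K : ℕ, μ K = μ 0 + ∑ k ∈ Finset.range K, (μ (k+1) - μ k) := by
      intro K
      rw [Finset.sum_range_sub (f := μ)]
      ring
    have h2 : Tendsto (fun K => ∑ k ∈ Finset.range K, (μ (k+1) - μ k)) atTop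
        (nhds (∑' k, (μ (k+1) - μ k))) := hdsum.hasSum.tendsto_sum_nat
    have h3 := h2.const_add (μ 0)
    rw [hμinf]
    convert h3 using 2 with K
    exact h1 K
  have hμinfpos : 0 < μinf := by
    rw [hμinf, hμinit]
    have : 0 ≤ ∑' k, (μ (k+1) - μ k) := tsum_nonneg (fun k => by linarith [(hμmono k).2])
    linarith
  refine ⟨μinf, hμtend, hμinfpos, ?_⟩
  intro xinf hcl
  -- extract a subsequence converging to xinf
  have hfreq : ∀ m : ℕ, ∃ᶠ k in atTop, dist (x k) xinf < 1/(m+1) := by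
    intro m
    have hb : Metric.ball xinf (1/(m+1)) ∈ nhds xinf := Metric.ball_mem_nhds _ (by positivity)
    have := mapClusterPt_iff_frequently.mp hcl _ hb
    simpa [Metric.mem_ball] using this
  obtain ⟨ψ, hψmono, hψ⟩ := extraction_forall_of_frequently hfreq
  have hψtend : Tendsto (fun j => x (ψ j)) atTop (nhds xinf) := by
    apply tendsto_iff_dist_tendsto_zero.mpr
    apply squeeze_zero (fun j => dist_nonneg) (fun j => le_of_lt (hψ j))
    exact tendsto_one_div_add_atTop_nhds_zero_nat
  have hψge : ∀ j, 1 ≤ ψ (j+1) := fun j => le_trans (Nat.succ_le_succ (Nat.zero_le j))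
    (hψmono.le_apply)
  obtain ⟨K, M, hKM, hKdef⟩ : ∃ K M : ℕ → ℕ, (∀ j, M j + 1 = K j) ∧ (∀ j, K j = ψ (j+1)) :=
    ⟨fun j => ψ (j+1), fun j => ψ (j+1) - 1, fun j => Nat.sub_add_cancel (hψge j),
      fun j => rfl⟩
  have hKtend : Tendsto K atTop atTop := by
    have h1 : Tendsto (fun j => ψ (j+1)) atTop atTop :=
      hψmono.tendsto_atTop.comp (tendsto_add_atTop_nat 1)
    convert h1 using 1
    funext j; exact hKdef j
  have hMtend : Tendsto M atTop atTop := by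
    apply tendsto_atTop_mono (f := fun j => j) _ tendsto_id
    intro j
    have h1 : j + 1 ≤ K j := by rw [hKdef j]; exact hψmono.le_apply
    have h2 := hKM j
    show j ≤ M j
    have h3 : j + 1 ≤ M j + 1 := by rw [h2]; exact h1
    exact Nat.succ_le_succ_iff.mp h3
  have hxK : Tendsto (fun j => x (K j)) atTop (nhds xinf) := by
    have h1 : Tendsto (fun j => x (ψ (j+1))) atTop (nhds xinf) :=
      hψtend.comp (tendsto_add_atTop_nat 1)
    convert h1 using 2 with j
    rw [hKdef j]
  have huK : Tendsto (fun j => x (K j) - w (K j)) atTop (nhds 0) := hu0.comp hKtend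
  have hwK : Tendsto (fun j => w (K j)) atTop (nhds xinf) := by
    have h1 := hxK.sub huK
    rw [sub_zero] at h1
    convert h1 using 2 with j
    abel
  have hxinfB : xinf ∈ B := by
    have hBc : IsClosed B := by rw [hB]; exact shp_closedB
    exact hBc.mem_of_tendsto hwK (Eventually.of_forall (fun j => hwB _))
  have hgradcont : Continuous (gradient f) := by
    have h1 : Continuous (fun v => fderiv ℝ f v) := hf.continuous_fderiv one_ne_zero
    exact ((InnerProductSpace.toDual ℝ _).symm.continuous).comp h1
  have hyK : Tendsto (fun j => y (K j)) atTop (nhds (-gradient f xinf)) := by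
    have h2 : Tendsto (fun j => -gradient f (w (K j))) atTop (nhds (-gradient f xinf)) :=
      ((hgradcont.tendsto xinf).comp hwK).neg
    have h3 : Tendsto (fun j => Q (K j) (x (K j) - w (K j))) atTop (nhds 0) := by
      apply tendsto_zero_iff_norm_tendsto_zero.mpr
      apply squeeze_zero (fun j => norm_nonneg _) (fun j => hQnorm _ _)
      have h4 : Tendsto (fun j => ‖x (K j) - w (K j)‖) atTop (nhds 0) := by
        have := huK.norm; simpa using this
      have h5 := h4.const_mul lam
      simpa using h5
    have h6 := h2.sub h3
    rw [sub_zero] at h6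
    convert h6 using 2 with j
    rw [hI1 (K j)]
  have hyM : Tendsto (fun j => y (M j)) atTop (nhds (-gradient f xinf)) := by
    have h1 : ∀ j, y (M j) = y (K j) - σ • (x (K j) - w (K j)) := by
      intro j
      have h2 := hyStep (M j)
      rw [hKM j] at h2
      rw [h2]; abel
    have h3 : Tendsto (fun j => σ • (x (K j) - w (K j))) atTop (nhds 0) := by
      have := huK.const_smul σ; simpa using this
    have h4 := hyK.sub h3
    rw [sub_zero] at h4
    convert h4 using 2 with j
    exact h1 j
  have hxM : Tendsto (fun j => x (M j)) atTop (nhds xinf) := by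
    have h1 : Tendsto (fun j => x (M j) - x (M j + 1)) atTop (nhds 0) := hd0.comp hMtend
    have h2 : Tendsto (fun j => x (M j + 1)) atTop (nhds xinf) := by
      convert hxK using 2 with j
      rw [hKM j]
    have h3 := h2.add h1
    rw [add_zero] at h3
    convert h3 using 2 with j
    abel
  have hμM : Tendsto (fun j => μ (M j)) atTop (nhds μinf) := hμtend.comp hMtend
  refine ⟨hxinfB, ?_⟩
  intro z hz
  -- the w-step inequality along the subsequence
  have hineq : ∀ j, μ (M j) * φ (w (K j)) + ⟪y (M j), x (M j) - w (K j)⟫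
      + σ/2 * ‖x (M j) - w (K j)‖^2
      ≤ μ (M j) * φ z + ⟪y (M j), x (M j) - z⟫ + σ/2 * ‖x (M j) - z‖^2 := by
    intro j
    have h1 := (hwStep (M j)).2 z hz
    rw [hKM j] at h1
    exact h1
  have hsubt : Tendsto (fun j => x (M j) - w (K j)) atTop (nhds 0) := by
    have h1 := hxM.sub hwK
    rw [sub_self] at h1
    exact h1
  have hRtend : Tendsto (fun j => μ (M j) * φ z + ⟪y (M j), x (M j) - z⟫
      + σ/2 * ‖x (M j) - z‖^2) atTop
      (nhds (μinf * φ z + ⟪-gradient f xinf, xinf - z⟫ + σ/2 * ‖xinf - z‖^2)) := by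
    refine Tendsto.add (Tendsto.add ?_ ?_) ?_
    · exact hμM.mul_const _
    · exact hyM.inner (hxM.sub tendsto_const_nhds)
    · have h1 : Tendsto (fun j => ‖x (M j) - z‖) atTop (nhds ‖xinf - z‖) :=
        (hxM.sub tendsto_const_nhds).norm
      have h2 := (h1.pow 2).const_mul (σ/2)
      exact h2
  have hctend : Tendsto (fun j => ⟪y (M j), x (M j) - w (K j)⟫
      + σ/2 * ‖x (M j) - w (K j)‖^2) atTop (nhds 0) := by
    have h1 : Tendsto (fun j => ⟪y (M j), x (M j) - w (K j)⟫) atTop (nhds ⟪-gradient f xinf, (0:EuclideanSpace ℝ (Fin n))⟫) := hyM.inner hsubt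
    have h2 : Tendsto (fun j => ‖x (M j) - w (K j)‖) atTop (nhds 0) := by
      have := hsubt.norm; simpa using this
    have h3 := (h2.pow 2).const_mul (σ/2)
    have h4 := h1.add h3
    simpa using h4
  -- lower semicontinuity argument
  have hnR : (0:ℝ) < (n:ℝ) := by
    have : (1:ℝ) ≤ (n:ℝ) := by exact_mod_cast hn
    linarith
  have hmain : ∀ δ : ℝ, 0 < δ → μinf * (φ xinf - δ)
      ≤ μinf * φ z + ⟪-gradient f xinf, xinf - z⟫ + σ/2 * ‖xinf - z‖^2 := by
    intro δ hδ
    have hcoord : ∀ i : Fin n, ∀ᶠ j in atTop, g (xinf i) - δ/n < g (w (K j) i) := by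
      intro i
      have hxi : xinf i ∈ Icc (0:ℝ) 1 := by rw [hB] at hxinfB; exact hxinfB i
      have hlsc := hg_lsc (xinf i) hxi
      have hlt : g (xinf i) - δ/n < g (xinf i) := by
        have : 0 < δ/n := by positivity
        linarith
      have hnb := hlsc _ hlt
      have hcoordtend : Tendsto (fun j => w (K j) i) atTop (nhds (xinf i)) := by
        have := ((EuclideanSpace.proj (𝕜 := ℝ) i).continuous.tendsto xinf).comp hwK
        exact this
      have hwithin : Tendsto (fun j => w (K j) i) atTop (nhdsWithin (xinf i) (Icc (0:ℝ) 1)) := by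
        refine tendsto_nhdsWithin_iff.mpr ⟨hcoordtend, Eventually.of_forall (fun j => ?_)⟩
        have := hwB (K j); rw [hB] at this; exact this i
      exact hwithin.eventually hnb
    have hev : ∀ᶠ j in atTop, φ xinf - δ < φ (w (K j)) := by
      filter_upwards [eventually_all.mpr hcoord] with j hj
      rw [hφ]
      have hsum : ∑ i, (g (xinf i) - δ/n) < ∑ i, g ((w (K j)) i) := by
        apply Finset.sum_lt_sum_of_nonempty
        · exact Finset.univ_nonempty_iff.mpr (Fin.pos_iff_nonempty.mp (by omega))
        · intro i _
          exact hj i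
      have heq : ∑ i, (g (xinf i) - δ/n) = (∑ i, g (xinf i)) - δ := by
        rw [Finset.sum_sub_distrib, Finset.sum_const, Finset.card_univ, Fintype.card_fin]
        congr 1
        rw [nsmul_eq_mul]; exact mul_div_cancel₀ δ hnR.ne'
      rw [heq] at hsum
      simpa [hφ] using hsum
    have hev2 : ∀ᶠ j in atTop, μ (M j) * (φ xinf - δ)
        + (⟪y (M j), x (M j) - w (K j)⟫ + σ/2 * ‖x (M j) - w (K j)‖^2)
        ≤ μ (M j) * φ z + ⟪y (M j), x (M j) - z⟫ + σ/2 * ‖x (M j) - z‖^2 := by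
      filter_upwards [hev] with j hj
      have h1 := hineq j
      have hmul : μ (M j) * (φ xinf - δ) ≤ μ (M j) * φ (w (K j)) :=
        mul_le_mul_of_nonneg_left (le_of_lt hj) (le_of_lt (hμpos _))
      linarith
    have hLtend : Tendsto (fun j => μ (M j) * (φ xinf - δ)
        + (⟪y (M j), x (M j) - w (K j)⟫ + σ/2 * ‖x (M j) - w (K j)‖^2)) atTop
        (nhds (μinf * (φ xinf - δ))) := by
      have h1 := (hμM.mul_const (φ xinf - δ)).add hctend
      simpa using h1
    exact le_of_tendsto_of_tendsto hLtend hRtend hev2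
  have hkey : μinf * φ xinf
      ≤ μinf * φ z + ⟪-gradient f xinf, xinf - z⟫ + σ/2 * ‖xinf - z‖^2 := by
    apply le_of_forall_pos_le_add
    intro ε' hε'
    have h1 := hmain (ε'/μinf) (by positivity)
    have h2 : μinf * (φ xinf - ε'/μinf) = μinf * φ xinf - ε' := by
      field_simp
    linarith [h1, h2.symm.le, h2.le]
  -- final algebra
  have hgoal1 : xinf - (xinf - (1/σ) • gradient f xinf) = (1/σ) • gradient f xinf := by
    abel
  have hgoal2 : z - (xinf - (1/σ) • gradient f xinf) = (z - xinf) + (1/σ) • gradient f xinf := by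
    abel
  have hσ' : σ ≠ 0 := ne_of_gt hσpos
  have hexp : ‖(1:ℝ)/σ‖ = 1/σ := by
    rw [Real.norm_eq_abs, abs_of_pos (by positivity)]
  rw [hgoal1, hgoal2, norm_add_sq_real, norm_smul, real_inner_smul_right, hexp]
  have hinner1 : ⟪-gradient f xinf, xinf - z⟫ = ⟪z - xinf, gradient f xinf⟫ := by
    rw [show xinf - z = -(z - xinf) by abel, inner_neg_neg]
    exact real_inner_comm _ _
  rw [hinner1] at hkey
  have hnorm1 : ‖xinf - z‖ = ‖z - xinf‖ := norm_sub_rev _ _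
  rw [hnorm1] at hkey
  have h := (div_le_div_iff_of_pos_right hσpos).mpr hkey
  have e1 : (μinf * φ xinf)/σ = μinf/σ * φ xinf := by ring
  have e2 : (μinf * φ z + ⟪z - xinf, gradient f xinf⟫ + σ/2 * ‖z - xinf‖^2)/σ
      = μinf/σ * φ z + 1/σ * ⟪z - xinf, gradient f xinf⟫ + 1/2 * ‖z - xinf‖^2 := by
    field_simp
  rw [e1, e2] at h
  linarith [h]
end

section
/- For every s ∈ (1,2) and every μ > 0, the point x = 1/2 is a local minimizer of the function F(x) = (1/s)|x − 1/2|^s + μ·x·(1 − x) on the interval [0,1]. -/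
open Set

theorem stmt15 (s μ : ℝ) (hs : s ∈ Ioo (1:ℝ) 2) (hμ : 0 < μ) :
    IsLocalMinOn (fun x : ℝ => (1/s) * |x - 1/2| ^ s + μ * x * (1 - x))
      (Icc (0:ℝ) 1) (1/2) := by
  obtain ⟨hs1, hs2⟩ := hs
  have hs0 : 0 < s := by linarith
  have h2s : 0 < 2 - s := by linarith
  have hsμ : 0 < s * μ := by positivity
  set δ : ℝ := (1 / (s * μ)) ^ (1 / (2 - s)) with hδdef
  have hδpos : 0 < δ := Real.rpow_pos_of_pos (by positivity) _
  have hδpow : δ ^ (2 - s) = 1 / (s * μ) := by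
    rw [hδdef, ← Real.rpow_mul (by positivity)]
    rw [one_div_mul_cancel (ne_of_gt h2s), Real.rpow_one]
  have key : ∀ x : ℝ, |x - 1/2| < δ →
      (1/s) * |(1:ℝ)/2 - 1/2| ^ s + μ * (1/2) * (1 - 1/2)
        ≤ (1/s) * |x - 1/2| ^ s + μ * x * (1 - x) := by
    intro x hx
    set t := |x - 1/2| with ht
    have ht0 : 0 ≤ t := abs_nonneg _
    have h1 : μ * x * (1 - x) = μ / 4 - μ * (x - 1/2) ^ 2 := by ring
    have h2 : (x - 1/2) ^ 2 = t ^ 2 := by rw [ht, sq_abs]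
    have h3 : |(1:ℝ)/2 - 1/2| = 0 := by norm_num
    rw [h3, Real.zero_rpow (ne_of_gt hs0), h1, h2]
    have hmain : μ * t ^ 2 ≤ (1/s) * t ^ s := by
      rcases eq_or_lt_of_le ht0 with h0 | htpos
      · rw [← h0, Real.zero_rpow (ne_of_gt hs0)]
        norm_num
      · have hts : t ^ s = t ^ 2 * t ^ (s - 2) := by
          rw [← Real.rpow_natCast t 2, ← Real.rpow_add htpos]
          norm_num
        rw [hts]
        have h4 : t ^ (2 - s) ≤ 1 / (s * μ) := by
          rw [← hδpow]
          exact Real.rpow_le_rpow ht0 hx.le h2s.le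
        have h5 : s * μ ≤ t ^ (s - 2) := by
          have h6 : t ^ (s - 2) = (t ^ (2 - s))⁻¹ := by
            rw [← Real.rpow_neg ht0]; ring_nf
          rw [h6]
          rw [one_div] at h4
          have := (inv_le_inv₀ (by positivity) (Real.rpow_pos_of_pos htpos _)).mpr h4
          simpa using this
        have ht2 : (0:ℝ) < t ^ 2 := by positivity
        calc μ * t ^ 2 = (1/s) * (t ^ 2 * (s * μ)) := by field_simp
          _ ≤ (1/s) * (t ^ 2 * t ^ (s - 2)) := by
              apply mul_le_mul_of_nonneg_left _ (by positivity)
              exact mul_le_mul_of_nonneg_left h5 ht2.le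
    linarith
  have hball : Metric.ball ((1:ℝ)/2) δ ∈ nhds ((1:ℝ)/2) :=
    Metric.ball_mem_nhds _ hδpos
  refine Filter.eventually_of_mem (mem_nhdsWithin_of_mem_nhds hball) ?_
  intro x hx
  simp only []
  have hx' : |x - 1/2| < δ := by
    have := Metric.mem_ball.mp hx
    rwa [Real.dist_eq] at this
  have := key x hx'
  linarith
end

section
/- Define g: ℝ → ℝ by g(0) = 0 and g(x) = 1 − x for x ∈ (0,1] (this is the sharp-peak function g(·; 0,1,1,1,1) restricted to [0,1]). Then for every τ ≥ 1/2 and every z ∈ ℝ, the set of minimizers over [0,1] of ψ(x) := (x − z)²/(2τ) + g(x) equals {0} if z < 1/2, equals {0, 1} if z = 1/2, and equals {1} if z > 1/2. -/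
open Set

/-- The sharp-peak function `g(·; 0, 1, 1, 1, 1)` on `[0,1]`: `g 0 = 0` and
`g x = 1 - x` for `x ∈ (0, 1]`. -/
noncomputable def g17 : ℝ → ℝ := fun x => if x = 0 then 0 else 1 - x

theorem stmt17 (τ : ℝ) (hτ : 1/2 ≤ τ) (z : ℝ)
    (ψ : ℝ → ℝ) (hψ : ψ = fun x => (x - z) ^ 2 / (2 * τ) + g17 x) :
    (z < 1/2 → {x | x ∈ Icc (0:ℝ) 1 ∧ ∀ y ∈ Icc (0:ℝ) 1, ψ x ≤ ψ y} = {0}) ∧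
    (z = 1/2 → {x | x ∈ Icc (0:ℝ) 1 ∧ ∀ y ∈ Icc (0:ℝ) 1, ψ x ≤ ψ y} = {0, 1}) ∧
    (1/2 < z → {x | x ∈ Icc (0:ℝ) 1 ∧ ∀ y ∈ Icc (0:ℝ) 1, ψ x ≤ ψ y} = {1}) := by
  have h2τ : (0:ℝ) < 2 * τ := by linarith
  set Φ : ℝ → ℝ := fun x => (x - z)^2 + 2*τ * g17 x with hΦdef
  have hψeq : ∀ x, ψ x = Φ x / (2*τ) := by
    intro x; rw [hψ]; simp only [Φ]; field_simp
  have hiff : ∀ a b, ψ a ≤ ψ b ↔ Φ a ≤ Φ b := by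
    intro a b; rw [hψeq, hψeq, div_le_div_iff_of_pos_right h2τ]
  have hΦ0 : Φ 0 = z^2 := by simp [Φ, g17]
  have hΦ1 : Φ 1 = (1 - z)^2 := by norm_num [Φ, g17]
  have hΦx : ∀ x : ℝ, x ≠ 0 → Φ x = (x - z)^2 + 2*τ*(1 - x) := by
    intro x hx; simp [Φ, g17, hx]
  have F1 : z ≤ 1/2 → ∀ x : ℝ, 0 < x → x < 1 → Φ 0 < Φ x := by
    intro hz x hx0 hx1
    rw [hΦ0, hΦx x (ne_of_gt hx0)]
    nlinarith [mul_pos (by linarith : (0:ℝ) < 1 - x) (by linarith : (0:ℝ) < 2*τ - x),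
      mul_nonneg hx0.le (by linarith : (0:ℝ) ≤ 1 - 2*z)]
  have F2 : 1/2 ≤ z → ∀ x : ℝ, 0 < x → x < 1 → Φ 1 < Φ x := by
    intro hz x hx0 hx1
    rw [hΦ1, hΦx x (ne_of_gt hx0)]
    nlinarith [mul_pos (by linarith : (0:ℝ) < 1 - x)
      (by linarith : (0:ℝ) < 2*z - x - 1 + 2*τ)]
  refine ⟨?_, ?_, ?_⟩
  · intro hz
    ext x
    simp only [mem_setOf_eq, mem_singleton_iff, mem_Icc]
    constructor
    · rintro ⟨⟨hx0, hx1⟩, hmin⟩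
      by_contra hxne
      have hx0' : 0 < x := lt_of_le_of_ne hx0 (Ne.symm hxne)
      have h01 := (hiff x 0).mp (hmin 0 (by norm_num))
      rcases lt_or_eq_of_le hx1 with h | h
      · exact absurd h01 (not_le.mpr (F1 hz.le x hx0' h))
      · rw [h, hΦ1, hΦ0] at h01; nlinarith
    · rintro rfl
      refine ⟨by norm_num, ?_⟩
      intro y hy
      rw [hiff]
      rcases eq_or_lt_of_le hy.1 with h | h
      · rw [← h]
      · rcases eq_or_lt_of_le hy.2 with h' | h'
        · rw [h', hΦ0, hΦ1]; nlinarith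
        · exact (F1 hz.le y h h').le
  · intro hz
    have heq01 : Φ 0 = Φ 1 := by rw [hΦ0, hΦ1, hz]; ring
    have hmin0 : ∀ y ∈ Icc (0:ℝ) 1, ψ 0 ≤ ψ y := by
      intro y hy
      rw [hiff]
      rcases eq_or_lt_of_le hy.1 with h | h
      · rw [← h]
      · rcases eq_or_lt_of_le hy.2 with h' | h'
        · rw [h']; exact heq01.le
        · exact (F1 hz.le y h h').le
    ext x
    simp only [mem_setOf_eq, mem_insert_iff, mem_singleton_iff, mem_Icc]
    constructor
    · rintro ⟨⟨hx0, hx1⟩, hmin⟩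
      by_contra hxne
      push_neg at hxne
      have hx0' : 0 < x := lt_of_le_of_ne hx0 (Ne.symm hxne.1)
      have hx1' : x < 1 := lt_of_le_of_ne hx1 hxne.2
      have h01 := (hiff x 0).mp (hmin 0 (by norm_num))
      exact absurd h01 (not_le.mpr (F1 hz.le x hx0' hx1'))
    · rintro (rfl | rfl)
      · exact ⟨by norm_num, hmin0⟩
      · refine ⟨by norm_num, ?_⟩
        intro y hy
        rw [hiff, ← heq01, ← hiff]
        exact hmin0 y hy
  · intro hz
    ext x
    simp only [mem_setOf_eq, mem_singleton_iff, mem_Icc]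
    constructor
    · rintro ⟨⟨hx0, hx1⟩, hmin⟩
      by_contra hxne
      have hx1' : x < 1 := lt_of_le_of_ne hx1 hxne
      have h10 := (hiff x 1).mp (hmin 1 (by norm_num))
      rcases eq_or_lt_of_le hx0 with h | h
      · rw [← h, hΦ0, hΦ1] at h10; nlinarith
      · exact absurd h10 (not_le.mpr (F2 hz.le x h hx1'))
    · rintro rfl
      refine ⟨by norm_num, ?_⟩
      intro y hy
      rw [hiff]
      rcases eq_or_lt_of_le hy.2 with h | h
      · rw [h]
      · rcases eq_or_lt_of_le hy.1 with h' | h'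
        · rw [← h', hΦ0, hΦ1]; nlinarith
        · exact (F2 hz.le y h' h).le
end
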